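/- arXiv:2106.14146 — 9 statements merged into one kernel-verified Lean document; each statement's English description precedes it below -/
import Mathlib

section
/- Let H be a real Hilbert space, 0 < ν ≤ 1 and t > 0. If χ : (0,t) → H is strongly measurable with ∫₀ᵗ ‖χ(s)‖² ds < ∞, then ∫₀ᵗ ‖(I^ν χ)(s)‖² ds ≤ 2 t^{2ν} ∫₀ᵗ ‖χ(s)‖² ds. -/
open MeasureTheory Set
open scoped ENNReal

lemma gamma_lb (x : ℝ) (h1 : 1 ≤ x) (h2 : x ≤ 2) : Real.sqrt Real.pi - 1 ≤ Real.Gamma x := by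
  have h32 : Real.Gamma (3/2) = Real.sqrt Real.pi / 2 := by
    have h := Real.Gamma_add_one (by norm_num : (1/2:ℝ) ≠ 0)
    rw [Real.Gamma_one_half_eq] at h
    norm_num at h ⊢
    linarith
  have hs2 : Real.sqrt Real.pi ≤ 2 := by
    nlinarith [Real.sq_sqrt Real.pi_pos.le, Real.sqrt_nonneg Real.pi, Real.pi_lt_d2]
  have hs0 : 0 ≤ Real.sqrt Real.pi := Real.sqrt_nonneg _
  rcases le_total x (3/2) with hx | hx
  · rcases eq_or_lt_of_le hx with rfl | hx'
    · rw [h32]; nlinarith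
    · have h2x : (0:ℝ) < 2 - x := by linarith
      have key := Real.convexOn_Gamma.2 (mem_Ioi.2 (by linarith : (0:ℝ) < x))
        (mem_Ioi.2 (by norm_num : (0:ℝ) < 2))
        (show (0:ℝ) ≤ 1/(2*(2-x)) by positivity)
        (show (0:ℝ) ≤ 1 - 1/(2*(2-x)) by
          rw [sub_nonneg, div_le_one (by positivity)]; linarith)
        (by ring)
      simp only [smul_eq_mul] at key
      have hcomb : (1/(2*(2-x))) * x + (1 - 1/(2*(2-x))) * (2:ℝ) = 3/2 := by
        field_simp; ring
      rw [hcomb, h32, Real.Gamma_two] at key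
      have hu : (1/(2*(2-x))) * (2*(2-x)) = 1 := by field_simp
      nlinarith [mul_le_mul_of_nonneg_right key (by positivity : (0:ℝ) ≤ 2*(2-x))]
  · rcases eq_or_lt_of_le hx with rfl | hx'
    · rw [h32]; nlinarith
    · have h2x : (0:ℝ) < x - 1 := by linarith
      have key := Real.convexOn_Gamma.2 (mem_Ioi.2 (by norm_num : (0:ℝ) < 1))
        (mem_Ioi.2 (by linarith : (0:ℝ) < x))
        (show (0:ℝ) ≤ 1 - 1/(2*(x-1)) by
          rw [sub_nonneg, div_le_one (by positivity)]; linarith)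
        (show (0:ℝ) ≤ 1/(2*(x-1)) by positivity)
        (by ring)
      simp only [smul_eq_mul] at key
      have hcomb : (1 - 1/(2*(x-1))) * 1 + (1/(2*(x-1))) * x = 3/2 := by
        field_simp; ring
      rw [hcomb, h32, Real.Gamma_one] at key
      have hu : (1/(2*(x-1))) * (2*(x-1)) = 1 := by field_simp
      nlinarith [mul_le_mul_of_nonneg_right key (by positivity : (0:ℝ) ≤ 2*(x-1))]

lemma gamma_sq (x : ℝ) (h1 : 1 ≤ x) (h2 : x ≤ 2) : (1:ℝ) ≤ 2 * (Real.Gamma x)^2 := by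
  have h := gamma_lb x h1 h2
  have hs : Real.sqrt Real.pi ^ 2 = Real.pi := Real.sq_sqrt Real.pi_pos.le
  have h3 : (3:ℝ) < Real.pi := Real.pi_gt_three
  have hs0 : 0 ≤ Real.sqrt Real.pi := Real.sqrt_nonneg _
  have hs1 : 1 ≤ Real.sqrt Real.pi := by nlinarith
  have hkey : (Real.sqrt Real.pi - 1)^2 ≤ (Real.Gamma x)^2 := by
    have h0 : 0 ≤ Real.sqrt Real.pi - 1 := by linarith
    nlinarith
  nlinarith [sq_nonneg (2*Real.pi + 1 - 4*Real.sqrt Real.pi)]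

lemma kernA (ν G s : ℝ) (hν : 0 < ν) (hG : 0 < G) (hs : 0 ≤ s) :
    ∫⁻ q in Ioc 0 s, ENNReal.ofReal ((s-q)^(ν-1)/G) = ENNReal.ofReal (s^ν/(ν*G)) := by
  have hii : IntervalIntegrable (fun x => (s - x)^(ν-1)) volume 0 s := by
    have := ((intervalIntegral.intervalIntegrable_rpow' (a := s - s) (b := s - 0) (r := ν-1)
      (by linarith)).comp_sub_left s).symm
    simpa using this
  rw [← ofReal_integral_eq_lintegral_ofReal ((hii.div_const G).1)
    ((ae_restrict_iff' measurableSet_Ioc).2 (Filter.Eventually.of_forall fun q hq =>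
      div_nonneg (Real.rpow_nonneg (by linarith [hq.2]) _) hG.le))]
  rw [← intervalIntegral.integral_of_le hs, intervalIntegral.integral_div]
  rw [intervalIntegral.integral_comp_sub_left (fun x => x ^ (ν-1)) s,
    integral_rpow (Or.inl (by linarith)), sub_self,
    Real.zero_rpow (by linarith : ν - 1 + 1 ≠ 0)]
  norm_num
  rw [div_div]

lemma kernB (ν G q t : ℝ) (hν : 0 < ν) (hG : 0 < G) (hqt : q ≤ t) :
    ∫⁻ s in Ioc q t, ENNReal.ofReal ((s-q)^(ν-1)/G) = ENNReal.ofReal ((t-q)^ν/(ν*G)) := by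
  have hii : IntervalIntegrable (fun x => (x - q)^(ν-1)) volume q t := by
    have := (intervalIntegral.intervalIntegrable_rpow' (a := q - q) (b := t - q) (r := ν-1)
      (by linarith)).comp_sub_right q
    simpa using this
  rw [← ofReal_integral_eq_lintegral_ofReal ((hii.div_const G).1)
    ((ae_restrict_iff' measurableSet_Ioc).2 (Filter.Eventually.of_forall fun s hs =>
      div_nonneg (Real.rpow_nonneg (by linarith [hs.1]) _) hG.le))]
  rw [← intervalIntegral.integral_of_le hqt, intervalIntegral.integral_div]
  rw [intervalIntegral.integral_comp_sub_right (fun x => x ^ (ν-1)) q,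
    integral_rpow (Or.inl (by linarith)), sub_self,
    Real.zero_rpow (by linarith : ν - 1 + 1 ≠ 0)]
  norm_num
  rw [div_div]

lemma half_rpow (x : ℝ≥0∞) : x^(1/2:ℝ) * x^(1/2:ℝ) = x := by
  rw [← ENNReal.rpow_add_of_nonneg _ _ (by norm_num) (by norm_num)]
  norm_num

lemma cs2 {α : Type*} [MeasurableSpace α] (μ : Measure α) {w n : α → ℝ≥0∞}
    (hw : AEMeasurable w μ) (hn : AEMeasurable n μ) :
    (∫⁻ x, w x * n x ∂μ)^2 ≤ (∫⁻ x, w x ∂μ) * ∫⁻ x, w x * (n x)^2 ∂μ := by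
  have hpq : Real.HolderConjugate 2 2 := by constructor <;> norm_num
  have hf : AEMeasurable (fun x => (w x)^(1/2:ℝ)) μ := hw.pow_const _
  have h := ENNReal.lintegral_mul_le_Lp_mul_Lq μ hpq hf (hf.mul hn)
  simp only [Pi.mul_apply] at h
  have e2 : ∀ x : ℝ≥0∞, (x^(1/2:ℝ))^(2:ℝ) = x := by
    intro x
    rw [← ENNReal.rpow_mul]
    norm_num
  have h' : ∫⁻ x, w x * n x ∂μ ≤
      (∫⁻ x, w x ∂μ) ^ (1/2:ℝ) * (∫⁻ x, w x * (n x)^2 ∂μ) ^ (1/2:ℝ) := by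
    calc ∫⁻ x, w x * n x ∂μ
        = ∫⁻ x, (w x)^(1/2:ℝ) * ((w x)^(1/2:ℝ) * n x) ∂μ := by
          congr 1; funext x; rw [← mul_assoc, half_rpow]
      _ ≤ (∫⁻ x, ((w x)^(1/2:ℝ))^(2:ℝ) ∂μ) ^ (1/2:ℝ) *
            (∫⁻ x, ((w x)^(1/2:ℝ) * n x)^(2:ℝ) ∂μ) ^ (1/2:ℝ) := h
      _ = (∫⁻ x, w x ∂μ) ^ (1/2:ℝ) * (∫⁻ x, w x * (n x)^2 ∂μ) ^ (1/2:ℝ) := by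
          congr 1
          · congr 1
            exact lintegral_congr fun x => e2 (w x)
          · congr 1
            refine lintegral_congr fun x => ?_
            rw [ENNReal.mul_rpow_of_nonneg _ _ (by norm_num), e2,
              ← ENNReal.rpow_natCast (n x) 2]
            norm_num
  calc (∫⁻ x, w x * n x ∂μ)^2
      ≤ ((∫⁻ x, w x ∂μ) ^ (1/2:ℝ) * (∫⁻ x, w x * (n x)^2 ∂μ) ^ (1/2:ℝ))^2 := by
        exact pow_le_pow_left' h' 2
    _ = (∫⁻ x, w x ∂μ) * ∫⁻ x, w x * (n x)^2 ∂μ := by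
        rw [mul_pow, sq, sq, half_rpow, half_rpow]

theorem stmt_main
    {H : Type*} [NormedAddCommGroup H] [InnerProductSpace ℝ H] [CompleteSpace H]
    (ν t : ℝ) (hν0 : 0 < ν) (hν1 : ν ≤ 1) (ht : 0 < t) (χ : ℝ → H)
    (hsm : StronglyMeasurable χ)
    (hint : IntegrableOn (fun s => ‖χ s‖ ^ 2) (Ioc 0 t)) :
    (∫ s in (0:ℝ)..t, ‖∫ q in (0:ℝ)..s, ((s - q) ^ (ν - 1) / Real.Gamma ν) • χ q‖ ^ 2)
      ≤ 2 * t ^ (2 * ν) * ∫ s in (0:ℝ)..t, ‖χ s‖ ^ 2 := by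
  have hG : 0 < Real.Gamma ν := Real.Gamma_pos_of_pos hν0
  set G := Real.Gamma ν with hGdef
  set C : ℝ := t^ν/(ν*G) with hCdef
  have hC : 0 ≤ C := by positivity
  let F : ℝ → H := fun s => ∫ q in (0:ℝ)..s, ((s - q) ^ (ν - 1) / G) • χ q
  let n : ℝ → ℝ≥0∞ := fun q => (‖χ q‖₊ : ℝ≥0∞)
  let w : ℝ → ℝ → ℝ≥0∞ := fun s q => ENNReal.ofReal ((s-q)^(ν-1)/G)
  show (∫ s in (0:ℝ)..t, ‖F s‖ ^ 2) ≤ 2 * t ^ (2 * ν) * ∫ s in (0:ℝ)..t, ‖χ s‖ ^ 2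
  rw [intervalIntegral.integral_of_le ht.le, intervalIntegral.integral_of_le ht.le]
  -- step S1
  have hnm : Measurable n := hsm.enorm
  have S1 : ∀ s ∈ Ioc (0:ℝ) t, ((‖F s‖₊ : ℝ≥0∞))^2
      ≤ ENNReal.ofReal C * ∫⁻ q in Ioc 0 s, w s q * (n q)^2 := by
    intro s hs
    have hwm : Measurable (w s) :=
      ENNReal.measurable_ofReal.comp
        (((measurable_const.sub measurable_id).pow_const _).div_const G)
    have hnorm : (‖F s‖₊ : ℝ≥0∞) ≤ ∫⁻ q in Ioc 0 s, w s q * n q := by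
      have h0 : F s = ∫ q in Ioc 0 s, ((s - q)^(ν-1)/G) • χ q :=
        intervalIntegral.integral_of_le hs.1.le
      rw [h0]
      refine le_trans (enorm_integral_le_lintegral_enorm _) (le_of_eq ?_)
      refine setLIntegral_congr_fun measurableSet_Ioc (fun q hq => ?_)
      rw [enorm_smul]
      rw [Real.enorm_eq_ofReal (div_nonneg (Real.rpow_nonneg (by linarith [hq.2]) _) hG.le)]
      rfl
    have hwint : ∫⁻ q in Ioc 0 s, w s q ≤ ENNReal.ofReal C := by
      rw [show ∫⁻ q in Ioc 0 s, w s q = ENNReal.ofReal (s^ν/(ν*G)) from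
        kernA ν G s hν0 hG hs.1.le]
      refine ENNReal.ofReal_le_ofReal ?_
      rw [hCdef]
      exact (div_le_div_iff_of_pos_right (by positivity)).2 (Real.rpow_le_rpow hs.1.le hs.2 hν0.le)
    calc ((‖F s‖₊:ℝ≥0∞))^2 ≤ (∫⁻ q in Ioc 0 s, w s q * n q)^2 := pow_le_pow_left' hnorm 2
      _ ≤ (∫⁻ q in Ioc 0 s, w s q) * ∫⁻ q in Ioc 0 s, w s q * (n q)^2 :=
          cs2 _ hwm.aemeasurable hnm.aemeasurable
      _ ≤ ENNReal.ofReal C * ∫⁻ q in Ioc 0 s, w s q * (n q)^2 := mul_le_mul_left hwint _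
  -- Tonelli
  let f : ℝ → ℝ → ℝ≥0∞ := fun s q => (Ioc 0 s).indicator (fun q' => w s q' * (n q') ^ 2) q
  have hfm : Measurable (Function.uncurry f) := by
    have he : Function.uncurry f = fun p : ℝ×ℝ =>
        if 0 < p.2 ∧ p.2 ≤ p.1 then w p.1 p.2 * (n p.2) ^2 else 0 := by
      funext p
      simp [f, Function.uncurry, indicator_apply, mem_Ioc]
    rw [he]
    refine Measurable.ite ?_ ?_ measurable_const
    · exact (measurableSet_lt measurable_const measurable_snd).inter
        (measurableSet_le measurable_snd measurable_fst)
    · exact (ENNReal.measurable_ofReal.comp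
        (((measurable_fst.sub measurable_snd).pow_const _).div_const G)).mul
        ((hnm.comp measurable_snd).pow_const 2)
  have step1 : ∀ s ∈ Ioc (0:ℝ) t,
      ∫⁻ q in Ioc 0 s, w s q * (n q)^2 = ∫⁻ q in Ioc 0 t, f s q := by
    intro s hs
    rw [lintegral_indicator measurableSet_Ioc, Measure.restrict_restrict measurableSet_Ioc,
      Ioc_inter_Ioc]
    simp [min_eq_left hs.2]
  have step3 : ∀ q ∈ Ioc (0:ℝ) t,
      ∫⁻ s in Ioc 0 t, f s q ≤ (n q)^2 * ENNReal.ofReal C := by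
    intro q hq
    have hfin : (n q)^2 ≠ ⊤ := by
      simp [n]
    have h1 : ∀ s, f s q = (Ici q).indicator (fun s' => w s' q * (n q) ^ 2) s := by
      intro s
      simp only [f, indicator_apply, mem_Ioc, mem_Ici]
      by_cases h : q ≤ s <;> simp [h, hq.1]
    have hset : Ici q ∩ Ioc 0 t = Icc q t := by
      ext x
      simp only [mem_inter_iff, mem_Ici, mem_Ioc, mem_Icc]
      constructor
      · rintro ⟨h1', h2', h3'⟩; exact ⟨h1', h3'⟩
      · rintro ⟨h1', h2'⟩; exact ⟨h1', lt_of_lt_of_le hq.1 h1', h2'⟩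
    calc ∫⁻ s in Ioc 0 t, f s q
        = ∫⁻ s in Ioc 0 t, (Ici q).indicator (fun s' => w s' q * (n q)^2) s :=
          lintegral_congr fun s => h1 s
      _ = ∫⁻ s in Ici q ∩ Ioc 0 t, w s q * (n q)^2 := by
          rw [lintegral_indicator measurableSet_Ici,
            Measure.restrict_restrict measurableSet_Ici]
      _ = ∫⁻ s in Ioc q t, w s q * (n q)^2 := by
          rw [hset, ← Measure.restrict_congr_set Ioc_ae_eq_Icc]
      _ = (n q)^2 * ∫⁻ s in Ioc q t, w s q := by
          rw [← lintegral_const_mul' _ _ (by simpa using hfin)]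
          exact lintegral_congr fun s => mul_comm _ _
      _ = (n q)^2 * ENNReal.ofReal ((t-q)^ν/(ν*G)) := by
          rw [show ∫⁻ s in Ioc q t, w s q = ENNReal.ofReal ((t-q)^ν/(ν*G)) from
            kernB ν G q t hν0 hG hq.2]
      _ ≤ (n q)^2 * ENNReal.ofReal C := by
          refine mul_le_mul_right (ENNReal.ofReal_le_ofReal ?_) _
          rw [hCdef]
          exact (div_le_div_iff_of_pos_right (by positivity)).2
            (Real.rpow_le_rpow (by linarith [hq.2]) (by linarith [hq.1]) hν0.le)
  have S3 : ∫⁻ s in Ioc 0 t, ∫⁻ q in Ioc 0 s, w s q * (n q)^2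
      ≤ ENNReal.ofReal C * ∫⁻ q in Ioc 0 t, (n q)^2 := by
    calc ∫⁻ s in Ioc 0 t, ∫⁻ q in Ioc 0 s, w s q * (n q)^2
        = ∫⁻ s in Ioc 0 t, ∫⁻ q in Ioc 0 t, f s q :=
          setLIntegral_congr_fun measurableSet_Ioc step1
      _ = ∫⁻ q in Ioc 0 t, ∫⁻ s in Ioc 0 t, f s q :=
          lintegral_lintegral_swap hfm.aemeasurable
      _ ≤ ∫⁻ q in Ioc 0 t, (n q)^2 * ENNReal.ofReal C :=
          lintegral_mono_ae ((ae_restrict_iff' measurableSet_Ioc).2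
            (Filter.Eventually.of_forall step3))
      _ = (∫⁻ q in Ioc 0 t, (n q)^2) * ENNReal.ofReal C :=
          lintegral_mul_const' _ _ ENNReal.ofReal_ne_top
      _ = ENNReal.ofReal C * ∫⁻ q in Ioc 0 t, (n q)^2 := mul_comm _ _
  have S4 : ∫⁻ s in Ioc 0 t, ((‖F s‖₊:ℝ≥0∞))^2
      ≤ ENNReal.ofReal C * (ENNReal.ofReal C * ∫⁻ q in Ioc 0 t, (n q)^2) := by
    calc ∫⁻ s in Ioc 0 t, ((‖F s‖₊:ℝ≥0∞))^2
        ≤ ∫⁻ s in Ioc 0 t, ENNReal.ofReal C * ∫⁻ q in Ioc 0 s, w s q * (n q)^2 :=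
          lintegral_mono_ae ((ae_restrict_iff' measurableSet_Ioc).2
            (Filter.Eventually.of_forall S1))
      _ = ENNReal.ofReal C * ∫⁻ s in Ioc 0 t, ∫⁻ q in Ioc 0 s, w s q * (n q)^2 :=
          lintegral_const_mul' _ _ ENNReal.ofReal_ne_top
      _ ≤ ENNReal.ofReal C * (ENNReal.ofReal C * ∫⁻ q in Ioc 0 t, (n q)^2) :=
          mul_le_mul_right S3 _
  -- conversion
  set I : ℝ := ∫ s in Ioc (0:ℝ) t, ‖χ s‖^2 with hIdef
  have hI0 : 0 ≤ I := setIntegral_nonneg measurableSet_Ioc fun s _ => sq_nonneg _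
  have hN : ∫⁻ q in Ioc 0 t, (n q)^2 = ENNReal.ofReal I := by
    rw [hIdef, ofReal_integral_eq_lintegral_ofReal hint (ae_of_all _ fun q => sq_nonneg _)]
    refine lintegral_congr fun q => ?_
    show ((‖χ q‖₊ : ℝ≥0∞))^2 = ENNReal.ofReal (‖χ q‖^2)
    rw [ENNReal.ofReal_pow (norm_nonneg _), ← coe_nnnorm, ENNReal.ofReal_coe_nnreal]
  have hCC : C * C ≤ 2*t^(2*ν) := by
    have hBG : (1:ℝ) ≤ 2*(ν*G)^2 := by
      have hg := gamma_sq (ν+1) (by linarith) (by linarith)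
      rwa [Real.Gamma_add_one hν0.ne', ← hGdef] at hg
    have hA : t^(2*ν) = (t^ν)^2 := by
      rw [← Real.rpow_natCast (t^ν) 2, ← Real.rpow_mul ht.le]
      norm_num [mul_comm]
    have h2 : 0 < t^ν := Real.rpow_pos_of_pos ht _
    have h1 : 0 < ν*G := by positivity
    rw [hA, hCdef, div_mul_div_comm, div_le_iff₀ (by positivity)]
    nlinarith [mul_le_mul_of_nonneg_left hBG (sq_nonneg (t^ν))]
  by_cases hInt : IntegrableOn (fun s => ‖F s‖^2) (Ioc 0 t)
  · have hLHS : ∫ s in Ioc 0 t, ‖F s‖^2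
        = (∫⁻ s in Ioc 0 t, ((‖F s‖₊:ℝ≥0∞))^2).toReal := by
      rw [integral_eq_lintegral_of_nonneg_ae (ae_of_all _ fun s => sq_nonneg _)
        hInt.aestronglyMeasurable]
      congr 1
      exact lintegral_congr fun s => by
        rw [ENNReal.ofReal_pow (norm_nonneg _), ← coe_nnnorm, ENNReal.ofReal_coe_nnreal]
    rw [hLHS]
    have hb : ∫⁻ s in Ioc 0 t, ((‖F s‖₊:ℝ≥0∞))^2 ≤ ENNReal.ofReal (C*(C*I)) := by
      refine S4.trans (le_of_eq ?_)
      rw [hN, ← ENNReal.ofReal_mul hC, ← ENNReal.ofReal_mul hC]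
    calc (∫⁻ s in Ioc 0 t, ((‖F s‖₊:ℝ≥0∞))^2).toReal
        ≤ (ENNReal.ofReal (C*(C*I))).toReal :=
          ENNReal.toReal_mono ENNReal.ofReal_ne_top hb
      _ = C*(C*I) := ENNReal.toReal_ofReal (by positivity)
      _ ≤ 2*t^(2*ν)*I := by
          rw [← mul_assoc]
          exact mul_le_mul_of_nonneg_right hCC hI0
  · rw [MeasureTheory.integral_undef hInt]
    exact mul_nonneg (by positivity) hI0

/-- Lemma 2.2.
For `0 < ν ≤ 1`, `t > 0`, and `χ ∈ L₂((0,t), H)`,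
`∫₀ᵗ ‖(I^ν χ)(s)‖² ds ≤ 2 t^(2ν) ∫₀ᵗ ‖χ(s)‖² ds`. -/
theorem stmt_1
    {H : Type*} [NormedAddCommGroup H] [InnerProductSpace ℝ H] [CompleteSpace H]
    (ν t : ℝ) (hν0 : 0 < ν) (hν1 : ν ≤ 1) (ht : 0 < t) (χ : ℝ → H)
    (hmeas : AEStronglyMeasurable χ (volume.restrict (Ioc 0 t)))
    (hint : IntegrableOn (fun s => ‖χ s‖ ^ 2) (Ioc 0 t)) :
    (∫ s in (0:ℝ)..t, ‖∫ q in (0:ℝ)..s, ((s - q) ^ (ν - 1) / Real.Gamma ν) • χ q‖ ^ 2)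
      ≤ 2 * t ^ (2 * ν) * ∫ s in (0:ℝ)..t, ‖χ s‖ ^ 2 := by
  set χ' : ℝ → H := hmeas.mk χ with hχ'
  have heq : χ =ᵐ[volume.restrict (Ioc 0 t)] χ' := hmeas.ae_eq_mk
  have hint' : IntegrableOn (fun s => ‖χ' s‖ ^ 2) (Ioc 0 t) :=
    hint.congr (heq.mono fun x hx => by simp only [hx])
  have key := stmt_main ν t hν0 hν1 ht χ' hmeas.stronglyMeasurable_mk hint'
  have e1 : ∫ s in (0:ℝ)..t, ‖χ s‖^2 = ∫ s in (0:ℝ)..t, ‖χ' s‖^2 := by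
    rw [intervalIntegral.integral_of_le ht.le, intervalIntegral.integral_of_le ht.le]
    exact integral_congr_ae (heq.mono fun x hx => by simp only [hx])
  have e2 : (∫ s in (0:ℝ)..t, ‖∫ q in (0:ℝ)..s, ((s - q) ^ (ν - 1) / Real.Gamma ν) • χ q‖ ^ 2)
      = ∫ s in (0:ℝ)..t, ‖∫ q in (0:ℝ)..s, ((s - q) ^ (ν - 1) / Real.Gamma ν) • χ' q‖ ^ 2 := by
    rw [intervalIntegral.integral_of_le ht.le, intervalIntegral.integral_of_le ht.le]
    refine setIntegral_congr_fun measurableSet_Ioc fun s hs => ?_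
    have hinner : (∫ q in (0:ℝ)..s, ((s - q) ^ (ν - 1) / Real.Gamma ν) • χ q)
        = ∫ q in (0:ℝ)..s, ((s - q) ^ (ν - 1) / Real.Gamma ν) • χ' q := by
      rw [intervalIntegral.integral_of_le hs.1.le, intervalIntegral.integral_of_le hs.1.le]
      refine integral_congr_ae ?_
      have h := ae_restrict_of_ae_restrict_of_subset (Ioc_subset_Ioc_right hs.2) heq
      exact h.mono fun q hq => by simp only [hq]
    rw [hinner]
  rw [e1, e2]
  exact key
end

section
/- Let 0 < ν ≤ 1 and t > 0. If y : (0,t) → [0,∞) is measurable and square integrable, then ∫₀ᵗ ((I^ν y)(s))² ds ≤ ω_{ν+1}(t) ∫₀ᵗ ω_ν(t−s) ( ∫₀ˢ y(q)² dq ) ds. -/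
open MeasureTheory Set

lemma ii1 {ν : ℝ} (hν : 0 < ν) (a b : ℝ) :
    IntervalIntegrable (fun x => (x - a) ^ (ν - 1)) volume a b := by
  simpa using (intervalIntegral.intervalIntegrable_rpow' (a := a - a) (b := b - a)
    (by linarith : (-1:ℝ) < ν - 1)).comp_sub_right a

lemma ii2 {ν : ℝ} (hν : 0 < ν) (a b : ℝ) :
    IntervalIntegrable (fun x => (b - x) ^ (ν - 1)) volume a b := by
  simpa using ((intervalIntegral.intervalIntegrable_rpow' (a := b - b) (b := b - a)
    (by linarith : (-1:ℝ) < ν - 1)).comp_sub_left b).symm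

lemma int1 {ν : ℝ} (hν : 0 < ν) (a b : ℝ) :
    ∫ x in a..b, (x - a) ^ (ν - 1) = (b - a) ^ ν / ν := by
  have h := intervalIntegral.integral_comp_sub_right (a := a) (b := b)
    (fun u => u ^ (ν - 1)) a
  rw [h, integral_rpow (Or.inl (by linarith))]
  simp [sub_self, Real.zero_rpow (ne_of_gt hν), sub_add_cancel, hν.ne']

lemma int2 {ν : ℝ} (hν : 0 < ν) (a b : ℝ) :
    ∫ x in a..b, (b - x) ^ (ν - 1) = (b - a) ^ ν / ν := by
  have h := intervalIntegral.integral_comp_sub_left (a := a) (b := b)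
    (fun u => u ^ (ν - 1)) b
  rw [h, integral_rpow (Or.inl (by linarith))]
  simp [sub_self, Real.zero_rpow (ne_of_gt hν), sub_add_cancel, hν.ne']

lemma lint1 {ν : ℝ} (hν : 0 < ν) {a b : ℝ} (hab : a ≤ b) :
    ∫⁻ x in Ioc a b, ENNReal.ofReal ((x - a) ^ (ν - 1)) = ENNReal.ofReal ((b - a) ^ ν / ν) := by
  rw [← ofReal_integral_eq_lintegral_ofReal
    ((intervalIntegrable_iff_integrableOn_Ioc_of_le hab).1 (ii1 hν a b))
    ((ae_restrict_iff' measurableSet_Ioc).2 (Filter.Eventually.of_forall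
      (fun x hx => Real.rpow_nonneg (by linarith [hx.1]) _)))]
  rw [← intervalIntegral.integral_of_le hab, int1 hν]

lemma lint2 {ν : ℝ} (hν : 0 < ν) {a b : ℝ} (hab : a ≤ b) :
    ∫⁻ x in Ioc a b, ENNReal.ofReal ((b - x) ^ (ν - 1)) = ENNReal.ofReal ((b - a) ^ ν / ν) := by
  rw [← ofReal_integral_eq_lintegral_ofReal
    ((intervalIntegrable_iff_integrableOn_Ioc_of_le hab).1 (ii2 hν a b))
    ((ae_restrict_iff' measurableSet_Ioc).2 (Filter.Eventually.of_forall
      (fun x hx => Real.rpow_nonneg (by linarith [hx.2]) _)))]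
  rw [← intervalIntegral.integral_of_le hab, int2 hν]

lemma swap_tri {t : ℝ} (K : ℝ → ℝ → ENNReal) (hK : Measurable (Function.uncurry K))
    (g : ℝ → ENNReal) (hg : AEMeasurable g (volume.restrict (Ioc 0 t))) :
    ∫⁻ s in Ioc 0 t, ∫⁻ q in Ioc 0 s, K s q * g q
      = ∫⁻ q in Ioc 0 t, (∫⁻ s in Ioc q t, K s q) * g q := by
  set F : ℝ → ℝ → ENNReal := fun s q =>
    Set.indicator {p : ℝ × ℝ | p.2 ≤ p.1} (fun p => K p.1 p.2 * g p.2) (s, q) with hF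
  have hFeq : ∀ s q, F s q = if q ≤ s then K s q * g q else 0 := by
    intro s q
    by_cases h : q ≤ s
    · simp [hF, Set.indicator_of_mem, h, Set.mem_setOf_eq]
    · simp [hF, Set.indicator_of_notMem, h, Set.mem_setOf_eq]
  have hFmeas : AEMeasurable (Function.uncurry F)
      ((volume.restrict (Ioc 0 t)).prod (volume.restrict (Ioc 0 t))) := by
    have h1 : AEMeasurable (fun p : ℝ × ℝ => K p.1 p.2 * g p.2)
        ((volume.restrict (Ioc 0 t)).prod (volume.restrict (Ioc 0 t))) := by
      exact (hK.aemeasurable).mul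
        (hg.comp_quasiMeasurePreserving Measure.quasiMeasurePreserving_snd)
    exact h1.indicator (measurableSet_le measurable_snd measurable_fst)
  have step1 : ∫⁻ s in Ioc 0 t, ∫⁻ q in Ioc 0 s, K s q * g q
      = ∫⁻ s in Ioc 0 t, ∫⁻ q in Ioc 0 t, F s q := by
    refine setLIntegral_congr_fun measurableSet_Ioc ?_
    intro s hs
    beta_reduce
    have : ∫⁻ q in Ioc 0 t, F s q
        = ∫⁻ q in Ioc 0 t, (Iic s).indicator (fun q => K s q * g q) q := by
      refine lintegral_congr fun q => ?_
      rw [hFeq]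
      by_cases h : q ≤ s
      · simp [Set.indicator_of_mem, h, Set.mem_Iic]
      · simp [Set.indicator_of_notMem, h, Set.mem_Iic]
    have e2 : Iic s ∩ Ioc 0 t = Ioc 0 s := by
      ext x
      simp only [Set.mem_inter_iff, Set.mem_Iic, Set.mem_Ioc]
      exact ⟨fun h => ⟨h.2.1, h.1⟩, fun h => ⟨h.2, h.1, h.2.trans hs.2⟩⟩
    rw [this, lintegral_indicator measurableSet_Iic,
      Measure.restrict_restrict measurableSet_Iic, e2]
  have step2 : ∫⁻ s in Ioc 0 t, ∫⁻ q in Ioc 0 t, F s q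
      = ∫⁻ q in Ioc 0 t, ∫⁻ s in Ioc 0 t, F s q := lintegral_lintegral_swap hFmeas
  have step3 : ∫⁻ q in Ioc 0 t, ∫⁻ s in Ioc 0 t, F s q
      = ∫⁻ q in Ioc 0 t, (∫⁻ s in Ioc q t, K s q) * g q := by
    refine setLIntegral_congr_fun measurableSet_Ioc ?_
    intro q hq
    beta_reduce
    have e1 : ∫⁻ s in Ioc 0 t, F s q
        = ∫⁻ s in Ioc 0 t, (Ici q).indicator (fun s => K s q * g q) s := by
      refine lintegral_congr fun s => ?_
      rw [hFeq]
      by_cases h : q ≤ s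
      · simp [Set.indicator_of_mem, h, Set.mem_Ici]
      · simp [Set.indicator_of_notMem, h, Set.mem_Ici]
    have e2 : Ici q ∩ Ioc 0 t = Icc q t := by
      ext x
      simp only [Set.mem_inter_iff, Set.mem_Ici, Set.mem_Ioc, Set.mem_Icc]
      exact ⟨fun h => ⟨h.1, h.2.2⟩, fun h => ⟨h.1, hq.1.trans_le h.1, h.2⟩⟩
    rw [e1, lintegral_indicator measurableSet_Ici, Measure.restrict_restrict measurableSet_Ici,
      e2, MeasureTheory.Measure.restrict_congr_set Ioc_ae_eq_Icc.symm]
    have hKone : AEMeasurable (fun s => K s q) (volume.restrict (Ioc q t)) :=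
      (hK.comp (measurable_id.prodMk measurable_const)).aemeasurable
    exact lintegral_mul_const'' _ hKone
  rw [step1, step2, step3]

lemma lint1c {ν c : ℝ} (hν : 0 < ν) (hc : 0 < c) {a b : ℝ} (hab : a ≤ b) :
    ∫⁻ x in Ioc a b, ENNReal.ofReal ((x - a) ^ (ν - 1) / c)
      = ENNReal.ofReal ((b - a) ^ ν / (ν * c)) := by
  rw [← ofReal_integral_eq_lintegral_ofReal
    ((intervalIntegrable_iff_integrableOn_Ioc_of_le hab).1 ((ii1 hν a b).div_const c))
    ((ae_restrict_iff' measurableSet_Ioc).2 (Filter.Eventually.of_forall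
      (fun x hx => div_nonneg (Real.rpow_nonneg (by linarith [hx.1]) _) hc.le)))]
  rw [← intervalIntegral.integral_of_le hab, intervalIntegral.integral_div, int1 hν,
    div_div]

lemma lint2c {ν c : ℝ} (hν : 0 < ν) (hc : 0 < c) {a b : ℝ} (hab : a ≤ b) :
    ∫⁻ x in Ioc a b, ENNReal.ofReal ((b - x) ^ (ν - 1) / c)
      = ENNReal.ofReal ((b - a) ^ ν / (ν * c)) := by
  rw [← ofReal_integral_eq_lintegral_ofReal
    ((intervalIntegrable_iff_integrableOn_Ioc_of_le hab).1 ((ii2 hν a b).div_const c))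
    ((ae_restrict_iff' measurableSet_Ioc).2 (Filter.Eventually.of_forall
      (fun x hx => div_nonneg (Real.rpow_nonneg (by linarith [hx.2]) _) hc.le)))]
  rw [← intervalIntegral.integral_of_le hab, intervalIntegral.integral_div, int2 hν,
    div_div]
lemma rphalf (x : ENNReal) : (x ^ ((1:ℝ)/2)) ^ (2:ℕ) = x := by
  rw [← ENNReal.rpow_natCast (x ^ ((1:ℝ)/2)) 2, ← ENNReal.rpow_mul]
  norm_num

lemma cs {α : Type*} [MeasurableSpace α] (μ : Measure α) (f g : α → ENNReal)
    (hf : AEMeasurable f μ) (hg : AEMeasurable g μ) :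
    (∫⁻ a, f a * g a ∂μ) ^ (2:ℕ) ≤ (∫⁻ a, f a ∂μ) * (∫⁻ a, f a * (g a) ^ (2:ℕ) ∂μ) := by
  have hconj : Real.HolderConjugate 2 2 := ⟨by norm_num, by norm_num, by norm_num⟩
  have hF : AEMeasurable (fun a => (f a) ^ ((1:ℝ)/2)) μ := hf.pow_const _
  have hG : AEMeasurable (fun a => (f a) ^ ((1:ℝ)/2) * g a) μ := hF.mul hg
  have key := ENNReal.lintegral_mul_le_Lp_mul_Lq μ hconj hF hG
  have e1 : ∀ a, ((fun a => (f a) ^ ((1:ℝ)/2)) * fun a => (f a) ^ ((1:ℝ)/2) * g a) a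
      = f a * g a := by
    intro a
    simp only [Pi.mul_apply]
    rw [← mul_assoc, ← sq, ← ENNReal.rpow_natCast, ← ENNReal.rpow_mul]
    norm_num
  have e2 : ∀ a, ((f a) ^ ((1:ℝ)/2)) ^ (2:ℝ) = f a := by
    intro a; rw [← ENNReal.rpow_mul]; norm_num
  have e3 : ∀ a, ((f a) ^ ((1:ℝ)/2) * g a) ^ (2:ℝ) = f a * (g a) ^ (2:ℕ) := by
    intro a
    rw [ENNReal.mul_rpow_of_nonneg _ _ (by norm_num), e2, ← ENNReal.rpow_natCast]
    norm_num
  simp only [e1, e2, e3] at key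
  calc (∫⁻ a, f a * g a ∂μ) ^ (2:ℕ)
      ≤ ((∫⁻ a, f a ∂μ) ^ ((1:ℝ)/2) * (∫⁻ a, f a * (g a) ^ (2:ℕ) ∂μ) ^ ((1:ℝ)/2)) ^ (2:ℕ) := by
        exact pow_le_pow_left₀ zero_le (by simpa using key) 2
    _ = (∫⁻ a, f a ∂μ) * (∫⁻ a, f a * (g a) ^ (2:ℕ) ∂μ) := by
        rw [mul_pow, rphalf, rphalf]

/-- Lemma 2.3.
For `0 < ν ≤ 1`, `t > 0`, and a nonnegative square-integrable `y` on `(0,t)`,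
`∫₀ᵗ ((I^ν y)(s))² ds ≤ ω_{ν+1}(t) ∫₀ᵗ ω_ν(t-s) (∫₀ˢ y(q)² dq) ds`. -/
theorem stmt_2 (ν t : ℝ) (hν0 : 0 < ν) (hν1 : ν ≤ 1) (ht : 0 < t)
    (y : ℝ → ℝ) (hy : ∀ s ∈ Ioc 0 t, 0 ≤ y s)
    (hmeas : AEStronglyMeasurable y (volume.restrict (Ioc 0 t)))
    (hint : IntegrableOn (fun s => y s ^ 2) (Ioc 0 t)) :
    (∫ s in (0:ℝ)..t, (∫ q in (0:ℝ)..s, ((s - q) ^ (ν - 1) / Real.Gamma ν) * y q) ^ 2)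
      ≤ (t ^ ν / Real.Gamma (ν + 1)) *
        ∫ s in (0:ℝ)..t, ((t - s) ^ (ν - 1) / Real.Gamma ν) * ∫ q in (0:ℝ)..s, y q ^ 2 := by
  have hc : 0 < Real.Gamma ν := Real.Gamma_pos_of_pos hν0
  set c := Real.Gamma ν with hcdef
  have hGamma : Real.Gamma (ν + 1) = ν * c := Real.Gamma_add_one hν0.ne'
  set g : ℝ → ENNReal := fun q => ENNReal.ofReal (y q) with hgdef
  have hgm : AEMeasurable g (volume.restrict (Ioc 0 t)) := hmeas.aemeasurable.ennreal_ofReal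
  have hggm : AEMeasurable (fun q => g q ^ 2) (volume.restrict (Ioc 0 t)) := hgm.pow_const 2
  set K1 : ℝ → ℝ → ENNReal := fun s q => ENNReal.ofReal ((s - q) ^ (ν - 1) / c) with hK1def
  set K2 : ℝ → ℝ → ENNReal := fun s q => ENNReal.ofReal ((t - s) ^ (ν - 1) / c) with hK2def
  have hK1m : Measurable (Function.uncurry K1) := by
    apply Measurable.ennreal_ofReal; fun_prop
  have hK2m : Measurable (Function.uncurry K2) := by
    apply Measurable.ennreal_ofReal; fun_prop
  set w : ℝ := t ^ ν / (ν * c) with hwdef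
  have hw0 : 0 ≤ w := div_nonneg (Real.rpow_nonneg ht.le ν) (by positivity)
  have hRHS_inner_nonneg : ∀ s ∈ Icc 0 t,
      0 ≤ ((t - s) ^ (ν - 1) / c) * ∫ q in (0:ℝ)..s, y q ^ 2 := by
    intro s hs
    refine mul_nonneg (div_nonneg (Real.rpow_nonneg (by linarith [hs.2]) _) hc.le) ?_
    exact intervalIntegral.integral_nonneg hs.1 (fun q _ => sq_nonneg _)
  have hRHSnn : 0 ≤ (t ^ ν / Real.Gamma (ν + 1)) *
      ∫ s in (0:ℝ)..t, ((t - s) ^ (ν - 1) / c) * ∫ q in (0:ℝ)..s, y q ^ 2 := by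
    refine mul_nonneg (by rw [hGamma]; exact hw0) ?_
    exact intervalIntegral.integral_nonneg ht.le hRHS_inner_nonneg
  by_cases hLint : IntegrableOn
      (fun s => (∫ q in (0:ℝ)..s, ((s - q) ^ (ν - 1) / c) * y q) ^ 2) (Ioc 0 t)
  swap
  · rw [intervalIntegral.integral_of_le ht.le, integral_undef hLint]
    exact hRHSnn
  set F : ℝ → ENNReal := fun s => ∫⁻ q in Ioc 0 s, K1 s q * g q with hFdef
  set G : ℝ → ENNReal := fun s => ∫⁻ q in Ioc 0 s, K1 s q * g q ^ 2 with hGdef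
  set Y : ℝ → ENNReal := fun s => ∫⁻ q in Ioc 0 s, g q ^ 2 with hYdef
  -- restricted measurability of y
  have hrestr : ∀ s, s ≤ t → volume.restrict (Ioc 0 s) ≤ volume.restrict (Ioc 0 t) :=
    fun s hs => Measure.restrict_mono (Ioc_subset_Ioc le_rfl hs) le_rfl
  have hymeas' : ∀ s, s ≤ t → AEStronglyMeasurable y (volume.restrict (Ioc 0 s)) :=
    fun s hs => hmeas.mono_measure (hrestr s hs)
  -- inner LHS integral equals toReal of F
  have hB : ∀ s ∈ Ioc 0 t,
      (∫ q in (0:ℝ)..s, ((s - q) ^ (ν - 1) / c) * y q) = (F s).toReal := by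
    intro s hs
    rw [intervalIntegral.integral_of_le hs.1.le]
    rw [integral_eq_lintegral_of_nonneg_ae
      ((ae_restrict_iff' measurableSet_Ioc).2 (Filter.Eventually.of_forall (fun q hq =>
        mul_nonneg (div_nonneg (Real.rpow_nonneg (by linarith [hq.2]) _) hc.le)
          (hy q ⟨hq.1, hq.2.trans hs.2⟩))))
      ((by fun_prop : Measurable fun q => (s - q) ^ (ν - 1) / c).aestronglyMeasurable.mul
        (hymeas' s hs.2))]
    congr 1
    refine lintegral_congr_ae ((ae_restrict_iff' measurableSet_Ioc).2
      (Filter.Eventually.of_forall (fun q hq => ?_)))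
    have h0 : 0 ≤ (s - q) ^ (ν - 1) / c :=
      div_nonneg (Real.rpow_nonneg (by linarith [hq.2]) _) hc.le
    show ENNReal.ofReal ((s - q) ^ (ν - 1) / c * y q) = K1 s q * g q
    rw [ENNReal.ofReal_mul h0]
  -- Cauchy-Schwarz pointwise
  have hCS : ∀ s ∈ Ioc 0 t, (F s) ^ 2 ≤ ENNReal.ofReal w * G s := by
    intro s hs
    have hK1sm : AEMeasurable (K1 s) (volume.restrict (Ioc 0 s)) := by
      apply Measurable.aemeasurable; apply Measurable.ennreal_ofReal; fun_prop
    have hgm' : AEMeasurable g (volume.restrict (Ioc 0 s)) := hgm.mono_measure (hrestr s hs.2)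
    have key := cs (volume.restrict (Ioc 0 s)) (K1 s) g hK1sm hgm'
    have hker : ∫⁻ q in Ioc 0 s, K1 s q = ENNReal.ofReal (s ^ ν / (ν * c)) := by
      have := lint2c (a := 0) (b := s) hν0 hc hs.1.le
      simpa using this
    refine le_trans key ?_
    rw [hker]
    refine mul_le_mul_left (ENNReal.ofReal_le_ofReal ?_) _
    rw [hwdef]
    gcongr
    · exact hs.1.le
    · exact hs.2
  -- swap identities
  have hswap1 : ∫⁻ s in Ioc 0 t, G s
      = ∫⁻ q in Ioc 0 t, (ENNReal.ofReal ((t - q) ^ ν / (ν * c))) * g q ^ 2 := by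
    rw [hGdef]
    rw [swap_tri K1 hK1m _ hggm]
    refine setLIntegral_congr_fun measurableSet_Ioc ?_
    intro q hq
    beta_reduce
    congr 1
    exact lint1c hν0 hc hq.2
  have hswap2 : ∫⁻ s in Ioc 0 t, ENNReal.ofReal ((t - s) ^ (ν - 1) / c) * Y s
      = ∫⁻ q in Ioc 0 t, (ENNReal.ofReal ((t - q) ^ ν / (ν * c))) * g q ^ 2 := by
    have e1 : ∫⁻ s in Ioc 0 t, ENNReal.ofReal ((t - s) ^ (ν - 1) / c) * Y s
        = ∫⁻ s in Ioc 0 t, ∫⁻ q in Ioc 0 s, K2 s q * g q ^ 2 := by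
      refine lintegral_congr fun s => ?_
      rw [hYdef]
      exact (lintegral_const_mul' _ _ ENNReal.ofReal_ne_top).symm
    rw [e1, swap_tri K2 hK2m _ hggm]
    refine setLIntegral_congr_fun measurableSet_Ioc ?_
    intro q hq
    beta_reduce
    congr 1
    exact lint2c hν0 hc hq.2
  -- total mass of g^2
  have hytot : ∫⁻ q in Ioc 0 t, g q ^ 2 = ENNReal.ofReal (∫ q in Ioc 0 t, y q ^ 2) := by
    rw [ofReal_integral_eq_lintegral_ofReal hint
      (Filter.Eventually.of_forall fun q => sq_nonneg _)]
    refine lintegral_congr_ae ((ae_restrict_iff' measurableSet_Ioc).2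
      (Filter.Eventually.of_forall fun q hq => ?_))
    simp [hgdef, ENNReal.ofReal_pow (hy q hq)]
  set H := ∫⁻ s in Ioc 0 t, ENNReal.ofReal ((t - s) ^ (ν - 1) / c) * Y s with hHdef
  have hH : H ≠ ⊤ := by
    have hb : H ≤ ENNReal.ofReal (t ^ ν / (ν * c))
        * ENNReal.ofReal (∫ q in Ioc 0 t, y q ^ 2) := by
      rw [hHdef]
      calc ∫⁻ s in Ioc 0 t, ENNReal.ofReal ((t - s) ^ (ν - 1) / c) * Y s
          ≤ ∫⁻ s in Ioc 0 t, ENNReal.ofReal ((t - s) ^ (ν - 1) / c)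
            * ENNReal.ofReal (∫ q in Ioc 0 t, y q ^ 2) := by
            refine lintegral_mono_ae ((ae_restrict_iff' measurableSet_Ioc).2
              (Filter.Eventually.of_forall fun s hs => ?_))
            refine mul_le_mul_right ?_ _
            rw [← hytot, hYdef]
            exact lintegral_mono' (hrestr s hs.2) le_rfl
        _ = (∫⁻ s in Ioc 0 t, ENNReal.ofReal ((t - s) ^ (ν - 1) / c))
            * ENNReal.ofReal (∫ q in Ioc 0 t, y q ^ 2) := by
            refine lintegral_mul_const'' _ ?_
            apply Measurable.aemeasurable
            apply Measurable.ennreal_ofReal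
            fun_prop
        _ = ENNReal.ofReal (t ^ ν / (ν * c))
            * ENNReal.ofReal (∫ q in Ioc 0 t, y q ^ 2) := by
            congr 1
            simpa using lint2c (a := 0) (b := t) hν0 hc ht.le
    exact ne_top_of_le_ne_top
      (ENNReal.mul_ne_top ENNReal.ofReal_ne_top ENNReal.ofReal_ne_top) hb
  -- the primitive of y^2 is continuous hence measurable
  have hprim : AEStronglyMeasurable (fun s => ∫ q in (0:ℝ)..s, y q ^ 2)
      (volume.restrict (Ioc 0 t)) := by
    have hIcc : IntegrableOn (fun q => y q ^ 2) (Icc 0 t) :=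
      (integrableOn_Icc_iff_integrableOn_Ioc).2 hint
    have hcont := intervalIntegral.continuousOn_primitive hIcc
    refine ((hcont.aestronglyMeasurable measurableSet_Icc).mono_measure
      (Measure.restrict_mono Ioc_subset_Icc_self le_rfl)).congr ?_
    refine (ae_restrict_iff' measurableSet_Ioc).2 (Filter.Eventually.of_forall fun s hs => ?_)
    exact (intervalIntegral.integral_of_le hs.1.le).symm
  have hinnerY : ∀ s ∈ Ioc 0 t, ENNReal.ofReal (∫ q in (0:ℝ)..s, y q ^ 2) = Y s := by
    intro s hs
    rw [intervalIntegral.integral_of_le hs.1.le,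
      ofReal_integral_eq_lintegral_ofReal (hint.mono_set (Ioc_subset_Ioc le_rfl hs.2))
        (Filter.Eventually.of_forall fun q => sq_nonneg _)]
    refine lintegral_congr_ae ((ae_restrict_iff' measurableSet_Ioc).2
      (Filter.Eventually.of_forall fun q hq => ?_))
    simp [hgdef, ENNReal.ofReal_pow (hy q ⟨hq.1, hq.2.trans hs.2⟩)]
  have hRHSeq : (∫ s in (0:ℝ)..t, ((t - s) ^ (ν - 1) / c) * ∫ q in (0:ℝ)..s, y q ^ 2)
      = H.toReal := by
    rw [intervalIntegral.integral_of_le ht.le]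
    rw [integral_eq_lintegral_of_nonneg_ae
      ((ae_restrict_iff' measurableSet_Ioc).2 (Filter.Eventually.of_forall fun s hs =>
        hRHS_inner_nonneg s ⟨hs.1.le, hs.2⟩))
      (((by fun_prop : Measurable fun s => (t - s) ^ (ν - 1) / c).aestronglyMeasurable).mul
        hprim)]
    congr 1
    refine setLIntegral_congr_fun measurableSet_Ioc (fun s hs => ?_)
    have h0 : 0 ≤ (t - s) ^ (ν - 1) / c :=
      div_nonneg (Real.rpow_nonneg (by linarith [hs.2]) _) hc.le
    show ENNReal.ofReal (((t - s) ^ (ν - 1) / c) * ∫ q in (0:ℝ)..s, y q ^ 2)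
        = ENNReal.ofReal ((t - s) ^ (ν - 1) / c) * Y s
    rw [ENNReal.ofReal_mul h0, hinnerY s hs]
  -- LHS
  have hLHSeq : (∫ s in (0:ℝ)..t, (∫ q in (0:ℝ)..s, ((s - q) ^ (ν - 1) / c) * y q) ^ 2)
      = (∫⁻ s in Ioc 0 t,
          ENNReal.ofReal ((∫ q in (0:ℝ)..s, ((s - q) ^ (ν - 1) / c) * y q) ^ 2)).toReal := by
    rw [intervalIntegral.integral_of_le ht.le]
    exact integral_eq_lintegral_of_nonneg_ae
      (Filter.Eventually.of_forall fun s => sq_nonneg _) hLint.1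
  have hchain1 : ∫⁻ s in Ioc 0 t,
      ENNReal.ofReal ((∫ q in (0:ℝ)..s, ((s - q) ^ (ν - 1) / c) * y q) ^ 2)
      ≤ ∫⁻ s in Ioc 0 t, F s ^ 2 := by
    refine lintegral_mono_ae ((ae_restrict_iff' measurableSet_Ioc).2
      (Filter.Eventually.of_forall fun s hs => ?_))
    rw [hB s hs, ENNReal.ofReal_pow ENNReal.toReal_nonneg]
    exact pow_le_pow_left' ENNReal.ofReal_toReal_le 2
  have hchain2 : ∫⁻ s in Ioc 0 t, F s ^ 2
      ≤ ENNReal.ofReal w * ∫⁻ s in Ioc 0 t, G s := by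
    rw [← lintegral_const_mul' _ _ ENNReal.ofReal_ne_top]
    exact lintegral_mono_ae ((ae_restrict_iff' measurableSet_Ioc).2
      (Filter.Eventually.of_forall fun s hs => hCS s hs))
  have hfinal : ∫⁻ s in Ioc 0 t,
      ENNReal.ofReal ((∫ q in (0:ℝ)..s, ((s - q) ^ (ν - 1) / c) * y q) ^ 2)
      ≤ ENNReal.ofReal w * H := by
    refine le_trans hchain1 (le_trans hchain2 ?_)
    rw [hswap1, ← hswap2]
  rw [hLHSeq, hGamma, hRHSeq, ← hwdef]
  calc _ ≤ (ENNReal.ofReal w * H).toReal :=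
        ENNReal.toReal_mono (ENNReal.mul_ne_top ENNReal.ofReal_ne_top hH) hfinal
    _ = w * H.toReal := by rw [ENNReal.toReal_mul, ENNReal.toReal_ofReal hw0]
end

section
/- Let 0 < α < 1 and 0 < ν < 1. There exists a constant C, depending only on α and ν, such that for every τ > 0, setting t_i = i τ, and for every integer n ≥ 3: Σ_{j=3}^n ( Σ_{i=1}^{j−2} t_i^{ν−2} (t_{j−1} − t_i)^{α−1} )² ≤ C τ^{2ν−4} Σ_{i=1}^{n−2} t_i^{2α−2}. -/
open Set

section Aux
open Real Finset

lemma bern {β t : ℝ} (hβ0 : 0 ≤ β) (hβ1 : β ≤ 1) (ht : 0 ≤ t) :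
    t ^ β ≤ β * t + (1 - β) := by
  have := Real.geom_mean_le_arith_mean2_weighted hβ0 (by linarith : (0:ℝ) ≤ 1 - β)
    ht (zero_le_one) (by ring)
  simpa using this

-- key step: (m+1)^(α-1) * α ≤ (m+1)^α - m^α
lemma step1 {α : ℝ} (hα0 : 0 < α) (hα1 : α ≤ 1) (m : ℕ) :
    ((m:ℝ)+1) ^ (α-1) * α ≤ ((m:ℝ)+1) ^ α - (m:ℝ) ^ α := by
  set x : ℝ := (m:ℝ) with hx
  have hx0 : 0 ≤ x := Nat.cast_nonneg m
  set y : ℝ := x + 1 with hy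
  have hy0 : (0:ℝ) < y := by positivity
  have h1 : (x/y) ^ α ≤ α * (x/y) + (1-α) := bern hα0.le hα1 (by positivity)
  have h2 : (x/y) ^ α = x ^ α / y ^ α := Real.div_rpow hx0 hy0.le α
  have h3 : y ^ (α - 1) = y ^ α / y := Real.rpow_sub_one hy0.ne' α
  have h4 : (0:ℝ) < y ^ α := Real.rpow_pos_of_pos hy0 α
  rw [h2] at h1
  rw [h3]
  have h5 : x ^ α ≤ (α * (x/y) + (1-α)) * y ^ α := by
    rw [div_le_iff₀ h4] at h1; exact h1
  have hyne : y ≠ 0 := hy0.ne'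
  have : (α * (x/y) + (1-α)) * y ^ α = α * x * (y^α / y) + (1-α) * y ^ α := by
    field_simp
  rw [this] at h5
  have h6 : y ^ α = y * (y ^ α / y) := by field_simp
  nlinarith [h4, div_pos h4 hy0]

lemma sumA {α : ℝ} (hα0 : 0 < α) (hα1 : α ≤ 1) (m : ℕ) :
    ∑ k ∈ Finset.Icc 1 m, (k:ℝ) ^ (α-1) ≤ (m:ℝ) ^ α / α := by
  induction m with
  | zero => simp [Real.zero_rpow hα0.ne']
  | succ m ih =>
    rw [Finset.sum_Icc_succ_top (Nat.one_le_iff_ne_zero.mpr (Nat.succ_ne_zero m))]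
    have h := step1 hα0 hα1 m
    have : ((m:ℝ)+1) ^ (α-1) ≤ (((m:ℝ)+1) ^ α - (m:ℝ) ^ α)/α := by
      rw [le_div_iff₀ hα0]; linarith
    push_cast
    have h2 : (m:ℝ) ^ α / α + (((m:ℝ)+1) ^ α - (m:ℝ) ^ α)/α = ((m:ℝ)+1)^α / α := by ring
    linarith [ih]

-- step for nu sum: for 1 ≤ m, (1-ν)*(m+1)^(ν-2) + (m+1)^(ν-1) ≤ m^(ν-1)
lemma step2 {ν : ℝ} (hν0 : 0 < ν) (hν1 : ν < 1) {m : ℕ} (hm : 1 ≤ m) :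
    (1-ν) * ((m:ℝ)+1) ^ (ν-2) + ((m:ℝ)+1) ^ (ν-1) ≤ (m:ℝ) ^ (ν-1) := by
  set x : ℝ := (m:ℝ) with hxd
  have hx1 : (1:ℝ) ≤ x := by rw [hxd]; exact_mod_cast hm
  have hx0 : (0:ℝ) < x := by linarith
  set y : ℝ := x + 1 with hyd
  have hy0 : (0:ℝ) < y := by positivity
  set β : ℝ := 1 - ν with hβd
  have hβ0 : 0 < β := by simp [hβd]; linarith
  have h1 : (x/y) ^ β ≤ β * (x/y) + (1-β) := bern hβ0.le (by simp [hβd]; linarith) (by positivity)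
  set A : ℝ := x ^ β with hAd
  set B : ℝ := y ^ β with hBd
  have hA0 : 0 < A := Real.rpow_pos_of_pos hx0 β
  have hB0 : 0 < B := Real.rpow_pos_of_pos hy0 β
  have h2 : (x/y) ^ β = A / B := Real.div_rpow hx0.le hy0.le β
  have hxinv : x ^ (ν-1) = A⁻¹ := by
    rw [hAd, ← Real.rpow_neg hx0.le]; ring_nf; rw [hβd]; ring_nf
  have hyinv : y ^ (ν-1) = B⁻¹ := by
    rw [hBd, ← Real.rpow_neg hy0.le]; ring_nf; rw [hβd]; ring_nf
  have hy2 : y ^ (ν-2) = B⁻¹ / y := by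
    have : (ν - 2 : ℝ) = (ν - 1) - 1 := by ring
    rw [this, Real.rpow_sub_one hy0.ne', hyinv]
  rw [h2] at h1
  have hxy : x / y = 1 - 1/y := by field_simp; rw [hyd]; ring
  rw [hxy] at h1
  have h3 : A/B ≤ 1 - β/y := by
    have : β * (1 - 1/y) + (1-β) = 1 - β/y := by ring
    linarith [h1, this.symm ▸ h1]
  have h4 : A/B * (1 + β/y) ≤ 1 := by
    nlinarith [sq_nonneg (β/y), div_pos hβ0 hy0, (div_pos hA0 hB0)]
  have h6 : A * (1 + β/y) ≤ B := by
    rw [div_mul_eq_mul_div, div_le_one hB0] at h4; linarith [h4]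
  have h5 : (1 + β/y) / B ≤ A⁻¹ := by
    rw [div_le_iff₀ hB0, inv_mul_eq_div, le_div_iff₀ hA0]
    nlinarith [h6]
  calc (1-ν) * (y^(ν-2)) + y^(ν-1) = (1 + β/y)/B := by
        rw [hβd, hy2, hyinv]; field_simp; ring
  _ ≤ A⁻¹ := h5
  _ = x^(ν-1) := hxinv.symm

lemma sumB {ν : ℝ} (hν0 : 0 < ν) (hν1 : ν < 1) (m : ℕ) :
    ∑ k ∈ Finset.Icc 1 m, (k:ℝ) ^ (ν-2) ≤ 1 + 1/(1-ν) := by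
  have key : ∀ m : ℕ, 1 ≤ m → ∑ k ∈ Finset.Icc 1 m, (k:ℝ) ^ (ν-2)
      ≤ 1 + (1 - (m:ℝ)^(ν-1))/(1-ν) := by
    intro m hm
    induction m, hm using Nat.le_induction with
    | base => simp
    | succ m hm ih =>
      rw [Finset.sum_Icc_succ_top (by omega : 1 ≤ m + 1)]
      have h := step2 hν0 hν1 hm
      have hν' : (0:ℝ) < 1 - ν := by linarith
      have : ((m:ℝ)+1) ^ (ν-2) ≤ ((m:ℝ)^(ν-1) - ((m:ℝ)+1)^(ν-1))/(1-ν) := by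
        rw [le_div_iff₀ hν']; linarith
      push_cast
      have h2 : (1 - (m:ℝ)^(ν-1))/(1-ν) + ((m:ℝ)^(ν-1) - ((m:ℝ)+1)^(ν-1))/(1-ν)
          = (1 - ((m:ℝ)+1)^(ν-1))/(1-ν) := by ring
      linarith [ih]
  rcases Nat.eq_zero_or_pos m with h | h
  · have hν' : (0:ℝ) < 1 - ν := by linarith
    simp [h]; positivity
  · have := key m h
    have hν' : (0:ℝ) < 1 - ν := by linarith
    have hp : (0:ℝ) ≤ (m:ℝ)^(ν-1) := Real.rpow_nonneg (Nat.cast_nonneg m) _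
    have h2 : (1 - (m:ℝ)^(ν-1))/(1-ν) ≤ 1/(1-ν) := by
      gcongr <;> linarith
    linarith

lemma reflectSum (α : ℝ) (j : ℕ) (hj : 3 ≤ j) :
    ∑ i ∈ Finset.Icc 1 (j-2), ((j:ℝ)-1-(i:ℝ))^(α-1)
      = ∑ k ∈ Finset.Icc 1 (j-2), (k:ℝ)^(α-1) := by
  apply Finset.sum_nbij' (fun i => j - 1 - i) (fun k => j - 1 - k)
  · intro a ha; simp only [Finset.mem_Icc] at *; omega
  · intro a ha; simp only [Finset.mem_Icc] at *; omega
  · intro a ha; simp only [Finset.mem_Icc] at *; omega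
  · intro a ha; simp only [Finset.mem_Icc] at *; omega
  · intro a ha
    simp only [Finset.mem_Icc] at ha
    congr 1
    have : (↑(j - 1 - a) : ℝ) = (j:ℝ) - 1 - a := by
      push_cast [Nat.cast_sub (by omega : a ≤ j - 1), Nat.cast_sub (by omega : 1 ≤ j)]
      ring
    rw [this]

lemma bigS {α ν : ℝ} (hα0 : 0 < α) (hα1 : α < 1) (hν0 : 0 < ν) (hν1 : ν < 1)
    (j : ℕ) (hj : 3 ≤ j) :
    ∑ i ∈ Finset.Icc 1 (j-2), (i:ℝ)^(ν-2) * ((j:ℝ)-1-(i:ℝ))^(α-1)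
      ≤ (4/α + 2*(1+1/(1-ν))) * ((j:ℝ)-1)^(α-1) := by
  set M : ℝ := (j:ℝ) - 1 with hMd
  have hM : (2:ℝ) ≤ M := by
    have : (3:ℝ) ≤ (j:ℝ) := by exact_mod_cast hj
    simp [hMd]; linarith
  have hM0 : (0:ℝ) < M := by linarith
  have hM2 : (0:ℝ) < M/2 := by linarith
  have split : ∀ i ∈ Finset.Icc 1 (j-2), (i:ℝ)^(ν-2) * (M-(i:ℝ))^(α-1)
      ≤ (M/2)^(ν-2)*(M-(i:ℝ))^(α-1) + (M/2)^(α-1)*(i:ℝ)^(ν-2) := by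
    intro i hi
    simp only [Finset.mem_Icc] at hi
    have hi1 : (1:ℝ) ≤ (i:ℝ) := by exact_mod_cast hi.1
    have hi2 : (i:ℝ) ≤ (j:ℝ) - 2 := by
      have : (i:ℝ) ≤ ((j:ℝ)) - 2 := by
        have := hi.2
        have : (i:ℝ) ≤ ((j-2:ℕ):ℝ) := by exact_mod_cast this
        rwa [Nat.cast_sub (by omega : 2 ≤ j)] at this
        <;> norm_num
      exact this
    have hMi : (1:ℝ) ≤ M - i := by simp [hMd]; linarith
    have hMi0 : (0:ℝ) < M - i := by linarith
    rcases le_or_gt (M/2) (i:ℝ) with h | h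
    · have h1 : (i:ℝ)^(ν-2) ≤ (M/2)^(ν-2) :=
        Real.rpow_le_rpow_of_nonpos hM2 h (by linarith)
      have h2 : (0:ℝ) ≤ (M-(i:ℝ))^(α-1) := Real.rpow_nonneg hMi0.le _
      nlinarith [Real.rpow_nonneg (le_of_lt hM2) (α-1), Real.rpow_nonneg (by linarith : (0:ℝ) ≤ (i:ℝ)) (ν-2)]
    · have h' : M/2 ≤ M - i := by linarith
      have h1 : (M-(i:ℝ))^(α-1) ≤ (M/2)^(α-1) :=
        Real.rpow_le_rpow_of_nonpos hM2 h' (by linarith)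
      have h2 : (0:ℝ) ≤ (i:ℝ)^(ν-2) := Real.rpow_nonneg (by linarith) _
      nlinarith [Real.rpow_nonneg (le_of_lt hM2) (ν-2), Real.rpow_nonneg hMi0.le (α-1)]
  calc ∑ i ∈ Finset.Icc 1 (j-2), (i:ℝ)^(ν-2) * (M-(i:ℝ))^(α-1)
      ≤ ∑ i ∈ Finset.Icc 1 (j-2), ((M/2)^(ν-2)*(M-(i:ℝ))^(α-1) + (M/2)^(α-1)*(i:ℝ)^(ν-2)) :=
        Finset.sum_le_sum split
    _ = (M/2)^(ν-2) * (∑ i ∈ Finset.Icc 1 (j-2), (M-(i:ℝ))^(α-1))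
        + (M/2)^(α-1) * (∑ i ∈ Finset.Icc 1 (j-2), (i:ℝ)^(ν-2)) := by
        rw [Finset.sum_add_distrib, Finset.mul_sum, Finset.mul_sum]
    _ ≤ (M/2)^(ν-2) * (M^α/α) + (M/2)^(α-1) * (1+1/(1-ν)) := by
        have b1 : ∑ i ∈ Finset.Icc 1 (j-2), (M-(i:ℝ))^(α-1) ≤ M^α/α := by
          have e : ∑ i ∈ Finset.Icc 1 (j-2), (M-(i:ℝ))^(α-1)
              = ∑ i ∈ Finset.Icc 1 (j-2), ((j:ℝ)-1-(i:ℝ))^(α-1) := by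
            apply Finset.sum_congr rfl; intro i _; rw [hMd]
          rw [e, reflectSum α j hj]
          calc ∑ k ∈ Finset.Icc 1 (j-2), (k:ℝ)^(α-1) ≤ ((j-2:ℕ):ℝ)^α/α := sumA hα0 hα1.le _
          _ ≤ M^α/α := by
              have hle : ((j-2:ℕ):ℝ) ≤ M := by
                rw [hMd, Nat.cast_sub (by omega : 2 ≤ j)]; push_cast; linarith
              have h := Real.rpow_le_rpow (Nat.cast_nonneg _) hle hα0.le
              gcongr
        have b2 : ∑ i ∈ Finset.Icc 1 (j-2), (i:ℝ)^(ν-2) ≤ 1+1/(1-ν) := sumB hν0 hν1 _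
        exact add_le_add
          (mul_le_mul_of_nonneg_left b1 (Real.rpow_nonneg hM2.le _))
          (mul_le_mul_of_nonneg_left b2 (Real.rpow_nonneg hM2.le _))
    _ ≤ (4 * M^(ν-2)) * (M^α/α) + (2 * M^(α-1)) * (1+1/(1-ν)) := by
        have e24 : ((2:ℝ))^((2:ℝ)) = 4 := by rw [Real.rpow_two]; norm_num
        have e21 : ((2:ℝ))^((1:ℝ)) = 2 := Real.rpow_one 2
        have hc1 : (M/2)^(ν-2) ≤ 4 * M^(ν-2) := by
          have e1 : (M/2)^(ν-2) = M^(ν-2) * (2:ℝ)^(2-ν) := by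
            rw [Real.div_rpow hM0.le (by norm_num : (0:ℝ) ≤ 2), div_eq_mul_inv,
              ← Real.rpow_neg (by norm_num : (0:ℝ) ≤ 2)]
            ring_nf
          have e2 : (2:ℝ)^(2-ν) ≤ 4 := by
            calc (2:ℝ)^(2-ν) ≤ (2:ℝ)^(2:ℝ) :=
                  Real.rpow_le_rpow_of_exponent_le one_le_two (by linarith)
            _ = 4 := e24
          rw [e1]
          have := Real.rpow_nonneg hM0.le (ν-2)
          nlinarith
        have hc2 : (M/2)^(α-1) ≤ 2 * M^(α-1) := by
          have e1 : (M/2)^(α-1) = M^(α-1) * (2:ℝ)^(1-α) := by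
            rw [Real.div_rpow hM0.le (by norm_num : (0:ℝ) ≤ 2), div_eq_mul_inv,
              ← Real.rpow_neg (by norm_num : (0:ℝ) ≤ 2)]
            ring_nf
          have e2 : (2:ℝ)^(1-α) ≤ 2 := by
            calc (2:ℝ)^(1-α) ≤ (2:ℝ)^(1:ℝ) :=
                  Real.rpow_le_rpow_of_exponent_le one_le_two (by linarith)
            _ = 2 := e21
          rw [e1]
          have := Real.rpow_nonneg hM0.le (α-1)
          nlinarith
        have hn1 : (0:ℝ) ≤ M^α/α := by positivity
        have hn2 : (0:ℝ) ≤ 1+1/(1-ν) := by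
          have : (0:ℝ) < 1 - ν := by linarith
          positivity
        nlinarith
    _ ≤ (4/α + 2*(1+1/(1-ν))) * M^(α-1) := by
        have key : M^(ν-2) * M^α ≤ M^(α-1) := by
          rw [← Real.rpow_add hM0]
          exact Real.rpow_le_rpow_of_exponent_le (by linarith) (by linarith)
        have hn2 : (0:ℝ) ≤ 1+1/(1-ν) := by
          have : (0:ℝ) < 1 - ν := by linarith
          positivity
        have h4 : 4 * M^(ν-2) * (M^α/α) = (4/α) * (M^(ν-2) * M^α) := by ring
        have hma : (0:ℝ) ≤ M^(α-1) := Real.rpow_nonneg hM0.le _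
        nlinarith [div_pos (by norm_num : (0:ℝ)<4) hα0]

lemma shiftSum {α : ℝ} (hα1 : α < 1) (n : ℕ) :
    ∑ j ∈ Finset.Icc 3 n, ((j:ℝ)-1)^(2*α-2) ≤ ∑ i ∈ Finset.Icc 1 (n-2), (i:ℝ)^(2*α-2) := by
  have step : ∑ j ∈ Finset.Icc 3 n, ((j:ℝ)-1)^(2*α-2)
      ≤ ∑ j ∈ Finset.Icc 3 n, ((j-2:ℕ):ℝ)^(2*α-2) := by
    apply Finset.sum_le_sum
    intro j hj
    simp only [Finset.mem_Icc] at hj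
    have h3 : (3:ℝ) ≤ (j:ℝ) := by exact_mod_cast hj.1
    have e : ((j-2:ℕ):ℝ) = (j:ℝ) - 2 := by
      rw [Nat.cast_sub (by omega : 2 ≤ j)]; norm_num
    rw [e]
    exact Real.rpow_le_rpow_of_nonpos (by linarith) (by linarith) (by linarith)
  refine step.trans (le_of_eq ?_)
  apply Finset.sum_nbij' (fun j => j - 2) (fun i => i + 2)
  · intro a ha; simp only [Finset.mem_Icc] at *; omega
  · intro a ha; simp only [Finset.mem_Icc] at *; omega
  · intro a ha; simp only [Finset.mem_Icc] at *; omega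
  · intro a ha; simp only [Finset.mem_Icc] at *; omega
  · intro a ha; rfl


end Aux

/-- Lemma 4.1.
For `0 < α < 1` and `0 < ν < 1`, there is a constant `C = C(α,ν)` such that for every
uniform mesh `tᵢ = iτ` (`τ > 0`) and every `n ≥ 3`,
`∑_{j=3}^n (∑_{i=1}^{j-2} tᵢ^{ν-2} (t_{j-1} - tᵢ)^{α-1})² ≤ C τ^{2ν-4} ∑_{i=1}^{n-2} tᵢ^{2α-2}`. -/
theorem stmt_5 (α ν : ℝ) (hα0 : 0 < α) (hα1 : α < 1) (hν0 : 0 < ν) (hν1 : ν < 1) :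
    ∃ C : ℝ, 0 < C ∧ ∀ τ : ℝ, 0 < τ → ∀ n : ℕ, 3 ≤ n →
      ∑ j ∈ Finset.Icc 3 n,
        (∑ i ∈ Finset.Icc 1 (j - 2),
          ((i : ℝ) * τ) ^ (ν - 2) * (((j : ℝ) - 1) * τ - (i : ℝ) * τ) ^ (α - 1)) ^ 2
      ≤ C * τ ^ (2 * ν - 4) * ∑ i ∈ Finset.Icc 1 (n - 2), ((i : ℝ) * τ) ^ (2 * α - 2) := by
  have hν' : (0:ℝ) < 1 - ν := by linarith
  set K : ℝ := 4/α + 2*(1+1/(1-ν)) with hKd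
  have hK : 0 < K := by rw [hKd]; positivity
  refine ⟨K^2, by positivity, ?_⟩
  intro τ hτ n hn
  set P : ℝ := τ^(ν-2) * τ^(α-1) with hPd
  have hP0 : 0 < P := by rw [hPd]; positivity
  -- rewrite the inner sum
  have inner_eq : ∀ j ∈ Finset.Icc 3 n,
      ∑ i ∈ Finset.Icc 1 (j - 2),
        ((i : ℝ) * τ) ^ (ν - 2) * (((j : ℝ) - 1) * τ - (i : ℝ) * τ) ^ (α - 1)
      = P * ∑ i ∈ Finset.Icc 1 (j - 2), (i:ℝ)^(ν-2) * ((j:ℝ)-1-(i:ℝ))^(α-1) := by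
    intro j hj
    simp only [Finset.mem_Icc] at hj
    rw [Finset.mul_sum]
    apply Finset.sum_congr rfl
    intro i hi
    simp only [Finset.mem_Icc] at hi
    have hi1 : (1:ℝ) ≤ (i:ℝ) := by exact_mod_cast hi.1
    have hij : (i:ℝ) ≤ (j:ℝ) - 2 := by
      have : (i:ℝ) ≤ ((j-2:ℕ):ℝ) := by exact_mod_cast hi.2
      rwa [Nat.cast_sub (by omega : 2 ≤ j)] at this
    have h1 : ((i:ℝ)*τ)^(ν-2) = (i:ℝ)^(ν-2) * τ^(ν-2) :=
      Real.mul_rpow (by linarith) hτ.le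
    have e2 : ((j:ℝ)-1)*τ - (i:ℝ)*τ = ((j:ℝ)-1-(i:ℝ))*τ := by ring
    have h2 : (((j:ℝ)-1-(i:ℝ))*τ)^(α-1) = ((j:ℝ)-1-(i:ℝ))^(α-1) * τ^(α-1) :=
      Real.mul_rpow (by linarith) hτ.le
    rw [h1, e2, h2, hPd]; ring
  rw [Finset.sum_congr rfl fun j hj => by rw [inner_eq j hj]]
  have key : ∑ j ∈ Finset.Icc 3 n,
      (P * ∑ i ∈ Finset.Icc 1 (j - 2), (i:ℝ)^(ν-2) * ((j:ℝ)-1-(i:ℝ))^(α-1))^2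
      ≤ P^2 * K^2 * ∑ j ∈ Finset.Icc 3 n, ((j:ℝ)-1)^(2*α-2) := by
    rw [Finset.mul_sum]
    apply Finset.sum_le_sum
    intro j hj
    simp only [Finset.mem_Icc] at hj
    have hS := bigS hα0 hα1 hν0 hν1 j hj.1
    have hS0 : 0 ≤ ∑ i ∈ Finset.Icc 1 (j - 2), (i:ℝ)^(ν-2) * ((j:ℝ)-1-(i:ℝ))^(α-1) := by
      apply Finset.sum_nonneg
      intro i hi
      simp only [Finset.mem_Icc] at hi
      have hi1 : (1:ℝ) ≤ (i:ℝ) := by exact_mod_cast hi.1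
      have hij : (i:ℝ) ≤ ((j-2:ℕ):ℝ) := by exact_mod_cast hi.2
      rw [Nat.cast_sub (by omega : 2 ≤ j)] at hij
      have : (0:ℝ) ≤ (j:ℝ)-1-(i:ℝ) := by push_cast at hij ⊢; linarith
      positivity
    have hM0 : (0:ℝ) < (j:ℝ) - 1 := by
      have : (3:ℝ) ≤ (j:ℝ) := by exact_mod_cast hj.1
      linarith
    have hsq : (((j:ℝ)-1)^(α-1))^2 = ((j:ℝ)-1)^(2*α-2) := by
      rw [sq, ← Real.rpow_add hM0]; ring_nf
    calc (P * ∑ i ∈ Finset.Icc 1 (j - 2), (i:ℝ)^(ν-2) * ((j:ℝ)-1-(i:ℝ))^(α-1))^2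
        = P^2 * (∑ i ∈ Finset.Icc 1 (j - 2), (i:ℝ)^(ν-2) * ((j:ℝ)-1-(i:ℝ))^(α-1))^2 := by ring
      _ ≤ P^2 * (K * ((j:ℝ)-1)^(α-1))^2 := by
          apply mul_le_mul_of_nonneg_left _ (sq_nonneg P)
          exact pow_le_pow_left₀ hS0 hS 2
      _ = P^2 * K^2 * ((j:ℝ)-1)^(2*α-2) := by rw [← hsq]; ring
  have key2 := shiftSum hα1 n
  have hrhs : K^2 * τ ^ (2*ν-4) * ∑ i ∈ Finset.Icc 1 (n - 2), ((i : ℝ) * τ) ^ (2*α-2)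
      = P^2 * K^2 * ∑ i ∈ Finset.Icc 1 (n - 2), (i:ℝ)^(2*α-2) := by
    have hPsq : P^2 = τ^(2*ν-4) * τ^(2*α-2) := by
      rw [hPd, mul_pow, sq, sq, ← Real.rpow_add hτ, ← Real.rpow_add hτ, ← Real.rpow_add hτ,
        ← Real.rpow_add hτ]
      congr 1; ring
    calc K^2 * τ ^ (2*ν-4) * ∑ i ∈ Finset.Icc 1 (n - 2), ((i : ℝ) * τ) ^ (2*α-2)
        = ∑ i ∈ Finset.Icc 1 (n - 2), K^2 * τ ^ (2*ν-4) * ((i : ℝ) * τ) ^ (2*α-2) :=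
          Finset.mul_sum _ _ _
      _ = ∑ i ∈ Finset.Icc 1 (n - 2), P^2 * K^2 * (i:ℝ)^(2*α-2) := by
          apply Finset.sum_congr rfl
          intro i _
          rw [Real.mul_rpow (Nat.cast_nonneg i) hτ.le, hPsq]; ring
      _ = P^2 * K^2 * ∑ i ∈ Finset.Icc 1 (n - 2), (i:ℝ)^(2*α-2) := (Finset.mul_sum _ _ _).symm
  rw [hrhs]
  calc ∑ j ∈ Finset.Icc 3 n,
      (P * ∑ i ∈ Finset.Icc 1 (j - 2), (i:ℝ)^(ν-2) * ((j:ℝ)-1-(i:ℝ))^(α-1))^2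
      ≤ P^2 * K^2 * ∑ j ∈ Finset.Icc 3 n, ((j:ℝ)-1)^(2*α-2) := key
    _ ≤ P^2 * K^2 * ∑ i ∈ Finset.Icc 1 (n-2), (i:ℝ)^(2*α-2) := by
        apply mul_le_mul_of_nonneg_left key2 (by positivity)
end

section
/- Let 0 < ν < 1, c > 0 and t₁ > 0. Suppose g : [0,t₁] → ℝ is continuous on [0,t₁], twice continuously differentiable on (0,t₁], and satisfies |g″(t)| ≤ c t^{ν−2} for 0 < t ≤ t₁. Let ǧ(t) = ((t₁ − t) g(0) + t g(t₁))/t₁ be the linear interpolant of g at 0 and t₁. Then there exists a constant C, depending only on ν and c, such that |(g − ǧ)′(s)| ≤ C s^{ν−1} for all 0 < s < t₁. -/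
open Set

/-- first-interval interpolation estimate in Theorem 4.2.
Let `0 < ν < 1`, `c > 0`. There is `C = C(ν,c)` such that for every `t₁ > 0` and every
`g` continuous on `[0,t₁]`, twice continuously differentiable on `(0,t₁]` with
`|g''(t)| ≤ c t^{ν-2}`, the linear interpolant `ǧ` of `g` at `0` and `t₁` (whose derivative
is the constant `(g(t₁) - g(0))/t₁`) satisfies `|(g - ǧ)'(s)| ≤ C s^{ν-1}` for `0 < s < t₁`. -/
theorem stmt_6 (ν c : ℝ) (hν0 : 0 < ν) (hν1 : ν < 1) (hc : 0 < c) :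
    ∃ C : ℝ, 0 < C ∧ ∀ t₁ : ℝ, 0 < t₁ → ∀ g g' g'' : ℝ → ℝ,
      ContinuousOn g (Icc 0 t₁) →
      (∀ s ∈ Ioc 0 t₁, HasDerivWithinAt g (g' s) (Ioc 0 t₁) s) →
      (∀ s ∈ Ioc 0 t₁, HasDerivWithinAt g' (g'' s) (Ioc 0 t₁) s) →
      ContinuousOn g'' (Ioc 0 t₁) →
      (∀ s ∈ Ioc 0 t₁, |g'' s| ≤ c * s ^ (ν - 2)) →
      ∀ s ∈ Ioo 0 t₁, |g' s - (g t₁ - g 0) / t₁| ≤ C * s ^ (ν - 1) := by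
  have h1ν : 0 < 1 - ν := by linarith
  set K : ℝ := c / (1 - ν) with hKdef
  have hK : 0 < K := div_pos hc h1ν
  refine ⟨K * (1 + 1 / ν), by positivity, ?_⟩
  intro t₁ ht₁ g g' g'' hgc hg' hg'' hg''c hbound s hs
  obtain ⟨hs0, hst⟩ := hs
  -- interior full derivatives
  have hderiv : ∀ x ∈ Ioo 0 t₁, HasDerivAt g (g' x) x := fun x hx =>
    (hg' x ⟨hx.1, hx.2.le⟩).hasDerivAt (Ioc_mem_nhds hx.1 hx.2)
  have hderiv' : ∀ x ∈ Ioo 0 t₁, HasDerivAt g' (g'' x) x := fun x hx =>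
    (hg'' x ⟨hx.1, hx.2.le⟩).hasDerivAt (Ioc_mem_nhds hx.1 hx.2)
  have hg'cont : ContinuousOn g' (Ioc 0 t₁) := fun x hx =>
    (hg'' x hx).continuousWithinAt
  -- FTC for g'' on [a,b] ⊆ (0,t₁]
  have ftc2 : ∀ a b : ℝ, 0 < a → a ≤ b → b ≤ t₁ →
      g' b - g' a = ∫ t in a..b, g'' t := by
    intro a b ha hab hb
    have hsub : Icc a b ⊆ Ioc 0 t₁ := fun x hx => ⟨lt_of_lt_of_le ha hx.1, hx.2.trans hb⟩
    refine (intervalIntegral.integral_eq_sub_of_hasDeriv_right_of_le hab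
      (hg'cont.mono hsub) (fun x hx => ?_) ?_).symm
    · exact (hderiv' x ⟨ha.trans hx.1, lt_of_lt_of_le hx.2 hb⟩).hasDerivWithinAt
    · exact ContinuousOn.intervalIntegrable (by
        rw [uIcc_of_le hab]; exact hg''c.mono hsub)
  -- key estimate: variation of g'
  have hB : ∀ a b : ℝ, 0 < a → a ≤ b → b ≤ t₁ → |g' b - g' a| ≤ K * a ^ (ν - 1) := by
    intro a b ha hab hb
    have hb0 : 0 < b := ha.trans_le hab
    rw [ftc2 a b ha hab hb]
    have hval : (∫ t in a..b, c * t ^ (ν - 2)) = c * (a ^ (ν - 1) - b ^ (ν - 1)) / (1 - ν) := by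
      rw [intervalIntegral.integral_const_mul, integral_rpow (Or.inr ⟨by intro h; linarith,
        by rw [uIcc_of_le hab]; intro h; exact absurd h.1 (not_le.2 ha)⟩)]
      rw [show ν - 2 + 1 = ν - 1 by ring, mul_div_assoc]
      congr 1
      rw [div_eq_div_iff (sub_ne_zero.2 (by linarith : ν ≠ 1)) (sub_ne_zero.2 (by linarith : (1:ℝ) ≠ ν))]
      ring
    have h1 : |∫ t in a..b, g'' t| ≤ |∫ t in a..b, c * t ^ (ν - 2)| := by
      rw [← Real.norm_eq_abs]
      apply intervalIntegral.norm_integral_le_abs_of_norm_le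
      · refine (MeasureTheory.ae_restrict_iff' measurableSet_uIoc).2
          (Filter.Eventually.of_forall fun t ht => ?_)
        rw [uIoc_of_le hab] at ht
        exact hbound t ⟨ha.trans ht.1, ht.2.trans hb⟩
      · refine ContinuousOn.intervalIntegrable ?_
        rw [uIcc_of_le hab]
        refine ContinuousOn.mul continuousOn_const fun x hx => ?_
        exact (Real.continuousAt_rpow_const x _ (Or.inl (ha.trans_le hx.1).ne')).continuousWithinAt
    have hba : b ^ (ν - 1) ≤ a ^ (ν - 1) :=
      Real.rpow_le_rpow_of_nonpos ha hab (by linarith)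
    have hbp : (0:ℝ) ≤ b ^ (ν - 1) := Real.rpow_nonneg hb0.le _
    have h2 : |c * (a ^ (ν - 1) - b ^ (ν - 1)) / (1 - ν)| ≤ K * a ^ (ν - 1) := by
      rw [abs_of_nonneg (div_nonneg (mul_nonneg hc.le (sub_nonneg.2 hba)) h1ν.le)]
      rw [hKdef, div_mul_eq_mul_div, div_le_div_iff₀ h1ν h1ν]
      nlinarith [mul_nonneg (mul_nonneg hc.le h1ν.le) hbp]
    rw [hval] at h1
    exact h1.trans h2
  -- pointwise bound on |g' s - g' t|
  have hvar : ∀ t ∈ Ioc 0 t₁, |g' s - g' t| ≤ K * (s ^ (ν - 1) + t ^ (ν - 1)) := by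
    intro t ht
    have hsp : (0:ℝ) ≤ s ^ (ν - 1) := Real.rpow_nonneg hs0.le _
    have htp : (0:ℝ) ≤ t ^ (ν - 1) := Real.rpow_nonneg ht.1.le _
    rcases le_total t s with h | h
    · have h1 := hB t s ht.1 h hst.le
      nlinarith
    · have h1 := hB s t hs0 h ht.2
      rw [abs_sub_comm]
      nlinarith
  -- integrability of g'
  have hmaj : IntervalIntegrable (fun t : ℝ => |g' t₁| + K * t ^ (ν - 1))
      MeasureTheory.volume 0 t₁ := by
    apply IntervalIntegrable.add intervalIntegrable_const
    exact (intervalIntegral.intervalIntegrable_rpow' (by linarith)).const_mul K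
  have hg'int : IntervalIntegrable g' MeasureTheory.volume 0 t₁ := by
    rw [intervalIntegrable_iff_integrableOn_Ioc_of_le ht₁.le]
    have hbd := (intervalIntegrable_iff_integrableOn_Ioc_of_le ht₁.le).1 hmaj
    refine MeasureTheory.Integrable.mono' hbd
      (hg'cont.aestronglyMeasurable measurableSet_Ioc) ?_
    refine (MeasureTheory.ae_restrict_iff' measurableSet_Ioc).2
      (Filter.Eventually.of_forall fun t ht => ?_)
    have h1 := hB t t₁ ht.1 ht.2 le_rfl
    have h2 : |g' t| - |g' t₁| ≤ |g' t₁ - g' t| := by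
      rw [abs_sub_comm]; exact abs_sub_abs_le_abs_sub _ _
    rw [Real.norm_eq_abs]
    linarith
  -- FTC for g on [0, t₁]
  have ftc1 : g t₁ - g 0 = ∫ t in (0:ℝ)..t₁, g' t :=
    (intervalIntegral.integral_eq_sub_of_hasDeriv_right_of_le ht₁.le hgc
      (fun x hx => (hderiv x hx).hasDerivWithinAt) hg'int).symm
  -- main computation
  have key : g' s * t₁ - (g t₁ - g 0) = ∫ t in (0:ℝ)..t₁, (g' s - g' t) := by
    rw [ftc1, intervalIntegral.integral_sub intervalIntegrable_const hg'int,
      intervalIntegral.integral_const, smul_eq_mul]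
    ring
  have hrint : IntervalIntegrable (fun t : ℝ => K * (s ^ (ν - 1) + t ^ (ν - 1)))
      MeasureTheory.volume 0 t₁ := by
    apply IntervalIntegrable.const_mul
    exact IntervalIntegrable.add intervalIntegrable_const
      (intervalIntegral.intervalIntegrable_rpow' (by linarith))
  have hb2 : (∫ t in (0:ℝ)..t₁, K * (s ^ (ν - 1) + t ^ (ν - 1)))
      = K * (s ^ (ν - 1) * t₁ + t₁ ^ ν / ν) := by
    rw [intervalIntegral.integral_const_mul]
    congr 1
    rw [intervalIntegral.integral_add intervalIntegrable_const
      (intervalIntegral.intervalIntegrable_rpow' (by linarith)),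
      intervalIntegral.integral_const, integral_rpow (Or.inl (by linarith)), smul_eq_mul,
      show ν - 1 + 1 = ν by ring, Real.zero_rpow hν0.ne']
    ring
  have hbnd : |∫ t in (0:ℝ)..t₁, (g' s - g' t)| ≤ K * (s ^ (ν - 1) * t₁ + t₁ ^ ν / ν) := by
    have hae : ∀ᵐ t ∂MeasureTheory.volume.restrict (Set.uIoc (0:ℝ) t₁),
        ‖g' s - g' t‖ ≤ K * (s ^ (ν - 1) + t ^ (ν - 1)) := by
      refine (MeasureTheory.ae_restrict_iff' measurableSet_uIoc).2
        (Filter.Eventually.of_forall fun t ht => ?_)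
      rw [uIoc_of_le ht₁.le] at ht
      exact hvar t ht
    have h1 := intervalIntegral.norm_integral_le_abs_of_norm_le hae hrint
    rw [Real.norm_eq_abs, hb2] at h1
    refine h1.trans ?_
    have hsp : (0:ℝ) ≤ s ^ (ν - 1) := Real.rpow_nonneg hs0.le _
    have htν : (0:ℝ) ≤ t₁ ^ ν := Real.rpow_nonneg ht₁.le _
    rw [abs_of_nonneg (by positivity)]
  -- conclude
  have ht₁pow : t₁ ^ (ν - 1) ≤ s ^ (ν - 1) :=
    Real.rpow_le_rpow_of_nonpos hs0 hst.le (by linarith)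
  have e1 : t₁ ^ ν = t₁ ^ (ν - 1) * t₁ := by
    rw [show t₁ ^ ν = t₁ ^ (ν - 1 + 1) by norm_num, Real.rpow_add ht₁, Real.rpow_one]
  have h5 : t₁ ^ ν ≤ s ^ (ν - 1) * t₁ := by
    rw [e1]; exact mul_le_mul_of_nonneg_right ht₁pow ht₁.le
  have main : |g' s * t₁ - (g t₁ - g 0)| ≤ K * (1 + 1 / ν) * s ^ (ν - 1) * t₁ := by
    rw [key]
    refine hbnd.trans ?_
    have h6 : t₁ ^ ν / ν ≤ s ^ (ν - 1) * t₁ / ν := (div_le_div_iff_of_pos_right hν0).2 h5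
    calc K * (s ^ (ν - 1) * t₁ + t₁ ^ ν / ν)
        ≤ K * (s ^ (ν - 1) * t₁ + s ^ (ν - 1) * t₁ / ν) :=
          mul_le_mul_of_nonneg_left (by linarith) hK.le
      _ = K * (1 + 1 / ν) * s ^ (ν - 1) * t₁ := by ring
  have heq : g' s - (g t₁ - g 0) / t₁ = (g' s * t₁ - (g t₁ - g 0)) / t₁ := by
    field_simp
  rw [heq, abs_div, abs_of_pos ht₁, div_le_iff₀ ht₁]
  linarith [main]
end

section
/- Let a < b be real numbers and let g : [a,b] → ℝ be three times continuously differentiable. Let ǧ(t) = ((b − t) g(a) + (t − a) g(b))/(b − a) be the linear interpolant of g at a and b. Then for every s ∈ (a,b): (g − ǧ)′(s) = [ ∫_s^b (q − s) g‴(q) dq − (1/(2(b−a))) ∫_a^b (q − a)² g‴(q) dq ] + (s − (a+b)/2) g″(b). -/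
open MeasureTheory Set

/-- Taylor-expansion identity for the interpolation error, Section 4.
For `g` three times continuously differentiable on `[a,b]` and `ǧ` its linear interpolant
at the endpoints (so `ǧ'(s) = (g(b) - g(a))/(b-a)`), for every `s ∈ (a,b)`:
`(g - ǧ)'(s) = [∫ₛᵇ (q-s) g'''(q) dq - (1/(2(b-a))) ∫ₐᵇ (q-a)² g'''(q) dq]
               + (s - (a+b)/2) g''(b)`. -/
theorem stmt_9 (a b : ℝ) (hab : a < b) (g g' g'' g''' : ℝ → ℝ)
    (h1 : ∀ s ∈ Icc a b, HasDerivWithinAt g (g' s) (Icc a b) s)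
    (h2 : ∀ s ∈ Icc a b, HasDerivWithinAt g' (g'' s) (Icc a b) s)
    (h3 : ∀ s ∈ Icc a b, HasDerivWithinAt g'' (g''' s) (Icc a b) s)
    (h4 : ContinuousOn g''' (Icc a b)) :
    ∀ s ∈ Ioo a b,
      g' s - (g b - g a) / (b - a)
        = ((∫ q in s..b, (q - s) * g''' q)
            - (1 / (2 * (b - a))) * ∫ q in a..b, (q - a) ^ 2 * g''' q)
          + (s - (a + b) / 2) * g'' b := by
  intro s hs
  obtain ⟨hsa, hsb⟩ := hs
  have hsab : s ∈ Icc a b := ⟨hsa.le, hsb.le⟩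
  have hcg : ContinuousOn g (Icc a b) := fun x hx => (h1 x hx).continuousWithinAt
  have hcg' : ContinuousOn g' (Icc a b) := fun x hx => (h2 x hx).continuousWithinAt
  have hcg'' : ContinuousOn g'' (Icc a b) := fun x hx => (h3 x hx).continuousWithinAt
  have hD0 : ∀ x ∈ Ioo a b, HasDerivAt g (g' x) x := fun x hx =>
    (h1 x (Ioo_subset_Icc_self hx)).hasDerivAt (Icc_mem_nhds hx.1 hx.2)
  have hD1 : ∀ x ∈ Ioo a b, HasDerivAt g' (g'' x) x := fun x hx =>
    (h2 x (Ioo_subset_Icc_self hx)).hasDerivAt (Icc_mem_nhds hx.1 hx.2)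
  have hD2 : ∀ x ∈ Ioo a b, HasDerivAt g'' (g''' x) x := fun x hx =>
    (h3 x (Ioo_subset_Icc_self hx)).hasDerivAt (Icc_mem_nhds hx.1 hx.2)
  have hsubs : Icc s b ⊆ Icc a b := Icc_subset_Icc hsa.le le_rfl
  have I1 : (∫ q in s..b, (q - s) * g''' q)
      = ((b - s) * g'' b - g' b) - ((s - s) * g'' s - g' s) := by
    apply intervalIntegral.integral_eq_sub_of_hasDeriv_right_of_le hsb.le
    · exact ((continuousOn_id.sub continuousOn_const).mul (hcg''.mono hsubs)).sub
        (hcg'.mono hsubs)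
    · intro x hx
      have hx' : x ∈ Ioo a b := ⟨hsa.trans hx.1, hx.2⟩
      have h := (((hasDerivAt_id x).sub_const s).mul (hD2 x hx')).sub (hD1 x hx')
      have : HasDerivAt (fun q => (q - s) * g'' q - g' q) ((x - s) * g''' x) x := by
        exact h.congr_deriv (by simp only [id_eq]; ring)
      exact this.hasDerivWithinAt
    · apply ContinuousOn.intervalIntegrable
      have : uIcc s b = Icc s b := uIcc_of_le hsb.le
      rw [this]
      exact (continuousOn_id.sub continuousOn_const).mul (h4.mono hsubs)
  have I2 : (∫ q in a..b, (q - a) ^ 2 * g''' q)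
      = ((b - a) ^ 2 * g'' b - 2 * (b - a) * g' b + 2 * g b)
        - ((a - a) ^ 2 * g'' a - 2 * (a - a) * g' a + 2 * g a) := by
    apply intervalIntegral.integral_eq_sub_of_hasDeriv_right_of_le hab.le
    · exact ((((continuousOn_id.sub continuousOn_const).pow 2).mul hcg'').sub
        ((continuousOn_const.mul (continuousOn_id.sub continuousOn_const)).mul hcg')).add
        (continuousOn_const.mul hcg)
    · intro x hx
      have h := (((((hasDerivAt_id x).sub_const a).pow 2).mul (hD2 x hx)).sub
        (((hasDerivAt_const x (2:ℝ)).mul ((hasDerivAt_id x).sub_const a)).mul (hD1 x hx))).add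
        ((hasDerivAt_const x (2:ℝ)).mul (hD0 x hx))
      have : HasDerivAt (fun q => (q - a) ^ 2 * g'' q - 2 * (q - a) * g' q + 2 * g q)
          ((x - a) ^ 2 * g''' x) x := by
        exact h.congr_deriv (by simp only [id_eq, Pi.mul_apply, Pi.pow_apply, Nat.cast_ofNat]; ring)
      exact this.hasDerivWithinAt
    · apply ContinuousOn.intervalIntegrable
      rw [uIcc_of_le hab.le]
      exact ((continuousOn_id.sub continuousOn_const).pow 2).mul h4
  rw [I1, I2]
  have hba : b - a ≠ 0 := sub_ne_zero.mpr hab.ne'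
  field_simp
  ring
end

section
/- Let 0 < α < 1, 0 < ν < 1, c > 0, T > 0, γ > 2/ν and N ≥ 1, and let (t_i)_{i=0}^N be the graded time mesh with τ = T^{1/γ}/N and τ_j = t_j − t_{j−1}. Suppose g : [0,T] → ℝ is continuous on [0,T], three times continuously differentiable on (0,T], and satisfies |g″(t)| ≤ c t^{ν−2} and |g‴(t)| ≤ c t^{ν−3} for 0 < t ≤ T. Define e₁ on (0,T] by: e₁(s) = (1/t₁) ∫₀^{t₁} ∫_q^s g″(z) dz dq for s ∈ (0, t₁], and e₁(s) = ∫_s^{t_i} (q − s) g‴(q) dq − (1/(2τ_i)) ∫_{t_{i−1}}^{t_i} (q − t_{i−1})² g‴(q) dq for s ∈ (t_{i−1}, t_i] with i ≥ 2. Then there exists a constant C, depending only on α, ν, γ, c and T, such that for every 1 ≤ j ≤ N: | ∫_{t_{j−1}}^{t_j} (I^α e₁)(t) dt | ≤ C τ_j τ² t_j^{ν+α−1−2/γ}. -/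
set_option maxHeartbeats 1000000

open MeasureTheory Set

private lemma rpow_MVT {p a b : ℝ} (hp : 1 ≤ p) (hb : 0 ≤ b) (hba : b ≤ a) :
    a ^ p - b ^ p ≤ p * a ^ (p - 1) * (a - b) := by
  have ha : 0 ≤ a := hb.trans hba
  have key := Convex.norm_image_sub_le_of_norm_hasDerivWithin_le
    (f := fun x : ℝ => x ^ p) (f' := fun x : ℝ => p * x ^ (p - 1)) (s := Icc 0 a)
    (C := p * a ^ (p - 1)) (fun x hx => (Real.hasDerivAt_rpow_const (Or.inr hp)).hasDerivWithinAt)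
    (fun x hx => by
      rw [Real.norm_eq_abs,
        abs_of_nonneg (mul_nonneg (by linarith) (Real.rpow_nonneg hx.1 _))]
      exact mul_le_mul_of_nonneg_left
        (Real.rpow_le_rpow hx.1 hx.2 (by linarith)) (by linarith))
    (convex_Icc 0 a) ⟨hb, hba⟩ ⟨ha, le_rfl⟩
  rw [Real.norm_eq_abs, Real.norm_eq_abs, abs_of_nonneg (sub_nonneg.2 hba)] at key
  exact le_trans (le_abs_self _) key

/-- Lemma 4.3.
On the graded mesh `tᵢ = (iτ)^γ`, `τ = T^(1/γ)/N`, `γ > 2/ν`, with `e₁` the first piece of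
the interpolation-error derivative (as defined piecewise below), there is
`C = C(α,ν,γ,c,T)` s.t. for `1 ≤ j ≤ N`:
`|∫_{t_{j-1}}^{t_j} (I^α e₁)(x) dx| ≤ C τ_j τ² t_j^{ν+α-1-2/γ}`. -/
theorem stmt_10 (α ν γ c T : ℝ) (hα0 : 0 < α) (hα1 : α < 1) (hν0 : 0 < ν) (hν1 : ν < 1)
    (hγ : 2 / ν < γ) (hc : 0 < c) (hT : 0 < T) :
    ∃ C : ℝ, 0 < C ∧ ∀ N : ℕ, 1 ≤ N →
      ∀ t : ℕ → ℝ, (∀ i, t i = ((i : ℝ) * (T ^ (1/γ) / N)) ^ γ) →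
      ∀ g g' g'' g''' e₁ : ℝ → ℝ,
      ContinuousOn g (Icc 0 T) →
      (∀ s ∈ Ioc 0 T, HasDerivWithinAt g (g' s) (Ioc 0 T) s) →
      (∀ s ∈ Ioc 0 T, HasDerivWithinAt g' (g'' s) (Ioc 0 T) s) →
      (∀ s ∈ Ioc 0 T, HasDerivWithinAt g'' (g''' s) (Ioc 0 T) s) →
      ContinuousOn g''' (Ioc 0 T) →
      (∀ s ∈ Ioc 0 T, |g'' s| ≤ c * s ^ (ν - 2)) →
      (∀ s ∈ Ioc 0 T, |g''' s| ≤ c * s ^ (ν - 3)) →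
      (∀ s ∈ Ioc 0 (t 1), e₁ s = (1 / t 1) * ∫ q in (0:ℝ)..(t 1), ∫ z in q..s, g'' z) →
      (∀ i ∈ Finset.Icc 2 N, ∀ s ∈ Ioc (t (i-1)) (t i),
        e₁ s = (∫ q in s..(t i), (q - s) * g''' q)
          - (1 / (2 * (t i - t (i-1)))) *
              ∫ q in (t (i-1))..(t i), (q - t (i-1)) ^ 2 * g''' q) →
      ∀ j ∈ Finset.Icc 1 N,
        |∫ x in (t (j-1))..(t j),
            ∫ s in (0:ℝ)..x, ((x - s) ^ (α - 1) / Real.Gamma α) * e₁ s|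
          ≤ C * (t j - t (j-1)) * (T ^ (1/γ) / N) ^ 2 * (t j) ^ (ν + α - 1 - 2/γ) := by
  have hγ0 : 0 < γ := lt_trans (by positivity) hγ
  have hγν : 2 < γ * ν := by
    rw [div_lt_iff₀ hν0] at hγ; linarith
  have h2γ : 2 / γ < ν := by rw [div_lt_iff₀ hγ0]; linarith
  have hγ2 : 2 < γ := by
    have : 2 / ν > 2 := by
      have := div_lt_div_of_pos_left (show (0:ℝ) < 2 by norm_num) hν0 hν1
      simpa using this
    linarith
  have hγ1 : 1 ≤ γ := by linarith
  have hΓ : 0 < Real.Gamma α := Real.Gamma_pos_of_pos hα0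
  set β : ℝ := ν - 2/γ with hβdef
  have hβ0 : 0 < β := by simp only [hβdef]; linarith
  have hβ1 : β < 1 := by
    have : 0 < 2/γ := by positivity
    simp only [hβdef]; linarith
  set K1 : ℝ := c/(1-ν) * (1/ν + 1) with hK1def
  have hK1 : 0 < K1 := by
    apply mul_pos (div_pos hc (by linarith)); positivity
  set K2 : ℝ := c * γ^2 * (2:ℝ)^(γ*(3-ν)) with hK2def
  have hK2 : 0 < K2 := by
    apply mul_pos (by positivity) (Real.rpow_pos_of_pos (by norm_num) _)
  set K : ℝ := K1 + K2 with hKdef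
  have hK : 0 < K := by linarith
  set Kin : ℝ := 2*K*(1/α + 1/β)/Real.Gamma α with hKindef
  have hKin : 0 < Kin := by
    apply div_pos _ hΓ
    apply mul_pos (by linarith); positivity
  have h2γnn : (0:ℝ) ≤ (2:ℝ)^γ := Real.rpow_nonneg (by norm_num) _
  have hαβ : 0 < α + β := by linarith
  clear_value K1 K2 K Kin
  refine ⟨Kin * ((2:ℝ)^γ + 1/(α+β)), by positivity, ?_⟩
  intro N hN t ht g g' g'' g''' e₁ hg hg' hg'' hg''' hg'''c hb2 hb3 he1 hei j hj
  set τ : ℝ := T ^ (1/γ) / (N:ℝ) with hτdef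
  have hN0 : (0:ℝ) < N := by exact_mod_cast hN
  have hτ0 : 0 < τ := div_pos (Real.rpow_pos_of_pos hT _) hN0
  clear_value τ
  -- mesh facts
  have htnn : ∀ i : ℕ, 0 ≤ t i := by
    intro i; rw [ht]; positivity
  have hmono : ∀ {a b : ℕ}, a ≤ b → t a ≤ t b := by
    intro a b hab; rw [ht, ht]
    exact Real.rpow_le_rpow (by positivity)
      (mul_le_mul_of_nonneg_right (Nat.cast_le.2 hab) hτ0.le) hγ0.le
  have hpos : ∀ {i : ℕ}, 1 ≤ i → 0 < t i := by
    intro i hi; rw [ht]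
    apply Real.rpow_pos_of_pos
    have : (1:ℝ) ≤ (i:ℝ) := by exact_mod_cast hi
    nlinarith
  have h00 : t 0 = 0 := by
    rw [ht]; simp [Real.zero_rpow hγ0.ne']
  have htN : t N = T := by
    rw [ht, hτdef]
    rw [show ((N:ℝ) * (T^(1/γ)/N)) = T^(1/γ) by field_simp]
    rw [← Real.rpow_mul hT.le]
    rw [show 1/γ*γ = 1 by field_simp]
    exact Real.rpow_one T
  have hleT : ∀ i : ℕ, i ≤ N → t i ≤ T := fun i hi => htN ▸ hmono hi
  have ht1p : 0 < t 1 := hpos le_rfl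
  have hstep : ∀ i : ℕ, 1 ≤ i → t i - t (i-1) ≤ γ * ((i:ℝ)*τ)^(γ-1) * τ := by
    intro i hi
    have hcast : ((i-1 : ℕ):ℝ) = (i:ℝ) - 1 := by
      have h' : (1:ℕ) ≤ i := hi
      push_cast [h']; ring
    rw [ht, ht, hcast]
    have h1i : (1:ℝ) ≤ (i:ℝ) := by exact_mod_cast hi
    have := rpow_MVT (p := γ) (a := (i:ℝ)*τ) (b := ((i:ℝ)-1)*τ) hγ1
      (by nlinarith) (by nlinarith)
    calc ((i:ℝ)*τ)^γ - (((i:ℝ)-1)*τ)^γ ≤ γ * ((i:ℝ)*τ)^(γ-1) * ((i:ℝ)*τ - ((i:ℝ)-1)*τ) := this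
    _ = γ * ((i:ℝ)*τ)^(γ-1) * τ := by ring
  have hratio : ∀ i : ℕ, 2 ≤ i → t i ≤ (2:ℝ)^γ * t (i-1) := by
    intro i hi
    have hcast : ((i-1 : ℕ):ℝ) = (i:ℝ) - 1 := by
      have h' : (1:ℕ) ≤ i := by omega
      push_cast [h']; ring
    rw [ht, ht, hcast]
    have h2i : (2:ℝ) ≤ (i:ℝ) := by exact_mod_cast hi
    have key : ((i:ℝ)*τ) ≤ 2 * (((i:ℝ)-1)*τ) := by nlinarith
    calc ((i:ℝ)*τ)^γ ≤ (2 * (((i:ℝ)-1)*τ))^γ :=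
          Real.rpow_le_rpow (by positivity) key hγ0.le
    _ = (2:ℝ)^γ * (((i:ℝ)-1)*τ)^γ := Real.mul_rpow (by norm_num) (by nlinarith)
  -- continuity of g'' on Ioc 0 T
  have hg''cont : ContinuousOn g'' (Ioc 0 T) := fun s hs => (hg''' s hs).continuousWithinAt
  -- bound on ∫ g'' between two positive points
  have hg''int : ∀ q ∈ Ioc (0:ℝ) T, ∀ s ∈ Ioc (0:ℝ) T,
      |∫ z in q..s, g'' z| ≤ c/(1-ν) * (q^(ν-1) + s^(ν-1)) := by
    intro q hq s hs
    have hsubc : uIcc q s ⊆ Ioc 0 T := fun z hz =>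
      ⟨lt_of_lt_of_le (lt_min hq.1 hs.1) hz.1, le_trans hz.2 (max_le hq.2 hs.2)⟩
    have hsub : Set.uIoc q s ⊆ Ioc 0 T := by
      intro z hz
      rcases Set.mem_uIoc.1 hz with ⟨h1,h2⟩|⟨h1,h2⟩
      · exact ⟨lt_trans hq.1 h1, le_trans h2 hs.2⟩
      · exact ⟨lt_trans hs.1 h1, le_trans h2 hq.2⟩
    have hcont : ContinuousOn (fun z : ℝ => c * z^(ν-2)) (uIcc q s) := by
      intro z hz
      have hz0 : z ≠ 0 := ne_of_gt (hsubc hz).1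
      exact continuousWithinAt_const.mul
        ((Real.continuousAt_rpow_const z (ν-2) (Or.inl hz0)).continuousWithinAt)
    have hii : IntervalIntegrable (fun z : ℝ => c * z^(ν-2)) volume q s :=
      hcont.intervalIntegrable
    have h0m : (0:ℝ) ∉ uIcc q s := fun h => absurd (hsubc h).1 (lt_irrefl 0)
    have key := intervalIntegral.norm_integral_le_abs_of_norm_le (μ := volume)
      (f := g'') (g := fun z => c * z^(ν-2))
      (ae_restrict_of_forall_mem measurableSet_uIoc
        (fun z hz => by rw [Real.norm_eq_abs]; exact hb2 z (hsub hz))) hii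
    have hcomp : ∫ z in q..s, c * z^(ν-2) = c * ((s^(ν-1) - q^(ν-1))/(ν-1)) := by
      rw [intervalIntegral.integral_const_mul,
        integral_rpow (Or.inr ⟨by intro h; apply hν1.ne; linarith, h0m⟩),
        show ν-2+1 = ν-1 by ring]
    rw [Real.norm_eq_abs, hcomp] at key
    calc |∫ z in q..s, g'' z| ≤ |c * ((s^(ν-1) - q^(ν-1))/(ν-1))| := key
    _ = c * |s^(ν-1) - q^(ν-1)| / (1-ν) := by
        rw [abs_mul, abs_div, abs_of_nonneg hc.le, abs_of_neg (by linarith : ν-1 < 0)]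
        ring
    _ ≤ c * (|s^(ν-1)| + |q^(ν-1)|) / (1-ν) := by
        gcongr
        · exact abs_sub _ _
    _ = c/(1-ν) * (q^(ν-1) + s^(ν-1)) := by
        rw [abs_of_nonneg (Real.rpow_nonneg hs.1.le _),
          abs_of_nonneg (Real.rpow_nonneg hq.1.le _)]
        ring
  -- piece 1 bound
  have hE1 : ∀ s ∈ Ioc 0 (t 1), |e₁ s| ≤ K1 * s^(ν-1) := by
    intro s hs
    have h1T : t 1 ≤ T := hleT 1 hN
    have hsT : s ∈ Ioc 0 T := ⟨hs.1, hs.2.trans h1T⟩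
    rw [he1 s hs, abs_mul, abs_of_nonneg (by positivity : (0:ℝ) ≤ 1 / t 1)]
    have hdom : IntervalIntegrable (fun q : ℝ => c/(1-ν) * (q^(ν-1) + s^(ν-1))) volume 0 (t 1) :=
      ((intervalIntegral.intervalIntegrable_rpow' (by linarith)).add
        intervalIntegrable_const).const_mul _
    have key := intervalIntegral.norm_integral_le_abs_of_norm_le (μ := volume)
      (f := fun q => ∫ z in q..s, g'' z) (g := fun q => c/(1-ν) * (q^(ν-1) + s^(ν-1)))
      (ae_restrict_of_forall_mem measurableSet_uIoc (fun q hq => by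
        rw [uIoc_of_le ht1p.le] at hq
        rw [Real.norm_eq_abs]
        exact hg''int q ⟨hq.1, hq.2.trans h1T⟩ s hsT)) hdom
    have hcomp : ∫ q in (0:ℝ)..(t 1), c/(1-ν) * (q^(ν-1) + s^(ν-1))
        = c/(1-ν) * ((t 1)^ν/ν + (t 1) * s^(ν-1)) := by
      rw [intervalIntegral.integral_const_mul,
        intervalIntegral.integral_add (intervalIntegral.intervalIntegrable_rpow' (by linarith))
          intervalIntegrable_const,
        integral_rpow (Or.inl (by linarith)), intervalIntegral.integral_const,
        show ν-1+1 = ν by ring, Real.zero_rpow hν0.ne', smul_eq_mul]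
      ring
    rw [Real.norm_eq_abs, hcomp] at key
    have habs : |c/(1-ν) * ((t 1)^ν/ν + (t 1) * s^(ν-1))|
        = c/(1-ν) * ((t 1)^ν/ν + (t 1) * s^(ν-1)) := by
      apply abs_of_nonneg
      apply mul_nonneg (le_of_lt (div_pos hc (by linarith)))
      exact add_nonneg (div_nonneg (Real.rpow_nonneg ht1p.le _) hν0.le)
        (mul_nonneg ht1p.le (Real.rpow_nonneg hs.1.le _))
    rw [habs] at key
    have htν : (t 1)^ν = (t 1)^(ν-1) * t 1 := by
      have h' := Real.rpow_add_one ht1p.ne' (ν-1)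
      rw [show ν-1+1 = ν by ring] at h'
      exact h'
    have hmon : (t 1)^(ν-1) ≤ s^(ν-1) :=
      Real.rpow_le_rpow_of_nonpos hs.1 hs.2 (by linarith)
    calc (1/t 1) * |∫ q in (0:ℝ)..t 1, ∫ z in q..s, g'' z|
        ≤ (1/t 1) * (c/(1-ν) * ((t 1)^ν/ν + (t 1) * s^(ν-1))) :=
          mul_le_mul_of_nonneg_left key (by positivity)
    _ = c/(1-ν) * ((t 1)^(ν-1)/ν + s^(ν-1)) := by
        have hν1' : (1:ℝ) - ν ≠ 0 := by linarith
        rw [htν]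
        field_simp
    _ ≤ K1 * s^(ν-1) := by
        rw [hK1def]
        have hA : (0:ℝ) < c/(1-ν) := div_pos hc (by linarith)
        have hfin : 0 ≤ c/(1-ν)*(s^(ν-1) - (t 1)^(ν-1))*(1/ν) :=
          mul_nonneg (mul_nonneg hA.le (sub_nonneg.2 hmon)) (by positivity)
        have hid : c/(1-ν) * (1/ν+1) * s^(ν-1) - c/(1-ν)*((t 1)^(ν-1)/ν + s^(ν-1))
            = c/(1-ν)*(s^(ν-1) - (t 1)^(ν-1))*(1/ν) := by ring
        linarith [hfin, hid]
  -- piece i ≥ 2 bound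
  have hE2 : ∀ i : ℕ, 2 ≤ i → i ≤ N → ∀ s ∈ Ioc (t (i-1)) (t i),
      |e₁ s| ≤ c * ((t i - t (i-1))^2 * (t (i-1))^(ν-3)) := by
    intro i h2 hiN s hs
    have hti1 : 0 < t (i-1) := hpos (by omega)
    have htii : t (i-1) ≤ t i := hmono (by omega)
    have hτip : 0 < t i - t (i-1) := sub_pos.2 (lt_of_lt_of_le hs.1 hs.2)
    have hiT : t i ≤ T := hleT i hiN
    have hs0 : 0 < s := lt_trans hti1 hs.1
    set M : ℝ := c * (t (i-1))^(ν-3) with hM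
    have hM0 : 0 ≤ M := mul_nonneg hc.le (Real.rpow_nonneg hti1.le _)
    have hgb : ∀ q : ℝ, t (i-1) < q → q ≤ T → |g''' q| ≤ M := by
      intro q h1 h2'
      have hq : q ∈ Ioc 0 T := ⟨lt_trans hti1 h1, h2'⟩
      calc |g''' q| ≤ c * q^(ν-3) := hb3 q hq
      _ ≤ M := by
        rw [hM]
        exact mul_le_mul_of_nonneg_left
          (Real.rpow_le_rpow_of_nonpos hti1 h1.le (by linarith)) hc.le
    -- term A
    have hA : |∫ q in s..(t i), (q - s) * g''' q| ≤ M * ((t i - s)^2 / 2) := by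
      have hdom : IntervalIntegrable (fun q : ℝ => M * (q - s)) volume s (t i) :=
        (continuous_const.mul (continuous_id.sub continuous_const)).intervalIntegrable _ _
      have key := intervalIntegral.norm_integral_le_abs_of_norm_le (μ := volume)
        (f := fun q => (q - s) * g''' q) (g := fun q => M * (q - s))
        (ae_restrict_of_forall_mem measurableSet_uIoc (fun q hq => by
          rw [uIoc_of_le hs.2] at hq
          show ‖(q - s) * g''' q‖ ≤ M * (q - s)
          rw [Real.norm_eq_abs, abs_mul, abs_of_nonneg (by linarith [hq.1] : (0:ℝ) ≤ q - s),
            mul_comm M (q-s)]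
          exact mul_le_mul_of_nonneg_left
            (hgb q (lt_trans hs.1 hq.1) (hq.2.trans hiT)) (by linarith [hq.1]))) hdom
      have hcomp : ∫ q in s..(t i), M * (q - s) = M * ((t i - s)^2 / 2) := by
        rw [intervalIntegral.integral_const_mul,
          show (∫ q in s..(t i), (q - s)) = ∫ u in (s-s)..(t i - s), u from
            intervalIntegral.integral_comp_sub_right (fun u => u) s,
          sub_self, integral_id]
        ring
      rw [Real.norm_eq_abs, hcomp,
        abs_of_nonneg (mul_nonneg hM0 (by positivity))] at key
      exact key
    -- term B
    have hB : |∫ q in (t (i-1))..(t i), (q - t (i-1))^2 * g''' q|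
        ≤ M * ((t i - t (i-1))^3 / 3) := by
      have hdom : IntervalIntegrable (fun q : ℝ => M * (q - t (i-1))^2) volume (t (i-1)) (t i) :=
        (continuous_const.mul ((continuous_id.sub continuous_const).pow 2)).intervalIntegrable _ _
      have key := intervalIntegral.norm_integral_le_abs_of_norm_le (μ := volume)
        (f := fun q => (q - t (i-1))^2 * g''' q) (g := fun q => M * (q - t (i-1))^2)
        (ae_restrict_of_forall_mem measurableSet_uIoc (fun q hq => by
          rw [uIoc_of_le htii] at hq
          show ‖(q - t (i-1))^2 * g''' q‖ ≤ M * (q - t (i-1))^2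
          rw [Real.norm_eq_abs, abs_mul, abs_of_nonneg (sq_nonneg (q - t (i-1))),
            mul_comm M _]
          exact mul_le_mul_of_nonneg_left
            (hgb q hq.1 (hq.2.trans hiT)) (sq_nonneg _))) hdom
      have hcomp : ∫ q in (t (i-1))..(t i), M * (q - t (i-1))^2
          = M * ((t i - t (i-1))^3 / 3) := by
        rw [intervalIntegral.integral_const_mul,
          show (∫ q in (t (i-1))..(t i), (q - t (i-1))^2)
              = ∫ u in (t (i-1) - t (i-1))..(t i - t (i-1)), u^2 from
            intervalIntegral.integral_comp_sub_right (fun u => u^2) (t (i-1)),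
          sub_self, integral_pow]
        norm_num
      rw [Real.norm_eq_abs, hcomp,
        abs_of_nonneg (mul_nonneg hM0 (by positivity))] at key
      exact key
    rw [hei i (Finset.mem_Icc.2 ⟨h2, hiN⟩) s hs]
    have hsplit : |(∫ q in s..(t i), (q - s) * g''' q)
        - (1 / (2 * (t i - t (i-1)))) * ∫ q in (t (i-1))..(t i), (q - t (i-1))^2 * g''' q|
        ≤ M * ((t i - s)^2/2) + (1 / (2 * (t i - t (i-1)))) * (M * ((t i - t (i-1))^3/3)) := by
      refine le_trans (abs_sub _ _) ?_
      apply add_le_add hA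
      rw [abs_mul, abs_of_nonneg (by positivity : (0:ℝ) ≤ 1 / (2 * (t i - t (i-1))))]
      exact mul_le_mul_of_nonneg_left hB (by positivity)
    refine le_trans hsplit ?_
    have h1 : (t i - s)^2 ≤ (t i - t (i-1))^2 := by
      apply pow_le_pow_left₀ (by linarith [hs.2]) (by linarith [hs.1])
    have h2' : (1 / (2 * (t i - t (i-1)))) * (M * ((t i - t (i-1))^3/3))
        = M * (t i - t (i-1))^2 / 6 := by
      field_simp
      ring
    rw [h2']
    have hgoal_eq : c * ((t i - t (i-1))^2 * (t (i-1))^(ν-3)) = M * (t i - t (i-1))^2 := by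
      rw [hM]; ring
    rw [hgoal_eq]
    have hab : M * (t i - s)^2 ≤ M * (t i - t (i-1))^2 := mul_le_mul_of_nonneg_left h1 hM0
    have hbnn : 0 ≤ M * (t i - t (i-1))^2 := mul_nonneg hM0 (sq_nonneg _)
    linarith [hab, hbnn]
  -- cover lemma
  have hcover : ∀ s ∈ Ioc 0 (t N), ∃ i : ℕ, 1 ≤ i ∧ i ≤ N ∧ s ∈ Ioc (t (i-1)) (t i) := by
    intro s hs
    have main : ∀ m : ℕ, 1 ≤ m → m ≤ N → s ≤ t m →
        ∃ i : ℕ, 1 ≤ i ∧ i ≤ N ∧ s ∈ Ioc (t (i-1)) (t i) := by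
      intro m
      induction m with
      | zero => omega
      | succ n ih =>
        intro _ hmN hsm
        by_cases hn : s ≤ t n
        · have hn1 : 1 ≤ n := by
            by_contra h
            have hn0 : n = 0 := by omega
            rw [hn0, h00] at hn
            exact absurd (lt_of_lt_of_le hs.1 hn) (lt_irrefl 0)
          exact ih hn1 (by omega) hn
        · exact ⟨n+1, by omega, hmN, by simpa using lt_of_not_ge hn, hsm⟩
    exact main N hN le_rfl hs.2
  -- master bound on e₁
  have hE : ∀ s ∈ Ioc 0 (t N), |e₁ s| ≤ K * τ^2 * s^(β-1) := by
    intro s hs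
    obtain ⟨i, hi1, hiN, hsi⟩ := hcover s hs
    have hs0 : 0 < s := hs.1
    have hsβ : 0 ≤ s^(β-1) := Real.rpow_nonneg hs0.le _
    rcases eq_or_lt_of_le hi1 with h1 | h2
    · -- i = 1
      have hs1 : s ∈ Ioc 0 (t 1) := by
        rw [← h1] at hsi; rw [show (1:ℕ)-1 = 0 from rfl, h00] at hsi; exact hsi
      have hb1 := hE1 s hs1
      have ht1 : t 1 = τ^γ := by rw [ht]; norm_num
      have hsum : s^(ν-1) = s^(2/γ) * s^(β-1) := by
        rw [← Real.rpow_add hs0]; congr 1; rw [hβdef]; ring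
      have hs2γ : s^(2/γ) ≤ τ^2 := by
        calc s^(2/γ) ≤ (τ^γ)^(2/γ) :=
              Real.rpow_le_rpow hs0.le (ht1 ▸ hs1.2) (by positivity)
        _ = τ^(γ*(2/γ)) := (Real.rpow_mul hτ0.le γ (2/γ)).symm
        _ = τ^(2:ℝ) := by rw [show γ*(2/γ) = 2 by field_simp]
        _ = τ^2 := by
            rw [← Real.rpow_natCast τ 2]; norm_num
      calc |e₁ s| ≤ K1 * s^(ν-1) := hb1
      _ = K1 * s^(2/γ) * s^(β-1) := by rw [hsum]; ring
      _ ≤ K1 * τ^2 * s^(β-1) := by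
          apply mul_le_mul_of_nonneg_right _ hsβ
          exact mul_le_mul_of_nonneg_left hs2γ hK1.le
      _ ≤ K * τ^2 * s^(β-1) := by
          apply mul_le_mul_of_nonneg_right _ hsβ
          apply mul_le_mul_of_nonneg_right _ (by positivity)
          rw [hKdef]; linarith
    · -- i ≥ 2
      have h2i : 2 ≤ i := h2
      have key := hE2 i h2i hiN s hsi
      have hti1 : 0 < t (i-1) := hpos (by omega)
      set u : ℝ := (i:ℝ) * τ with hu
      have h2i' : (2:ℝ) ≤ (i:ℝ) := by exact_mod_cast h2i
      have hu0 : 0 < u := by rw [hu]; nlinarith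
      have hti : t i = u^γ := ht i
      have hstep' := hstep i (by omega)
      have hτinn : 0 ≤ t i - t (i-1) := sub_nonneg.2 (hmono (by omega))
      have h1 : (t i - t (i-1))^2 ≤ (γ * u^(γ-1) * τ)^2 :=
        pow_le_pow_left₀ hτinn hstep' 2
      have hcast : ((i-1 : ℕ):ℝ) = (i:ℝ) - 1 := by
        have h' : (1:ℕ) ≤ i := by omega
        push_cast [h']; ring
      have hti1ge : (u/2)^γ ≤ t (i-1) := by
        rw [ht, hcast]
        apply Real.rpow_le_rpow (by positivity) _ hγ0.le
        rw [hu]; nlinarith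
      have h2b : (t (i-1))^(ν-3) ≤ (2:ℝ)^(γ*(3-ν)) * u^(γ*(ν-3)) := by
        have e1 : (t (i-1))^(ν-3) ≤ ((u/2)^γ)^(ν-3) :=
          Real.rpow_le_rpow_of_nonpos (Real.rpow_pos_of_pos (by positivity) _) hti1ge
            (by linarith)
        have e2 : ((u/2)^γ)^(ν-3) = (u/2)^(γ*(ν-3)) :=
          (Real.rpow_mul (by positivity : (0:ℝ) ≤ u/2) γ (ν-3)).symm
        have e3 : (u/2)^(γ*(ν-3)) = u^(γ*(ν-3)) / 2^(γ*(ν-3)) :=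
          Real.div_rpow hu0.le (by norm_num) _
        have e4 : u^(γ*(ν-3)) / 2^(γ*(ν-3)) = (2:ℝ)^(γ*(3-ν)) * u^(γ*(ν-3)) := by
          rw [div_eq_mul_inv, ← Real.rpow_neg (by norm_num : (0:ℝ) ≤ 2),
            show -(γ*(ν-3)) = γ*(3-ν) by ring]
          ring
        rw [e2, e3, e4] at e1
        exact e1
      calc |e₁ s| ≤ c * ((t i - t (i-1))^2 * (t (i-1))^(ν-3)) := key
      _ ≤ c * ((γ * u^(γ-1) * τ)^2 * ((2:ℝ)^(γ*(3-ν)) * u^(γ*(ν-3)))) := by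
          apply mul_le_mul_of_nonneg_left _ hc.le
          exact mul_le_mul h1 h2b (Real.rpow_nonneg hti1.le _) (by positivity)
      _ = K2 * τ^2 * ((u^(γ-1))^2 * u^(γ*(ν-3))) := by rw [hK2def]; ring
      _ = K2 * τ^2 * (t i)^(β-1) := by
          congr 1
          rw [← Real.rpow_natCast (u^(γ-1)) 2, ← Real.rpow_mul hu0.le,
            ← Real.rpow_add hu0, hti, ← Real.rpow_mul hu0.le]
          congr 1
          rw [hβdef]
          push_cast
          field_simp
          ring
      _ ≤ K2 * τ^2 * s^(β-1) := by
          apply mul_le_mul_of_nonneg_left _ (by positivity)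
          exact Real.rpow_le_rpow_of_nonpos hs0 hsi.2 (by linarith)
      _ ≤ K * τ^2 * s^(β-1) := by
          apply mul_le_mul_of_nonneg_right _ hsβ
          apply mul_le_mul_of_nonneg_right _ (by positivity)
          rw [hKdef]; linarith
  -- inner integral bound
  have hH : ∀ x ∈ Ioc 0 (t N),
      |∫ s in (0:ℝ)..x, ((x - s) ^ (α - 1) / Real.Gamma α) * e₁ s|
        ≤ Kin * τ^2 * x^(α+β-1) := by
    intro x hx
    have hx0 : 0 < x := hx.1
    have hx2 : 0 < x/2 := by linarith
    have hx2x : x/2 ≤ x := by linarith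
    set A0 : ℝ := K * τ^2 / Real.Gamma α with hA0
    have hA0p : 0 < A0 := div_pos (mul_pos hK (by positivity)) hΓ
    set D : ℝ → ℝ := fun s => A0 * ((x - s)^(α-1) * s^(β-1)) with hD
    set F1 : ℝ → ℝ := fun s => A0 * ((x/2)^(α-1) * s^(β-1)) with hF1
    set F2 : ℝ → ℝ := fun s => A0 * ((x/2)^(β-1) * (x - s)^(α-1)) with hF2
    have hDmeas : Measurable D := by
      simp only [hD]; fun_prop
    have hF1i : IntervalIntegrable F1 volume 0 (x/2) :=
      ((intervalIntegral.intervalIntegrable_rpow' (by linarith)).const_mul _).const_mul _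
    have hkerii : IntervalIntegrable (fun s : ℝ => (x - s)^(α-1)) volume (x/2) x := by
      have h0 := (intervalIntegral.intervalIntegrable_rpow'
        (a := 0) (b := x/2) (r := α-1) (by linarith)).comp_sub_left x
      rw [sub_zero, show x - x/2 = x/2 by ring] at h0
      exact h0.symm
    have hF2i : IntervalIntegrable F2 volume (x/2) x :=
      (hkerii.const_mul _).const_mul _
    have hDi1 : IntegrableOn D (Ioc 0 (x/2)) volume := by
      apply Integrable.mono' hF1i.1 (hDmeas.aestronglyMeasurable.restrict)
      apply ae_restrict_of_forall_mem measurableSet_Ioc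
      intro s hsc
      have hxs : 0 ≤ x - s := by linarith [hsc.2]
      show ‖A0 * ((x - s)^(α-1) * s^(β-1))‖ ≤ A0 * ((x/2)^(α-1) * s^(β-1))
      rw [Real.norm_eq_abs, abs_of_nonneg (mul_nonneg hA0p.le
        (mul_nonneg (Real.rpow_nonneg hxs _) (Real.rpow_nonneg hsc.1.le _)))]
      apply mul_le_mul_of_nonneg_left _ hA0p.le
      exact mul_le_mul_of_nonneg_right
        (Real.rpow_le_rpow_of_nonpos hx2 (by linarith [hsc.2]) (by linarith))
        (Real.rpow_nonneg hsc.1.le _)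
    have hDi2 : IntegrableOn D (Ioc (x/2) x) volume := by
      apply Integrable.mono' hF2i.1 (hDmeas.aestronglyMeasurable.restrict)
      apply ae_restrict_of_forall_mem measurableSet_Ioc
      intro s hsc
      have hxs : 0 ≤ x - s := by linarith [hsc.2]
      have hs0' : 0 < s := lt_trans hx2 hsc.1
      show ‖A0 * ((x - s)^(α-1) * s^(β-1))‖ ≤ A0 * ((x/2)^(β-1) * (x - s)^(α-1))
      rw [Real.norm_eq_abs, abs_of_nonneg (mul_nonneg hA0p.le
        (mul_nonneg (Real.rpow_nonneg hxs _) (Real.rpow_nonneg hs0'.le _)))]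
      apply mul_le_mul_of_nonneg_left _ hA0p.le
      rw [mul_comm ((x/2)^(β-1)) _]
      exact mul_le_mul_of_nonneg_left
        (Real.rpow_le_rpow_of_nonpos hx2 hsc.1.le (by linarith))
        (Real.rpow_nonneg hxs _)
    have hDI1 : IntervalIntegrable D volume 0 (x/2) := by
      rw [intervalIntegrable_iff, uIoc_of_le hx2.le]; exact hDi1
    have hDI2 : IntervalIntegrable D volume (x/2) x := by
      rw [intervalIntegrable_iff, uIoc_of_le hx2x]; exact hDi2
    have hDfull : IntervalIntegrable D volume 0 x := by
      rw [intervalIntegrable_iff, uIoc_of_le hx0.le, ← Ioc_union_Ioc_eq_Ioc hx2.le hx2x]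
      exact hDi1.union hDi2
    have hmain : |∫ s in (0:ℝ)..x, ((x - s) ^ (α - 1) / Real.Gamma α) * e₁ s|
        ≤ |∫ s in (0:ℝ)..x, D s| := by
      rw [← Real.norm_eq_abs]
      apply intervalIntegral.norm_integral_le_abs_of_norm_le _ hDfull
      apply ae_restrict_of_forall_mem measurableSet_uIoc
      intro s hsi
      rw [uIoc_of_le hx0.le] at hsi
      have hsN : s ∈ Ioc 0 (t N) := ⟨hsi.1, hsi.2.trans hx.2⟩
      have hker : 0 ≤ (x - s)^(α-1)/Real.Gamma α :=
        div_nonneg (Real.rpow_nonneg (by linarith [hsi.2]) _) hΓ.le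
      show ‖((x - s) ^ (α - 1) / Real.Gamma α) * e₁ s‖ ≤ D s
      rw [Real.norm_eq_abs, abs_mul, abs_of_nonneg hker]
      calc ((x-s)^(α-1)/Real.Gamma α) * |e₁ s|
          ≤ ((x-s)^(α-1)/Real.Gamma α) * (K*τ^2*s^(β-1)) :=
            mul_le_mul_of_nonneg_left (hE s hsN) hker
      _ = D s := by simp only [hD, hA0]; field_simp
    have hDsplit : ∫ s in (0:ℝ)..x, D s
        = (∫ s in (0:ℝ)..(x/2), D s) + ∫ s in (x/2)..x, D s :=
      (intervalIntegral.integral_add_adjacent_intervals hDI1 hDI2).symm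
    have hI1 : ∫ s in (0:ℝ)..(x/2), D s ≤ A0 * (((x/2)^(α-1) * (x/2)^β)/β) := by
      have hcomp : ∫ s in (0:ℝ)..(x/2), F1 s = A0 * (((x/2)^(α-1) * (x/2)^β)/β) := by
        simp only [hF1]
        rw [intervalIntegral.integral_const_mul, intervalIntegral.integral_const_mul,
          integral_rpow (Or.inl (by linarith)), show β-1+1 = β by ring,
          Real.zero_rpow hβ0.ne']
        ring
      rw [← hcomp]
      apply intervalIntegral.integral_mono_on hx2.le hDI1 hF1i
      intro s hsc
      simp only [hD, hF1]
      apply mul_le_mul_of_nonneg_left _ hA0p.le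
      exact mul_le_mul_of_nonneg_right
        (Real.rpow_le_rpow_of_nonpos hx2 (by linarith [hsc.2]) (by linarith))
        (Real.rpow_nonneg hsc.1 _)
    have hI2 : ∫ s in (x/2)..x, D s ≤ A0 * (((x/2)^(β-1) * (x/2)^α)/α) := by
      have hker : ∫ s in (x/2)..x, (x - s)^(α-1) = (x/2)^α/α := by
        rw [intervalIntegral.integral_comp_sub_left (fun u : ℝ => u^(α-1)) x,
          sub_self, show x - x/2 = x/2 by ring, integral_rpow (Or.inl (by linarith)),
          show α-1+1 = α by ring, Real.zero_rpow hα0.ne']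
        ring
      have hcomp : ∫ s in (x/2)..x, F2 s = A0 * (((x/2)^(β-1) * (x/2)^α)/α) := by
        simp only [hF2]
        rw [intervalIntegral.integral_const_mul, intervalIntegral.integral_const_mul, hker]
        ring
      rw [← hcomp]
      apply intervalIntegral.integral_mono_on hx2x hDI2 hF2i
      intro s hsc
      simp only [hD, hF2]
      apply mul_le_mul_of_nonneg_left _ hA0p.le
      have hccc : (x-s)^(α-1) * s^(β-1) ≤ (x-s)^(α-1) * (x/2)^(β-1) :=
        mul_le_mul_of_nonneg_left
          (Real.rpow_le_rpow_of_nonpos hx2 hsc.1 (show β - 1 ≤ 0 by linarith))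
          (Real.rpow_nonneg (by linarith [hsc.2]) _)
      rw [mul_comm ((x/2)^(β-1)) ((x-s)^(α-1))]
      exact hccc
    have hxhalf : (x/2)^(α-1) * ((x/2)^β) = (x/2)^(α+β-1) := by
      rw [← Real.rpow_add hx2]; ring_nf
    have hxhalf2 : (x/2)^(β-1) * ((x/2)^α) = (x/2)^(α+β-1) := by
      rw [← Real.rpow_add hx2]; ring_nf
    have hhb : (x/2)^(α+β-1) ≤ 2 * x^(α+β-1) := by
      rw [Real.div_rpow hx0.le (by norm_num)]
      rw [div_le_iff₀ (Real.rpow_pos_of_pos two_pos _)]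
      have hone : (2:ℝ)^(-1:ℝ) ≤ (2:ℝ)^(α+β-1) :=
        Real.rpow_le_rpow_of_exponent_le (by norm_num) (by linarith)
      have htwo : (2:ℝ)^(-1:ℝ) = 1/2 := by
        rw [Real.rpow_neg_one]; norm_num
      have hX : 0 ≤ x^(α+β-1) := Real.rpow_nonneg hx0.le _
      have hone' : (1:ℝ) ≤ 2 * (2:ℝ)^(α+β-1) := by
        rw [htwo] at hone; linarith
      calc x^(α+β-1) = x^(α+β-1) * 1 := (mul_one _).symm
      _ ≤ x^(α+β-1) * (2 * (2:ℝ)^(α+β-1)) := mul_le_mul_of_nonneg_left hone' hX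
      _ = 2*x^(α+β-1)*(2:ℝ)^(α+β-1) := by ring
    have hDnn : 0 ≤ ∫ s in (0:ℝ)..x, D s := by
      apply intervalIntegral.integral_nonneg hx0.le
      intro s hsc
      exact mul_nonneg hA0p.le (mul_nonneg
        (Real.rpow_nonneg (by linarith [hsc.2]) _) (Real.rpow_nonneg hsc.1 _))
    calc |∫ s in (0:ℝ)..x, ((x - s) ^ (α - 1) / Real.Gamma α) * e₁ s|
        ≤ |∫ s in (0:ℝ)..x, D s| := hmain
    _ = ∫ s in (0:ℝ)..x, D s := abs_of_nonneg hDnn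
    _ = (∫ s in (0:ℝ)..(x/2), D s) + ∫ s in (x/2)..x, D s := hDsplit
    _ ≤ A0 * (((x/2)^(α-1) * (x/2)^β)/β) + A0 * (((x/2)^(β-1) * (x/2)^α)/α) :=
        add_le_add hI1 hI2
    _ = A0 * (x/2)^(α+β-1) * (1/β + 1/α) := by
        rw [hxhalf, hxhalf2]; ring
    _ ≤ A0 * (2 * x^(α+β-1)) * (1/β + 1/α) := by
        apply mul_le_mul_of_nonneg_right
          (mul_le_mul_of_nonneg_left hhb hA0p.le) (by positivity)
    _ = Kin * τ^2 * x^(α+β-1) := by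
        simp only [hKindef, hA0]; field_simp; ring
  -- final
  obtain ⟨hj1, hjN⟩ := Finset.mem_Icc.1 hj
  have hexp : ν + α - 1 - 2/γ = α + β - 1 := by rw [hβdef]; ring
  rw [hexp]
  have htj : 0 < t j := hpos hj1
  have ht1N : t 1 ≤ t N := hmono hN
  rcases eq_or_lt_of_le hj1 with h1 | h2
  · -- j = 1
    have hj1' : j = 1 := h1.symm
    subst hj1'
    rw [show (1:ℕ)-1 = 0 from rfl, h00]
    have hdom : IntervalIntegrable (fun x : ℝ => Kin * τ^2 * x^(α+β-1)) volume 0 (t 1) :=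
      (intervalIntegral.intervalIntegrable_rpow' (by linarith)).const_mul _
    have key := intervalIntegral.norm_integral_le_abs_of_norm_le (μ := volume)
      (f := fun x => ∫ s in (0:ℝ)..x, ((x - s) ^ (α - 1) / Real.Gamma α) * e₁ s)
      (g := fun x => Kin * τ^2 * x^(α+β-1))
      (ae_restrict_of_forall_mem measurableSet_uIoc (fun x hxi => by
        rw [uIoc_of_le ht1p.le] at hxi
        rw [Real.norm_eq_abs]
        exact hH x ⟨hxi.1, hxi.2.trans ht1N⟩)) hdom
    have hcomp : ∫ x in (0:ℝ)..(t 1), Kin * τ^2 * x^(α+β-1)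
        = Kin * τ^2 * ((t 1)^(α+β)/(α+β)) := by
      rw [intervalIntegral.integral_const_mul, integral_rpow (Or.inl (by linarith)),
        show α+β-1+1 = α+β by ring, Real.zero_rpow hαβ.ne']
      ring
    rw [Real.norm_eq_abs, hcomp, abs_of_nonneg (mul_nonneg
      (mul_nonneg hKin.le (by positivity))
      (div_nonneg (Real.rpow_nonneg ht1p.le _) hαβ.le))] at key
    refine le_trans key ?_
    have hsplit1 : (t 1)^(α+β) = t 1 * (t 1)^(α+β-1) := by
      have h' := Real.rpow_add_one ht1p.ne' (α+β-1)
      rw [show α+β-1+1 = α+β by ring] at h'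
      rw [h']; ring
    rw [hsplit1, sub_zero]
    have hP : 0 ≤ Kin * τ^2 * (t 1 * (t 1)^(α+β-1)) :=
      mul_nonneg (mul_nonneg hKin.le (by positivity))
        (mul_nonneg ht1p.le (Real.rpow_nonneg ht1p.le _))
    have hQ : 0 ≤ Kin * τ^2 * (t 1 * (t 1)^(α+β-1)) * (2:ℝ)^γ :=
      mul_nonneg hP h2γnn
    have hR : Kin * ((2:ℝ)^γ + 1/(α+β)) * t 1 * τ^2 * (t 1)^(α+β-1)
        - Kin * τ^2 * (t 1 * (t 1)^(α+β-1)/(α+β))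
        = Kin * τ^2 * (t 1 * (t 1)^(α+β-1)) * (2:ℝ)^γ := by ring
    linarith [hQ, hR]
  · -- j ≥ 2
    have hj2 : 2 ≤ j := h2
    have htj1 : 0 < t (j-1) := hpos (by omega)
    have htj1j : t (j-1) ≤ t j := hmono (by omega)
    have hrat := hratio j hj2
    have hbd : ∀ x ∈ Set.uIoc (t (j-1)) (t j),
        ‖∫ s in (0:ℝ)..x, ((x - s) ^ (α - 1) / Real.Gamma α) * e₁ s‖
          ≤ Kin * τ^2 * ((2:ℝ)^γ * (t j)^(α+β-1)) := by
      intro x hxi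
      rw [uIoc_of_le htj1j] at hxi
      have hx0 : 0 < x := lt_trans htj1 hxi.1
      have hxN : x ∈ Ioc 0 (t N) := ⟨hx0, hxi.2.trans (hmono hjN)⟩
      rw [Real.norm_eq_abs]
      refine le_trans (hH x hxN) ?_
      apply mul_le_mul_of_nonneg_left _ (mul_nonneg hKin.le (by positivity))
      have hxe : x^(α+β-1) = x^(α+β)/x := by
        rw [show α+β-1 = (α+β)-1 by ring, Real.rpow_sub hx0, Real.rpow_one]
      have hty : (t j)^(α+β-1) = (t j)^(α+β)/(t j) := by
        rw [show α+β-1 = (α+β)-1 by ring, Real.rpow_sub htj, Real.rpow_one]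
      rw [hxe, hty]
      have hstep1 : x^(α+β)/x ≤ (t j)^(α+β)/(t (j-1)) := by
        exact div_le_div₀ (Real.rpow_nonneg htj.le _)
          (Real.rpow_le_rpow hx0.le hxi.2 hαβ.le) htj1 hxi.1.le
      have hstep2 : (t j)^(α+β)/(t (j-1)) ≤ (2:ℝ)^γ * ((t j)^(α+β)/(t j)) := by
        rw [div_le_iff₀ htj1]
        have hfs : (t j)^(α+β) = ((t j)^(α+β)/t j) * t j := by field_simp
        have hmid : ((t j)^(α+β)/t j) * t j ≤ ((t j)^(α+β)/t j) * ((2:ℝ)^γ * t (j-1)) :=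
          mul_le_mul_of_nonneg_left hrat
            (div_nonneg (Real.rpow_nonneg htj.le _) htj.le)
        calc (t j)^(α+β) = ((t j)^(α+β)/t j) * t j := hfs
        _ ≤ ((t j)^(α+β)/t j) * ((2:ℝ)^γ * t (j-1)) := hmid
        _ = (2:ℝ)^γ * ((t j)^(α+β)/t j) * t (j-1) := by ring
      exact le_trans hstep1 hstep2
    have key := intervalIntegral.norm_integral_le_of_norm_le_const hbd
    rw [Real.norm_eq_abs, abs_of_nonneg (sub_nonneg.2 htj1j)] at key
    refine le_trans key ?_
    have hP : 0 ≤ Kin * τ^2 * (t j)^(α+β-1) * (t j - t (j-1)) :=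
      mul_nonneg (mul_nonneg (mul_nonneg hKin.le (by positivity))
        (Real.rpow_nonneg htj.le _)) (sub_nonneg.2 htj1j)
    have hinv : (0:ℝ) < 1/(α+β) := by positivity
    have hR : Kin * ((2:ℝ)^γ + 1/(α+β)) * (t j - t (j-1)) * τ^2 * (t j)^(α+β-1)
        - Kin * τ^2 * ((2:ℝ)^γ * (t j)^(α+β-1)) * (t j - t (j-1))
        = Kin * τ^2 * (t j)^(α+β-1) * (t j - t (j-1)) * (1/(α+β)) := by ring
    linarith [mul_nonneg hP hinv.le, hR]
end

section
/- Let T > 0, γ ≥ 1, N ≥ 2, and let (t_i)_{i=0}^N be the graded time mesh with τ = T^{1/γ}/N and τ_n = t_n − t_{n−1}. Then for every 2 ≤ n ≤ N: (i) t_n ≤ 2^γ t_{n−1}; (ii) γ τ t_{n−1}^{1−1/γ} ≤ τ_n ≤ γ τ t_n^{1−1/γ}. Moreover, (iii) there exists a nonnegative constant c_γ depending only on γ, with c_γ = 0 when γ = 1, such that τ_n − τ_{n−1} ≤ c_γ τ² t_n^{1−2/γ} for all N ≥ 2 and all 2 ≤ n ≤ N. -/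
open Set
lemma mvt_rpow (p a b : ℝ) (hab : a < b) (h : 0 < a ∨ 1 ≤ p) :
    ∃ c, a < c ∧ c < b ∧ b ^ p - a ^ p = p * c ^ (p - 1) * (b - a) := by
  have key : ∀ x : ℝ, a ≤ x → HasDerivAt (fun y : ℝ => y ^ p) (p * x ^ (p - 1)) x := by
    intro x hx
    exact Real.hasDerivAt_rpow_const (h.imp (fun ha => ne_of_gt (lt_of_lt_of_le ha hx)) id)
  obtain ⟨c, hc, heq⟩ := exists_hasDerivAt_eq_slope (fun y : ℝ => y ^ p)
    (fun y => p * y ^ (p - 1)) hab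
    (fun x hx => (key x hx.1).continuousAt.continuousWithinAt)
    (fun x hx => key x hx.1.le)
  refine ⟨c, hc.1, hc.2, ?_⟩
  rw [eq_div_iff (sub_ne_zero.2 hab.ne')] at heq
  linarith [heq]

lemma second_diff_bound (γ : ℝ) (hγ : 1 ≤ γ) (x : ℝ) (hx : 2 ≤ x) :
    ∃ d, x - 2 < d ∧ d < x ∧
      (x ^ γ - (x - 1) ^ γ) - ((x - 1) ^ γ - (x - 2) ^ γ)
        ≤ 2 * γ * (γ - 1) * d ^ (γ - 2) := by
  obtain ⟨c₁, hc₁l, hc₁r, h1⟩ := mvt_rpow γ (x - 1) x (by linarith) (Or.inr hγ)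
  obtain ⟨c₂, hc₂l, hc₂r, h2⟩ := mvt_rpow γ (x - 2) (x - 1) (by linarith) (Or.inr hγ)
  have hc₂pos : 0 < c₂ := lt_of_le_of_lt (by linarith) hc₂l
  have hcc : c₂ < c₁ := lt_trans hc₂r hc₁l
  obtain ⟨d, hdl, hdr, h3⟩ := mvt_rpow (γ - 1) c₂ c₁ hcc (Or.inl hc₂pos)
  have hd2 : γ - 1 - 1 = γ - 2 := by ring
  rw [hd2] at h3
  have hdpos : 0 < d := lt_trans hc₂pos hdl
  have hdrp : (0:ℝ) ≤ d ^ (γ - 2) := (Real.rpow_pos_of_pos hdpos _).le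
  refine ⟨d, by linarith, by linarith, ?_⟩
  have hcc2 : c₁ - c₂ ≤ 2 := by linarith
  have hγ1 : 0 ≤ γ - 1 := by linarith
  have hγ0 : 0 < γ := by linarith
  nlinarith [mul_nonneg (mul_nonneg hγ0.le hγ1) hdrp,
    mul_le_mul_of_nonneg_left hcc2 (mul_nonneg (mul_nonneg hγ0.le hγ1) hdrp)]


lemma two_rpow_case (γ : ℝ) (hγ : 1 ≤ γ) (hγ2 : γ ≤ 2) :
    (2:ℝ) ^ γ - 2 ≤ γ * (γ - 1) * 2 ^ γ := by
  have h1 : (2:ℝ) - γ ≤ (2:ℝ) ^ (1 - γ) := by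
    rw [Real.rpow_def_of_pos (by norm_num : (0:ℝ) < 2)]
    have he := Real.add_one_le_exp (Real.log 2 * (1 - γ))
    have hlog : Real.log 2 ≤ 1 := by
      have := Real.log_le_sub_one_of_pos (by norm_num : (0:ℝ) < 2); linarith
    have hlogpos : 0 < Real.log 2 := Real.log_pos (by norm_num)
    nlinarith
  have h2 : (2:ℝ) ^ γ * 2 ^ (1 - γ) = 2 := by
    rw [← Real.rpow_add (by norm_num : (0:ℝ) < 2)]
    norm_num
  have h2γ : (0:ℝ) < 2 ^ γ := Real.rpow_pos_of_pos (by norm_num) γ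
  nlinarith [mul_le_mul_of_nonneg_left h1 h2γ.le,
    mul_nonneg (mul_nonneg (by linarith : (0:ℝ) ≤ γ - 1) (by linarith : (0:ℝ) ≤ γ - 1)) h2γ.le]

lemma key3 (γ : ℝ) (hγ : 1 ≤ γ) (x : ℝ) (hx : x = 2 ∨ 3 ≤ x) :
    (x ^ γ - (x - 1) ^ γ) - ((x - 1) ^ γ - (x - 2) ^ γ)
      ≤ 8 * γ * (γ - 1) * x ^ (γ - 2) := by
  have hγ0 : 0 < γ := by linarith
  have hγ1 : 0 ≤ γ - 1 := by linarith
  have hx2 : (2:ℝ) ≤ x := by rcases hx with rfl | h <;> linarith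
  have hxpos : (0:ℝ) < x := by linarith
  have hxrp : (0:ℝ) ≤ x ^ (γ - 2) := (Real.rpow_pos_of_pos hxpos _).le
  rcases le_or_gt γ 2 with h2 | h2
  · rcases hx with rfl | hx3
    · -- x = 2
      norm_num [Real.one_rpow, Real.zero_rpow hγ0.ne']
      have hkey := two_rpow_case γ hγ h2
      have h42 : (2:ℝ) ^ (2:ℝ) = 4 := by
        rw [show (2:ℝ) = ((2:ℕ):ℝ) from by norm_num, Real.rpow_natCast]
        norm_num
      have h4 : (2:ℝ) ^ γ = 2 ^ (γ - 2) * 4 := by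
        rw [← h42, ← Real.rpow_add (by norm_num : (0:ℝ) < 2) (γ-2)]
        congr 1
        ring
      have h2γ2 : (0:ℝ) ≤ (2:ℝ) ^ (γ - 2) := (Real.rpow_pos_of_pos (by norm_num) _).le
      nlinarith [mul_nonneg (mul_nonneg hγ0.le hγ1) h2γ2]
    · -- 3 ≤ x, γ ≤ 2
      obtain ⟨d, hdl, hdr, hD⟩ := second_diff_bound γ hγ x hx2
      have hdpos : (0:ℝ) < d := by linarith
      have hx3pos : (0:ℝ) < x / 3 := by linarith
      have hdx3 : x / 3 ≤ d := by linarith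
      have hb1 : d ^ (γ - 2) ≤ (x / 3) ^ (γ - 2) :=
        Real.rpow_le_rpow_of_nonpos hx3pos hdx3 (by linarith)
      have hb2 : (x / 3) ^ (γ - 2) = x ^ (γ - 2) / 3 ^ (γ - 2) :=
        Real.div_rpow hxpos.le (by norm_num) _
      have hb3 : (1:ℝ) / 3 ≤ (3:ℝ) ^ (γ - 2) := by
        have := Real.rpow_le_rpow_of_exponent_le (by norm_num : (1:ℝ) ≤ 3)
          (by linarith : (-1:ℝ) ≤ γ - 2)
        rwa [Real.rpow_neg_one, inv_eq_one_div] at this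
      have h3pos : (0:ℝ) < (3:ℝ) ^ (γ - 2) := Real.rpow_pos_of_pos (by norm_num) _
      have hb4 : x ^ (γ - 2) / 3 ^ (γ - 2) ≤ 3 * x ^ (γ - 2) := by
        rw [div_le_iff₀ h3pos]
        nlinarith
      have hdb : d ^ (γ - 2) ≤ 3 * x ^ (γ - 2) := by linarith
      have hnn : 0 ≤ 2 * γ * (γ - 1) := by nlinarith
      nlinarith [mul_le_mul_of_nonneg_left hdb hnn]
  · -- 2 ≤ γ
    obtain ⟨d, hdl, hdr, hD⟩ := second_diff_bound γ hγ x hx2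
    have hdpos : (0:ℝ) < d := by linarith
    have hdb : d ^ (γ - 2) ≤ x ^ (γ - 2) :=
      Real.rpow_le_rpow hdpos.le hdr.le (by linarith)
    have hnn : 0 ≤ 2 * γ * (γ - 1) := by nlinarith
    nlinarith [mul_le_mul_of_nonneg_left hdb hnn]


/-- graded mesh properties, eq. (2.2).
For the graded mesh `tᵢ = (iτ)^γ`, `τ = T^(1/γ)/N`, and `2 ≤ n ≤ N`:
(i) `tₙ ≤ 2^γ t_{n-1}`;
(ii) `γ τ t_{n-1}^{1-1/γ} ≤ τₙ ≤ γ τ tₙ^{1-1/γ}` where `τₙ = tₙ - t_{n-1}`;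
(iii) there is `c_γ ≥ 0` depending only on `γ`, with `c_γ = 0` when `γ = 1`, such that
`τₙ - τ_{n-1} ≤ c_γ τ² tₙ^{1-2/γ}` for all `N ≥ 2` and `2 ≤ n ≤ N`. -/
theorem stmt_13 (T γ : ℝ) (hT : 0 < T) (hγ : 1 ≤ γ) (N : ℕ) (hN : 2 ≤ N)
    (t : ℕ → ℝ) (ht : ∀ i, t i = ((i : ℝ) * (T ^ (1/γ) / N)) ^ γ) :
    (∀ n : ℕ, 2 ≤ n → n ≤ N → t n ≤ 2 ^ γ * t (n-1)) ∧
    (∀ n : ℕ, 2 ≤ n → n ≤ N →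
      γ * (T ^ (1/γ) / N) * (t (n-1)) ^ (1 - 1/γ) ≤ t n - t (n-1) ∧
      t n - t (n-1) ≤ γ * (T ^ (1/γ) / N) * (t n) ^ (1 - 1/γ)) ∧
    (∃ cγ : ℝ, 0 ≤ cγ ∧ (γ = 1 → cγ = 0) ∧
      ∀ N' : ℕ, 2 ≤ N' → ∀ n : ℕ, 2 ≤ n → n ≤ N' →
        (((n : ℝ) * (T ^ (1/γ) / N')) ^ γ - (((n : ℝ) - 1) * (T ^ (1/γ) / N')) ^ γ)
          - ((((n : ℝ) - 1) * (T ^ (1/γ) / N')) ^ γ - (((n : ℝ) - 2) * (T ^ (1/γ) / N')) ^ γ)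
        ≤ cγ * (T ^ (1/γ) / N') ^ 2 *
            (((n : ℝ) * (T ^ (1/γ) / N')) ^ γ) ^ (1 - 2/γ)) := by
  have hγ0 : 0 < γ := by linarith
  have hN0 : (0:ℝ) < N := by exact_mod_cast (by omega : 0 < N)
  set τ : ℝ := T ^ (1/γ) / N with hτdef
  have hτ : 0 < τ := div_pos (Real.rpow_pos_of_pos hT _) hN0
  have hcast : ∀ n : ℕ, 2 ≤ n → ((n-1 : ℕ):ℝ) = (n:ℝ) - 1 := by
    intro n h2
    push_cast [Nat.cast_sub (show 1 ≤ n by omega)]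
    ring
  refine ⟨?_, ?_, ?_⟩
  · -- (i)
    intro n h2 hn
    rw [ht n, ht (n-1), hcast n h2]
    have hn2 : (2:ℝ) ≤ (n:ℝ) := by exact_mod_cast h2
    rw [← Real.mul_rpow (by norm_num : (0:ℝ) ≤ 2) (by nlinarith : (0:ℝ) ≤ ((n:ℝ)-1) * τ)]
    exact Real.rpow_le_rpow (by positivity) (by nlinarith) hγ0.le
  · -- (ii)
    intro n h2 hn
    rw [ht n, ht (n-1), hcast n h2]
    have hn2 : (2:ℝ) ≤ (n:ℝ) := by exact_mod_cast h2
    have ha : (0:ℝ) < ((n:ℝ)-1) * τ := by nlinarith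
    have hb : (0:ℝ) < (n:ℝ) * τ := by nlinarith
    have hab : ((n:ℝ)-1) * τ < (n:ℝ) * τ := by nlinarith
    obtain ⟨c, hcl, hcr, hmvt⟩ := mvt_rpow γ (((n:ℝ)-1) * τ) ((n:ℝ) * τ) hab (Or.inl ha)
    have hba : (n:ℝ) * τ - ((n:ℝ)-1) * τ = τ := by ring
    rw [hba] at hmvt
    have hcpos : (0:ℝ) < c := lt_trans ha hcl
    have hexp : ∀ y : ℝ, 0 < y → (y^γ)^(1-1/γ) = y^(γ-1) := by
      intro y hy
      rw [← Real.rpow_mul hy.le]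
      congr 1
      rw [mul_sub, mul_one, mul_one_div, div_self hγ0.ne']
    constructor
    · rw [hexp _ ha, hmvt]
      have hle : (((n:ℝ)-1) * τ)^(γ-1) ≤ c^(γ-1) :=
        Real.rpow_le_rpow ha.le hcl.le (by linarith)
      nlinarith [mul_le_mul_of_nonneg_left hle (by positivity : (0:ℝ) ≤ γ * τ)]
    · rw [hexp _ hb, hmvt]
      have hle : c^(γ-1) ≤ ((n:ℝ) * τ)^(γ-1) :=
        Real.rpow_le_rpow hcpos.le hcr.le (by linarith)
      nlinarith [mul_le_mul_of_nonneg_left hle (by positivity : (0:ℝ) ≤ γ * τ)]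
  · -- (iii)
    refine ⟨8*γ*(γ-1), by nlinarith, by intro h; rw [h]; ring, ?_⟩
    intro N' hN' n h2 hn
    have hN0' : (0:ℝ) < N' := by exact_mod_cast (by omega : 0 < N')
    set s : ℝ := T ^ (1/γ) / N' with hs
    have hsp : 0 < s := div_pos (Real.rpow_pos_of_pos hT _) hN0'
    have hn2 : (2:ℝ) ≤ (n:ℝ) := by exact_mod_cast h2
    have hX : (n:ℝ) = 2 ∨ 3 ≤ (n:ℝ) := by
      rcases Nat.lt_or_ge n 3 with h | h
      · left
        have : n = 2 := by omega
        rw [this]; norm_num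
      · right; exact_mod_cast h
    have hkey := key3 γ hγ (n:ℝ) hX
    have hXs : (0:ℝ) < (n:ℝ) * s := by nlinarith
    have hrhs : (((n:ℝ)*s)^γ)^(1-2/γ) = (n:ℝ)^(γ-2) * s^(γ-2) := by
      rw [← Real.rpow_mul hXs.le,
        show γ*(1-2/γ) = γ-2 from by rw [mul_sub, mul_one, mul_div_cancel₀ _ hγ0.ne'],
        Real.mul_rpow (by linarith) hsp.le]
    rw [hrhs]
    have hm : ∀ y : ℝ, 0 ≤ y → (y * s)^γ = y^γ * s^γ := fun y hy => Real.mul_rpow hy hsp.le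
    rw [hm (n:ℝ) (by linarith), hm ((n:ℝ)-1) (by linarith), hm ((n:ℝ)-2) (by linarith)]
    have hs2 : s^2 * s^(γ-2) = s^γ := by
      rw [← Real.rpow_natCast s 2, ← Real.rpow_add hsp]
      congr 1
      push_cast
      ring
    rw [show 8*γ*(γ-1) * s^2 * ((n:ℝ)^(γ-2) * s^(γ-2)) =
      8*γ*(γ-1)*(n:ℝ)^(γ-2) * (s^2 * s^(γ-2)) from by ring, hs2]
    have hsγ : (0:ℝ) < s^γ := Real.rpow_pos_of_pos hsp γ
    nlinarith [mul_le_mul_of_nonneg_left hkey hsγ.le]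
end

section
/- Let H be a real Hilbert space and a < b real numbers. Let F : [a,b] → L(H) (bounded linear operators on H, with the operator norm) be twice continuously differentiable, let v : [a,b] → H be continuously differentiable, and set F̄ = (F(a) + F(b))/2. Then ‖ ∫_a^b (F(t) − F̄) v(t) dt ‖ ≤ (b − a)² · max( sup_{t ∈ [a,b]} ‖F′(t)‖ , sup_{t ∈ [a,b]} ‖F″(t)‖ ) · ∫_a^b ( ‖v′(t)‖ + ‖v(t)‖ ) dt. -/
set_option maxHeartbeats 1000000

open MeasureTheory Set

lemma ftc_aux {E : Type*} [NormedAddCommGroup E] [NormedSpace ℝ E] [CompleteSpace E]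
    {a b : ℝ} {f f' : ℝ → E}
    (hf : ∀ s ∈ Icc a b, HasDerivWithinAt f (f' s) (Icc a b) s)
    (hf' : ContinuousOn f' (Icc a b))
    {c d : ℝ} (hac : a ≤ c) (hcd : c ≤ d) (hdb : d ≤ b) :
    ∫ u in c..d, f' u = f d - f c := by
  have hsub : Icc c d ⊆ Icc a b := Icc_subset_Icc hac hdb
  apply intervalIntegral.integral_eq_sub_of_hasDeriv_right_of_le hcd
  · exact ContinuousOn.mono (fun s hs => (hf s hs).continuousWithinAt) hsub
  · intro x hx
    have hx' : x ∈ Icc a b := ⟨hac.trans hx.1.le, hx.2.le.trans hdb⟩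
    exact ((hf x hx').hasDerivAt (Icc_mem_nhds (lt_of_le_of_lt hac hx.1)
      (lt_of_lt_of_le hx.2 hdb))).hasDerivWithinAt
  · exact (hf'.mono (by rw [uIcc_of_le hcd] at *; exact hsub)).intervalIntegrable

/-- midpoint quadrature estimate for the driving force, Lemma 5.2.
For `F : [a,b] → L(H)` twice continuously differentiable (operator norm), `v : [a,b] → H`
continuously differentiable, and `F̄ = (F(a)+F(b))/2`:
`‖∫ₐᵇ (F(s) - F̄)(v(s)) ds‖
   ≤ (b-a)² max(sup ‖F'‖, sup ‖F''‖) ∫ₐᵇ (‖v'(s)‖ + ‖v(s)‖) ds`. -/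
theorem stmt_14 {H : Type*} [NormedAddCommGroup H] [InnerProductSpace ℝ H] [CompleteSpace H]
    (a b : ℝ) (hab : a < b)
    (F F' F'' : ℝ → H →L[ℝ] H)
    (hF1 : ∀ s ∈ Icc a b, HasDerivWithinAt F (F' s) (Icc a b) s)
    (hF2 : ∀ s ∈ Icc a b, HasDerivWithinAt F' (F'' s) (Icc a b) s)
    (hF'' : ContinuousOn F'' (Icc a b))
    (v v' : ℝ → H)
    (hv : ∀ s ∈ Icc a b, HasDerivWithinAt v (v' s) (Icc a b) s)
    (hv' : ContinuousOn v' (Icc a b)) :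
    ‖∫ s in a..b, (F s - (1/2 : ℝ) • (F a + F b)) (v s)‖
      ≤ (b - a) ^ 2 *
          max (sSup ((fun s => ‖F' s‖) '' Icc a b)) (sSup ((fun s => ‖F'' s‖) '' Icc a b)) *
          ∫ s in a..b, (‖v' s‖ + ‖v s‖) := by
  have hab' : a ≤ b := hab.le
  have hba : (0 : ℝ) < b - a := sub_pos.2 hab
  have huIcc : uIcc a b = Icc a b := uIcc_of_le hab'
  set Fb : H →L[ℝ] H := (1/2 : ℝ) • (F a + F b) with hFbdef
  set S1 := sSup ((fun s => ‖F' s‖) '' Icc a b) with hS1def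
  set S2 := sSup ((fun s => ‖F'' s‖) '' Icc a b) with hS2def
  set M := max S1 S2 with hMdef
  have haI : a ∈ Icc a b := left_mem_Icc.2 hab'
  have hbI : b ∈ Icc a b := right_mem_Icc.2 hab'
  have hcoF : ContinuousOn F (Icc a b) := fun s hs => (hF1 s hs).continuousWithinAt
  have hcoF' : ContinuousOn F' (Icc a b) := fun s hs => (hF2 s hs).continuousWithinAt
  have hcov : ContinuousOn v (Icc a b) := fun s hs => (hv s hs).continuousWithinAt
  have hS1 : ∀ t ∈ Icc a b, ‖F' t‖ ≤ S1 := fun t ht =>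
    le_csSup (isCompact_Icc.bddAbove_image hcoF'.norm) ⟨t, ht, rfl⟩
  have hS2 : ∀ t ∈ Icc a b, ‖F'' t‖ ≤ S2 := fun t ht =>
    le_csSup (isCompact_Icc.bddAbove_image hF''.norm) ⟨t, ht, rfl⟩
  have hS1n : (0:ℝ) ≤ S1 := (norm_nonneg _).trans (hS1 a haI)
  have hS2n : (0:ℝ) ≤ S2 := (norm_nonneg _).trans (hS2 a haI)
  have hS1M : S1 ≤ M := le_max_left _ _
  have hS2M : S2 ≤ M := le_max_right _ _
  have hMn : (0:ℝ) ≤ M := hS1n.trans hS1M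
  -- MVT bounds
  have hMVT : ∀ x ∈ Icc a b, ∀ y ∈ Icc a b, ‖F y - F x‖ ≤ S1 * ‖y - x‖ := fun x hx y hy =>
    (convex_Icc a b).norm_image_sub_le_of_norm_hasDerivWithin_le hF1 hS1 hx hy
  have hMVT' : ∀ x ∈ Icc a b, ∀ y ∈ Icc a b, ‖F' y - F' x‖ ≤ S2 * ‖y - x‖ := fun x hx y hy =>
    (convex_Icc a b).norm_image_sub_le_of_norm_hasDerivWithin_le hF2 hS2 hx hy
  -- key pointwise bound
  have hL1 : ∀ t ∈ Icc a b, ‖F t - Fb‖ ≤ S1 * (b - a) / 2 := by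
    intro t ht
    have h1 : ‖F t - F a‖ ≤ S1 * (t - a) := by
      have h := hMVT a haI t ht
      rwa [Real.norm_eq_abs, abs_of_nonneg (sub_nonneg.2 ht.1)] at h
    have h2 : ‖F t - F b‖ ≤ S1 * (b - t) := by
      have h := hMVT b hbI t ht
      rwa [Real.norm_eq_abs, abs_of_nonpos (sub_nonpos.2 ht.2), neg_sub] at h
    have heq : F t - Fb = (1/2 : ℝ) • ((F t - F a) + (F t - F b)) := by
      rw [hFbdef]; module
    rw [heq]
    calc ‖(1/2:ℝ) • ((F t - F a) + (F t - F b))‖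
        = (1/2) * ‖(F t - F a) + (F t - F b)‖ := by
          have hns := norm_smul (1/2:ℝ) ((F t - F a) + (F t - F b))
          rw [Real.norm_eq_abs] at hns
          rw [hns]; norm_num
      _ ≤ (1/2) * (S1*(t-a) + S1*(b-t)) := by
          refine mul_le_mul_of_nonneg_left ?_ (by norm_num)
          exact (norm_add_le _ _).trans (add_le_add h1 h2)
      _ = S1 * (b-a) / 2 := by ring
  have hnb : ∀ t ∈ Icc a b, a + b - t ∈ Icc a b := fun t ht =>
    ⟨by linarith [ht.2], by linarith [ht.1]⟩
  have hL2 : ∀ u ∈ Icc a b, ‖F' u - F' (a + b - u)‖ ≤ S2 * (b - a) := by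
    intro u hu
    refine (hMVT' (a+b-u) (hnb u hu) u hu).trans ?_
    refine mul_le_mul_of_nonneg_left ?_ hS2n
    rw [Real.norm_eq_abs, abs_le]
    constructor <;> [skip; skip] <;> [linarith [hu.1, hu.2]; linarith [hu.1, hu.2]]
  -- FTC facts
  have hftcF : ∀ c ∈ Icc a b, ∀ d ∈ Icc a b, c ≤ d → (∫ u in c..d, F' u) = F d - F c :=
    fun c hc d hd hcd => ftc_aux hF1 hcoF' hc.1 hcd hd.2
  have hftcv : ∀ t ∈ Icc a b, (∫ u in t..b, v' u) = v b - v t :=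
    fun t ht => ftc_aux hv hv' ht.1 ht.2 le_rfl
  set K := ∫ s in a..b, ‖v' s‖ with hKdef
  set J := ∫ s in a..b, ‖v s‖ with hJdef
  have hInt_nv' : IntervalIntegrable (fun s => ‖v' s‖) volume a b :=
    ContinuousOn.intervalIntegrable (by rw [huIcc]; exact hv'.norm)
  have hInt_nv : IntervalIntegrable (fun s => ‖v s‖) volume a b :=
    ContinuousOn.intervalIntegrable (by rw [huIcc]; exact hcov.norm)
  have hKn : (0:ℝ) ≤ K := intervalIntegral.integral_nonneg hab' (fun u _ => norm_nonneg _)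
  have hJn : (0:ℝ) ≤ J := intervalIntegral.integral_nonneg hab' (fun u _ => norm_nonneg _)
  have hL4 : ∀ t ∈ Icc a b, ‖v b - v t‖ ≤ K := by
    intro t ht
    rw [← hftcv t ht]
    refine (intervalIntegral.norm_integral_le_integral_norm ht.2).trans ?_
    exact intervalIntegral.integral_mono_interval ht.1 ht.2 le_rfl
      (ae_of_all _ fun x => norm_nonneg _) hInt_nv'
  have hL5 : (b - a) * ‖v b‖ ≤ J + (b - a) * K := by
    have hpt : ∀ t ∈ Icc a b, ‖v b‖ ≤ ‖v t‖ + K := by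
      intro t ht
      have h3 : ‖v b‖ ≤ ‖v t‖ + ‖v b - v t‖ := by
        have := norm_add_le (v t) (v b - v t)
        simpa using this
      exact h3.trans (add_le_add_right (hL4 t ht) _)
    have hmono := intervalIntegral.integral_mono_on (f := fun _ => ‖v b‖)
      (g := fun t => ‖v t‖ + K) hab' intervalIntegrable_const
      (hInt_nv.add intervalIntegrable_const) hpt
    rw [intervalIntegral.integral_const, intervalIntegral.integral_add hInt_nv
      intervalIntegrable_const, intervalIntegral.integral_const] at hmono
    simpa [smul_eq_mul] using hmono
  -- integrability of operator-valued integrands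
  have hFint : IntervalIntegrable (fun s => F s - Fb) volume a b :=
    ContinuousOn.intervalIntegrable (by rw [huIcc]; exact hcoF.sub continuousOn_const)
  set T := ∫ t in a..b, (F t - Fb) with hTdef
  have hT1 : ‖T‖ ≤ S1 * (b-a)/2 * (b-a) := by
    have h := intervalIntegral.norm_integral_le_of_norm_le_const (C := S1*(b-a)/2)
      (f := fun t => F t - Fb) (a := a) (b := b) (fun x hx => by
        rw [uIoc_of_le hab'] at hx
        exact hL1 x ⟨hx.1.le, hx.2⟩)
    rwa [abs_of_nonneg hba.le] at h
  -- trapezoid bound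
  have hGpt : ∀ t ∈ Icc a b, ‖(F t - Fb) + (F (a+b-t) - Fb)‖ ≤ S2 * (b-a) * (b-a) := by
    intro t ht
    have hint1 : IntervalIntegrable F' volume a t :=
      ContinuousOn.intervalIntegrable (by
        rw [uIcc_of_le ht.1]; exact hcoF'.mono (Icc_subset_Icc le_rfl ht.2))
    have hint2 : IntervalIntegrable (fun u => F' (a+b-u)) volume a t :=
      ContinuousOn.intervalIntegrable (by
        rw [uIcc_of_le ht.1]
        refine hcoF'.comp (Continuous.continuousOn (continuous_const.sub continuous_id)) ?_
        intro u hu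
        exact hnb u ⟨hu.1, hu.2.trans ht.2⟩)
    have h1 : (∫ u in a..t, F' u) = F t - F a := hftcF a haI t ht ht.1
    have h2 : (∫ u in a..t, F' (a+b-u)) = F b - F (a+b-t) := by
      have hc := intervalIntegral.integral_comp_sub_left (a := a) (b := t)
        (f := F') (a+b)
      have e2 : a + b - a = b := by ring
      rw [e2] at hc
      rw [hc]
      exact hftcF (a+b-t) (hnb t ht) b hbI (by linarith [ht.1])
    have h3 : (F t - Fb) + (F (a+b-t) - Fb) = ∫ u in a..t, (F' u - F' (a+b-u)) := by
      rw [intervalIntegral.integral_sub hint1 hint2, h1, h2, hFbdef]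
      module
    rw [h3]
    have hb2 := intervalIntegral.norm_integral_le_of_norm_le_const (C := S2*(b-a))
      (f := fun u => F' u - F' (a+b-u)) (a := a) (b := t) (fun u hu => by
        rw [uIoc_of_le ht.1] at hu
        exact hL2 u ⟨hu.1.le, hu.2.trans ht.2⟩)
    refine hb2.trans ?_
    rw [abs_of_nonneg (by linarith [ht.1])]
    have h4 : t - a ≤ b - a := by linarith [ht.2]
    nlinarith [mul_nonneg hS2n hba.le]
  have hIntGsh : IntervalIntegrable (fun t => F (a+b-t) - Fb) volume a b :=
    ContinuousOn.intervalIntegrable (by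
      rw [huIcc]
      refine ContinuousOn.sub ?_ continuousOn_const
      refine hcoF.comp (Continuous.continuousOn (continuous_const.sub continuous_id)) ?_
      intro u hu; exact hnb u hu)
  have hTdouble : (∫ t in a..b, ((F t - Fb) + (F (a+b-t) - Fb))) = (2:ℝ) • T := by
    rw [intervalIntegral.integral_add hFint hIntGsh]
    have hc := intervalIntegral.integral_comp_sub_left (a := a) (b := b)
      (f := fun x => F x - Fb) (a+b)
    have e1 : a + b - b = a := by ring
    have e2 : a + b - a = b := by ring
    rw [e1, e2] at hc
    rw [hc, ← hTdef, two_smul]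
  have h2T : (2:ℝ) * ‖T‖ ≤ S2 * (b-a) * (b-a) * (b-a) := by
    have hbnd := intervalIntegral.norm_integral_le_of_norm_le_const (C := S2*(b-a)*(b-a))
      (f := fun t => (F t - Fb) + (F (a+b-t) - Fb)) (a := a) (b := b) (fun t htm => by
        rw [uIoc_of_le hab'] at htm
        exact hGpt t ⟨htm.1.le, htm.2⟩)
    rw [hTdouble, abs_of_nonneg hba.le] at hbnd
    have hnorm2 : ‖(2:ℝ) • T‖ = 2 * ‖T‖ := by
      have hns := norm_smul (2:ℝ) T
      rw [Real.norm_eq_abs] at hns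
      rw [hns]; norm_num
    rw [hnorm2] at hbnd
    linarith
  -- split the main integral
  have hI1int : IntervalIntegrable (fun s => (F s - Fb) (v s - v b)) volume a b :=
    ContinuousOn.intervalIntegrable (by
      rw [huIcc]
      exact (hcoF.sub continuousOn_const).clm_apply (hcov.sub continuousOn_const))
  have hI2int : IntervalIntegrable (fun s => (F s - Fb) (v b)) volume a b :=
    ContinuousOn.intervalIntegrable (by
      rw [huIcc]
      exact (hcoF.sub continuousOn_const).clm_apply continuousOn_const)
  have happ : (∫ s in a..b, (F s - Fb) (v b)) = T (v b) := by
    rw [hTdef, intervalIntegral.integral_of_le hab', intervalIntegral.integral_of_le hab']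
    exact (ContinuousLinearMap.integral_apply hFint.1 (v b)).symm
  have hsplit : (∫ s in a..b, (F s - Fb) (v s))
      = (∫ s in a..b, (F s - Fb) (v s - v b)) + T (v b) := by
    rw [← happ, ← intervalIntegral.integral_add hI1int hI2int]
    refine intervalIntegral.integral_congr fun s _ => ?_
    simp only [← ContinuousLinearMap.map_add]
    congr 1
    abel
  have hI1 : ‖∫ s in a..b, (F s - Fb) (v s - v b)‖ ≤ (S1*(b-a)/2*K) * (b-a) := by
    have h := intervalIntegral.norm_integral_le_of_norm_le_const (C := S1*(b-a)/2*K)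
      (f := fun s => (F s - Fb) (v s - v b)) (a := a) (b := b) (fun s hs => by
        rw [uIoc_of_le hab'] at hs
        have hs' : s ∈ Icc a b := ⟨hs.1.le, hs.2⟩
        refine (ContinuousLinearMap.le_opNorm _ _).trans ?_
        have hvk : ‖v s - v b‖ ≤ K := by rw [norm_sub_rev]; exact hL4 s hs'
        exact mul_le_mul (hL1 s hs') hvk (norm_nonneg _)
          (by positivity))
    rwa [abs_of_nonneg hba.le] at h
  -- put everything together
  rw [hsplit]
  have hRHS : (∫ s in a..b, (‖v' s‖ + ‖v s‖)) = K + J :=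
    intervalIntegral.integral_add hInt_nv' hInt_nv
  rw [hRHS]
  have hmain : ‖(∫ s in a..b, (F s - Fb) (v s - v b)) + T (v b)‖
      ≤ (S1*(b-a)/2*K) * (b-a) + ‖T‖ * ‖v b‖ :=
    (norm_add_le _ _).trans (add_le_add hI1 (T.le_opNorm (v b)))
  refine hmain.trans ?_
  -- bound ‖T‖ * ‖v b‖
  have e1 : ‖T‖ * ((b-a) * ‖v b‖) ≤ ‖T‖ * (J + (b-a)*K) :=
    mul_le_mul_of_nonneg_left hL5 (norm_nonneg _)
  have e2 : ‖T‖ * J ≤ (S2*(b-a)*(b-a)*(b-a)/2) * J :=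
    mul_le_mul_of_nonneg_right (by linarith) hJn
  have e3 : ‖T‖ * ((b-a)*K) ≤ (S1*(b-a)/2*(b-a)) * ((b-a)*K) :=
    mul_le_mul_of_nonneg_right hT1 (mul_nonneg hba.le hKn)
  have e4 : (‖T‖ * ‖v b‖) * (b-a)
      ≤ ((S2*(b-a)*(b-a)/2)*J + (S1*(b-a)/2*(b-a))*K) * (b-a) := by nlinarith
  have e5 : ‖T‖ * ‖v b‖ ≤ (S2*(b-a)*(b-a)/2)*J + (S1*(b-a)/2*(b-a))*K :=
    le_of_mul_le_mul_right e4 hba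
  have hfin1 : S1 * K ≤ M * K := mul_le_mul_of_nonneg_right hS1M hKn
  have hfin2 : S2 * J ≤ M * J := mul_le_mul_of_nonneg_right hS2M hJn
  nlinarith [sq_nonneg (b-a), mul_nonneg (mul_nonneg hS1n hba.le) hKn,
    mul_le_mul_of_nonneg_right hfin1 (sq_nonneg (b-a)),
    mul_le_mul_of_nonneg_right hfin2 (sq_nonneg (b-a)),
    mul_nonneg hMn hJn, mul_nonneg hMn hKn]
end

section
/- Let H be a real Hilbert space, 0 < α < 1, M > 0, T > 0, γ ≥ 1, N ≥ 1, and let (t_i)_{i=0}^N be the graded time mesh with τ = T^{1/γ}/N and τ_j = t_j − t_{j−1}. Let F : [0,T] → L(H) be twice continuously differentiable (operator norm) with ‖F′(t)‖ ≤ M and ‖F″(t)‖ ≤ M on [0,T], and define the piecewise constant function F̄(t) = (F(t_{j−1}) + F(t_j))/2 for t ∈ (t_{j−1}, t_j]. Let v : (0,T] → H be continuously differentiable with ‖v(t)‖ ≤ M t^{α−1} and ‖v′(t)‖ ≤ M t^{α−2} for 0 < t ≤ T. Then there exists a constant C, depending only on α, γ, M and T, such that for every 1 ≤ n ≤ N: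 Σ_{j=1}^n (1/τ_j) ‖ ∫_{t_{j−1}}^{t_j} (F(t) − F̄(t)) v(t) dt ‖² ≤ C τ^{(1+2α)γ} + C τ⁴ ∫_{t₁}^{t_n} t^{2α−4/γ} dt. -/
open MeasureTheory Set intervalIntegral

lemma rpow_mvt_upper {γ : ℝ} (hγ : 1 ≤ γ) {x y : ℝ} (hy : 0 < y) (hxy : y ≤ x) :
    x ^ γ - y ^ γ ≤ γ * x ^ (γ - 1) * (x - y) := by
  have hx : 0 < x := hy.trans_le hxy
  have hs : -1 ≤ (y - x) / x := by
    rw [le_div_iff₀ hx]; linarith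
  have h := one_add_mul_self_le_rpow_one_add hs hγ
  have h2 : (1 + (y - x) / x) = y / x := by field_simp; ring
  rw [h2, Real.div_rpow hy.le hx.le] at h
  have hxγ : 0 < x ^ γ := Real.rpow_pos_of_pos hx _
  have h4 := mul_le_mul_of_nonneg_left h hxγ.le
  have h5 : x ^ γ * (y ^ γ / x ^ γ) = y ^ γ := by field_simp
  have hxx : x ^ (γ - 1) * x = x ^ γ := by
    rw [← Real.rpow_add_one hx.ne' (γ - 1)]; ring_nf
  have h6 : x ^ γ * (1 + γ * ((y - x) / x)) = x ^ γ + γ * x ^ (γ - 1) * (y - x) := by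
    rw [← hxx]; field_simp
  rw [h5, h6] at h4
  linarith

lemma rpow_mvt_lower {γ : ℝ} (hγ : 1 ≤ γ) {x y : ℝ} (hy : 0 < y) (hxy : y ≤ x) :
    γ * y ^ (γ - 1) * (x - y) ≤ x ^ γ - y ^ γ := by
  have hx : 0 < x := hy.trans_le hxy
  have hs : -1 ≤ (x - y) / y := by
    have : (0:ℝ) ≤ (x - y) / y := div_nonneg (by linarith) hy.le
    linarith
  have h := one_add_mul_self_le_rpow_one_add hs hγ
  have h2 : (1 + (x - y) / y) = x / y := by field_simp; ring
  rw [h2, Real.div_rpow hx.le hy.le] at h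
  have hyγ : 0 < y ^ γ := Real.rpow_pos_of_pos hy _
  have h4 := mul_le_mul_of_nonneg_left h hyγ.le
  have h5 : y ^ γ * (x ^ γ / y ^ γ) = x ^ γ := by field_simp
  have hyy : y ^ (γ - 1) * y = y ^ γ := by
    rw [← Real.rpow_add_one hy.ne' (γ - 1)]; ring_nf
  have h6 : y ^ γ * (1 + γ * ((x - y) / y)) = y ^ γ + γ * y ^ (γ - 1) * (x - y) := by
    rw [← hyy]; field_simp
  rw [h5, h6] at h4
  linarith

lemma first_interval {H : Type*} [NormedAddCommGroup H] [NormedSpace ℝ H] [CompleteSpace H]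
    {α M T : ℝ} (hα0 : 0 < α) (hα1 : α < 1) (hM : 0 < M) (hT : 0 < T)
    {F F' : ℝ → H →L[ℝ] H} {v : ℝ → H}
    (hF : ∀ s ∈ Icc 0 T, HasDerivWithinAt F (F' s) (Icc 0 T) s)
    (hF'bd : ∀ s ∈ Icc 0 T, ‖F' s‖ ≤ M)
    (hvbd : ∀ s ∈ Ioc 0 T, ‖v s‖ ≤ M * s ^ (α - 1))
    {b : ℝ} (hb : 0 < b) (hbT : b ≤ T) :
    ‖∫ s in (0:ℝ)..b, (F s - (1/2 : ℝ) • (F 0 + F b)) (v s)‖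
      ≤ M ^ 2 / (2 * α) * b ^ (1 + α) := by
  set C : H →L[ℝ] H := (1/2 : ℝ) • (F 0 + F b) with hC
  have h0T : (0:ℝ) ∈ Icc (0:ℝ) T := ⟨le_rfl, hT.le⟩
  have hbTm : b ∈ Icc (0:ℝ) T := ⟨hb.le, hbT⟩
  have hnorm : ∀ s ∈ Ioc (0:ℝ) b, ‖(F s - C) (v s)‖ ≤ M ^ 2 * b / 2 * s ^ (α - 1) := by
    intro s hs
    have hsT : s ∈ Icc (0:ℝ) T := ⟨hs.1.le, hs.2.trans hbT⟩
    have h1 : ‖F s - F 0‖ ≤ M * s := by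
      have := Convex.norm_image_sub_le_of_norm_hasDerivWithin_le hF hF'bd
        (convex_Icc 0 T) h0T hsT
      simpa [Real.norm_eq_abs, abs_of_nonneg hs.1.le] using this
    have h2 : ‖F s - F b‖ ≤ M * (b - s) := by
      have := Convex.norm_image_sub_le_of_norm_hasDerivWithin_le hF hF'bd
        (convex_Icc 0 T) hbTm hsT
      have habs : ‖s - b‖ = b - s := by
        rw [Real.norm_eq_abs, abs_of_nonpos (by linarith [hs.2])]; ring
      rw [habs] at this; exact this
    have hFsC : F s - C = (1/2 : ℝ) • ((F s - F 0) + (F s - F b)) := by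
      rw [hC]; module
    have hFsCn : ‖F s - C‖ ≤ M * b / 2 := by
      rw [hFsC]
      have hsm := norm_smul_le (1/2 : ℝ) ((F s - F 0) + (F s - F b))
      have hX := norm_add_le (F s - F 0) (F s - F b)
      have h12 : ‖(1/2 : ℝ)‖ = 1/2 := by rw [Real.norm_eq_abs]; norm_num
      rw [h12] at hsm
      linarith only [hsm, hX, h1, h2]
    calc ‖(F s - C) (v s)‖ ≤ ‖F s - C‖ * ‖v s‖ := (F s - C).le_opNorm _
      _ ≤ (M * b / 2) * (M * s ^ (α - 1)) := by
          apply mul_le_mul hFsCn (hvbd s ⟨hs.1, hs.2.trans hbT⟩) (norm_nonneg _)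
          positivity
      _ = M ^ 2 * b / 2 * s ^ (α - 1) := by ring
  have hgint : IntervalIntegrable (fun s : ℝ => M ^ 2 * b / 2 * s ^ (α - 1)) volume 0 b :=
    (intervalIntegral.intervalIntegrable_rpow' (by linarith)).const_mul _
  have hae : ∀ᵐ s ∂(volume.restrict (Set.uIoc (0:ℝ) b)),
      ‖(F s - C) (v s)‖ ≤ M ^ 2 * b / 2 * s ^ (α - 1) := by
    rw [uIoc_of_le hb.le]
    exact (ae_restrict_iff' measurableSet_Ioc).2 (Filter.Eventually.of_forall hnorm)
  have key := intervalIntegral.norm_integral_le_abs_of_norm_le hae hgint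
  have hint : ∫ s in (0:ℝ)..b, M ^ 2 * b / 2 * s ^ (α - 1)
      = M ^ 2 * b / 2 * (b ^ α / α) := by
    rw [intervalIntegral.integral_const_mul, integral_rpow (Or.inl (by linarith))]
    have h1 : α - 1 + 1 = α := by ring
    rw [h1, Real.zero_rpow (ne_of_gt hα0)]
    ring
  rw [hint] at key
  have habs : |M ^ 2 * b / 2 * (b ^ α / α)| = M ^ 2 * b / 2 * (b ^ α / α) := by
    apply abs_of_nonneg; positivity
  rw [habs] at key
  have hbb : b ^ (1 + α) = b * b ^ α := by
    rw [Real.rpow_add hb, Real.rpow_one]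
  calc ‖∫ s in (0:ℝ)..b, (F s - C) (v s)‖ ≤ M ^ 2 * b / 2 * (b ^ α / α) := key
    _ = M ^ 2 / (2 * α) * b ^ (1 + α) := by rw [hbb]; field_simp

set_option maxHeartbeats 1000000 in
lemma key_interval {H : Type*} [NormedAddCommGroup H] [NormedSpace ℝ H] [CompleteSpace H]
    {α M T : ℝ} (hα1 : α < 1) (hM : 0 < M) (hT : 0 < T)
    {F F' F'' : ℝ → H →L[ℝ] H} {v v' : ℝ → H}
    (hF : ∀ s ∈ Icc 0 T, HasDerivWithinAt F (F' s) (Icc 0 T) s)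
    (hF' : ∀ s ∈ Icc 0 T, HasDerivWithinAt F' (F'' s) (Icc 0 T) s)
    (hF'bd : ∀ s ∈ Icc 0 T, ‖F' s‖ ≤ M)
    (hF''bd : ∀ s ∈ Icc 0 T, ‖F'' s‖ ≤ M)
    (hv : ∀ s ∈ Ioc 0 T, HasDerivWithinAt v (v' s) (Ioc 0 T) s)
    (hv'c : ContinuousOn v' (Ioc 0 T))
    (hvbd : ∀ s ∈ Ioc 0 T, ‖v s‖ ≤ M * s ^ (α - 1))
    (hv'bd : ∀ s ∈ Ioc 0 T, ‖v' s‖ ≤ M * s ^ (α - 2))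
    {a b : ℝ} (ha : 0 < a) (hab : a < b) (hbT : b ≤ T) :
    ‖∫ s in a..b, (F s - (1/2 : ℝ) • (F a + F b)) (v s)‖
      ≤ 2 * M ^ 2 * (T + 1) * (b - a) ^ 3 * a ^ (α - 2) := by
  set C : H →L[ℝ] H := (1/2 : ℝ) • (F a + F b) with hC
  have hab' : a ≤ b := hab.le
  have hsubT : Icc a b ⊆ Icc 0 T := Icc_subset_Icc ha.le hbT
  have hsubI : Icc a b ⊆ Ioc 0 T := fun s hs => ⟨lt_of_lt_of_le ha hs.1, hs.2.trans hbT⟩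
  have haT : a ∈ Icc (0:ℝ) T := ⟨ha.le, hab'.trans hbT⟩
  -- continuity
  have hFc : ContinuousOn F (Icc a b) :=
    fun s hs => ((hF s (hsubT hs)).continuousWithinAt).mono hsubT
  have hF'c : ContinuousOn F' (Icc a b) :=
    fun s hs => ((hF' s (hsubT hs)).continuousWithinAt).mono hsubT
  have hvc : ContinuousOn v (Icc a b) :=
    fun s hs => ((hv s (hsubI hs)).continuousWithinAt).mono hsubI
  have hv'cab : ContinuousOn v' (Icc a b) := hv'c.mono hsubI
  -- interior derivatives
  have hFd : ∀ x ∈ Ioo a b, HasDerivAt F (F' x) x := fun x hx =>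
    (hF x (hsubT (Ioo_subset_Icc_self hx))).hasDerivAt
      (Icc_mem_nhds (ha.trans hx.1) (hx.2.trans_le hbT))
  have hIocn : ∀ x ∈ Ioo a b, Ioc (0:ℝ) T ∈ nhds x := fun x hx =>
    Filter.mem_of_superset (Ioo_mem_nhds (ha.trans hx.1) (hx.2.trans_le hbT))
      Ioo_subset_Ioc_self
  have hvd : ∀ x ∈ Ioo a b, HasDerivAt v (v' x) x := fun x hx =>
    (hv x (hsubI (Ioo_subset_Icc_self hx))).hasDerivAt (hIocn x hx)
  -- the primitive u
  set u : ℝ → H := fun s => ∫ r in a..s, v r with hu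
  have huc : ContinuousOn u (Icc a b) := by
    have h1 := continuousOn_primitive_interval
      (f := v) (μ := volume) (a := a) (b := b)
      (by rw [uIcc_of_le hab']; exact hvc.integrableOn_Icc)
    rwa [uIcc_of_le hab'] at h1
  have hud : ∀ x ∈ Ioo a b, HasDerivAt u (v x) x := fun x hx => by
    have hmeas : StronglyMeasurableAtFilter v (nhds x) volume :=
      ContinuousOn.stronglyMeasurableAtFilter isOpen_Ioo
        (hvc.mono Ioo_subset_Icc_self) x hx
    exact integral_hasDerivAt_right
      ((hvc.mono (Icc_subset_Icc le_rfl hx.2.le)).intervalIntegrable_of_Icc hx.1.le)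
      hmeas (hvd x hx).continuousAt
  set V : H := u b with hV
  -- FTC for g = (F - C)(u)
  have hg2c : ContinuousOn (fun s => (F s - C) (v s)) (Icc a b) :=
    (hFc.sub continuousOn_const).clm_apply hvc
  have hg1c : ContinuousOn (fun s => F' s (u s)) (Icc a b) := hF'c.clm_apply huc
  have hg1int : IntervalIntegrable (fun s => F' s (u s)) volume a b :=
    hg1c.intervalIntegrable_of_Icc hab'
  have hg2int : IntervalIntegrable (fun s => (F s - C) (v s)) volume a b :=
    hg2c.intervalIntegrable_of_Icc hab'
  have eqg : (∫ s in a..b, (F' s (u s) + (F s - C) (v s))) = (F b - C) V := by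
    have h := integral_eq_sub_of_hasDeriv_right_of_le hab'
      (f := fun s => (F s - C) (u s))
      (f' := fun s => F' s (u s) + (F s - C) (v s))
      ((hFc.sub continuousOn_const).clm_apply huc)
      (fun x hx => (((hFd x hx).sub_const C).clm_apply (hud x hx)).hasDerivWithinAt)
      (hg1int.add hg2int)
    have hua : u a = 0 := integral_same
    simp only [hua, map_zero, sub_zero] at h
    exact h
  have eqsplit : (∫ s in a..b, (F s - C) (v s)) = (F b - C) V - ∫ s in a..b, F' s (u s) := by
    rw [integral_add hg1int hg2int] at eqg
    exact eq_sub_of_add_eq' eqg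
  -- FTC for F
  have hF'int : IntervalIntegrable F' volume a b := hF'c.intervalIntegrable_of_Icc hab'
  have eqF : (∫ s in a..b, F' s) = F b - F a :=
    integral_eq_sub_of_hasDeriv_right_of_le hab' hFc
      (fun x hx => (hFd x hx).hasDerivWithinAt) hF'int
  -- rewrite (F b - C) V
  have hFbC : F b - C = (1/2 : ℝ) • (F b - F a) := by rw [hC]; module
  have eqap : (F b - C) V = ∫ s in a..b, (1/2 : ℝ) • (F' s V) := by
    rw [hFbC, ← eqF, ContinuousLinearMap.smul_apply,
      ContinuousLinearMap.intervalIntegral_apply hF'int V, ← intervalIntegral.integral_smul]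
  -- w
  set w : ℝ → H := fun s => (1/2 : ℝ) • V - u s with hw
  have hwc : ContinuousOn w (Icc a b) := continuousOn_const.sub huc
  have hwint : IntervalIntegrable w volume a b := hwc.intervalIntegrable_of_Icc hab'
  have eqI : (∫ s in a..b, (F s - C) (v s)) = ∫ s in a..b, F' s (w s) := by
    rw [eqsplit, eqap, ← integral_sub (by
        exact (((hF'c.clm_apply continuousOn_const).const_smul
          ((1:ℝ)/2)).intervalIntegrable_of_Icc hab')) hg1int]
    congr 1; funext s
    rw [hw]; simp [map_sub, _root_.map_smul]
  -- split off F' a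
  have hdiffc : ContinuousOn (fun s => (F' s - F' a) (w s)) (Icc a b) :=
    (hF'c.sub continuousOn_const).clm_apply hwc
  have hdiffint : IntervalIntegrable (fun s => (F' s - F' a) (w s)) volume a b :=
    hdiffc.intervalIntegrable_of_Icc hab'
  have eqsplit2 : (∫ s in a..b, F' s (w s))
      = (∫ s in a..b, (F' s - F' a) (w s)) + F' a (∫ s in a..b, w s) := by
    rw [← (F' a).intervalIntegral_comp_comm hwint, ← integral_add hdiffint
      (((continuousOn_const (c := F' a)).clm_apply hwc).intervalIntegrable_of_Icc hab')]
    congr 1; funext s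
    simp [ContinuousLinearMap.sub_apply]
  -- compute ∫ w
  have hvint : IntervalIntegrable v volume a b := hvc.intervalIntegrable_of_Icc hab'
  have hsbvint : IntervalIntegrable (fun s => (s - b) • v s) volume a b :=
    ((continuousOn_id.sub continuousOn_const).smul hvc).intervalIntegrable_of_Icc hab'
  have huint : IntervalIntegrable u volume a b := huc.intervalIntegrable_of_Icc hab'
  have equ : (∫ s in a..b, u s) = - ∫ s in a..b, (s - b) • v s := by
    have h := integral_eq_sub_of_hasDeriv_right_of_le hab'
      (f := fun s => (s - b) • u s)
      (f' := fun s => (s - b) • v s + u s)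
      ((continuousOn_id.sub continuousOn_const).smul huc)
      (fun x hx => by
        have := ((hasDerivAt_id x).sub_const b).smul (hud x hx)
        rw [one_smul] at this; exact this.hasDerivWithinAt)
      (hsbvint.add huint)
    rw [integral_add hsbvint huint] at h
    have hua : u a = 0 := integral_same
    simp only [hua, sub_self, zero_smul, smul_zero, sub_zero, zero_sub, neg_zero] at h
    exact eq_neg_of_add_eq_zero_right h
  -- J = ∫ (s - (a+b)/2) • v s
  have hmidint : IntervalIntegrable (fun s => (s - (a+b)/2) • v s) volume a b :=
    ((continuousOn_id.sub continuousOn_const).smul hvc).intervalIntegrable_of_Icc hab'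
  have hVi : V = ∫ s in a..b, v s := rfl
  have eqJ1 : (∫ s in a..b, w s) = ∫ s in a..b, (s - (a+b)/2) • v s := by
    have h1 : (∫ s in a..b, w s)
        = (∫ _s in a..b, (1/2 : ℝ) • V) - ∫ s in a..b, u s := by
      rw [hw]
      exact integral_sub intervalIntegrable_const huint
    rw [h1, equ, intervalIntegral.integral_const, sub_neg_eq_add]
    have h2 : (b - a) • ((1/2 : ℝ) • V) = ∫ s in a..b, ((b-a)/2) • v s := by
      rw [intervalIntegral.integral_smul, ← hVi, smul_smul]
      congr 1
      ring
    rw [h2, ← integral_add ((continuousOn_const.smul hvc).intervalIntegrable_of_Icc hab' :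
        IntervalIntegrable (fun s => ((b-a)/2) • v s) volume a b)
      hsbvint]
    congr 1; funext s
    rw [← add_smul]; congr 1; ring
  have hpc : ContinuousOn (fun s : ℝ => (s - a) * (s - b) / 2) (Icc a b) :=
    ((continuousOn_id.sub continuousOn_const).mul
      (continuousOn_id.sub continuousOn_const)).div_const 2
  have hpvint : IntervalIntegrable (fun s => ((s - a) * (s - b) / 2) • v' s) volume a b :=
    (hpc.smul hv'cab).intervalIntegrable_of_Icc hab'
  have eqJ2 : (∫ s in a..b, (s - (a+b)/2) • v s)
      = - ∫ s in a..b, ((s-a)*(s-b)/2) • v' s := by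
    have hpd : ∀ x : ℝ, HasDerivAt (fun s => (s - a) * (s - b) / 2) (x - (a+b)/2) x := by
      intro x
      have := (((hasDerivAt_id x).sub_const a).mul ((hasDerivAt_id x).sub_const b)).div_const 2
      simp only [id_eq] at this
      exact this.congr_deriv (by ring)
    have h := integral_eq_sub_of_hasDeriv_right_of_le hab'
      (f := fun s => ((s - a) * (s - b) / 2) • v s)
      (f' := fun s => ((s - a) * (s - b) / 2) • v' s + (s - (a+b)/2) • v s)
      (hpc.smul hvc)
      (fun x hx => ((hpd x).smul (hvd x hx)).hasDerivWithinAt)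
      (hpvint.add hmidint)
    rw [integral_add hpvint hmidint] at h
    simp only [sub_self, zero_mul, mul_zero, zero_div, zero_smul, sub_zero, zero_sub,
      neg_zero] at h
    exact eq_neg_of_add_eq_zero_right h
  have eqJ : (∫ s in a..b, w s) = - ∫ s in a..b, ((s-a)*(s-b)/2) • v' s := by
    rw [eqJ1, eqJ2]
  -- norm bounds
  have hrne : ∀ {x : ℝ}, x ∈ Ioc a b → x ∈ Ioc (0:ℝ) T := fun hx =>
    ⟨ha.trans hx.1, hx.2.trans hbT⟩
  have hvx : ∀ x ∈ Ioc a b, ‖v x‖ ≤ M * a ^ (α - 1) := by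
    intro x hx
    refine (hvbd x (hrne hx)).trans ?_
    exact mul_le_mul_of_nonneg_left
      (Real.rpow_le_rpow_of_nonpos ha hx.1.le (by linarith)) hM.le
  have hubd : ∀ s ∈ Icc a b, ‖u s‖ ≤ M * a ^ (α - 1) * (b - a) := by
    intro s hs
    have h1 : ‖u s‖ ≤ (M * a ^ (α - 1)) * |s - a| := by
      apply intervalIntegral.norm_integral_le_of_norm_le_const
      intro x hx
      rw [uIoc_of_le hs.1] at hx
      exact hvx x ⟨hx.1, hx.2.trans hs.2⟩
    have h2 : |s - a| ≤ b - a := by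
      rw [abs_of_nonneg (by linarith [hs.1])]; linarith [hs.2]
    calc ‖u s‖ ≤ (M * a ^ (α - 1)) * |s - a| := h1
      _ ≤ M * a ^ (α - 1) * (b - a) := by
          apply mul_le_mul_of_nonneg_left h2; positivity
  have hVbd : ‖V‖ ≤ M * a ^ (α - 1) * (b - a) := hubd b ⟨hab', le_rfl⟩
  have hwbd : ∀ s ∈ Icc a b, ‖w s‖ ≤ 2 * (M * a ^ (α - 1) * (b - a)) := by
    intro s hs
    have hsm := norm_smul_le (1/2 : ℝ) V
    have h12 : ‖(1/2 : ℝ)‖ = 1/2 := by rw [Real.norm_eq_abs]; norm_num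
    rw [h12] at hsm
    have hns : ‖w s‖ ≤ ‖(1/2:ℝ) • V‖ + ‖u s‖ := by rw [hw]; exact norm_sub_le _ _
    have := hubd s hs
    linarith only [hns, hsm, hVbd, this, norm_nonneg V]
  have hF'sub : ∀ s ∈ Icc a b, ‖F' s - F' a‖ ≤ M * (b - a) := by
    intro s hs
    have h := Convex.norm_image_sub_le_of_norm_hasDerivWithin_le hF' hF''bd
      (convex_Icc 0 T) haT (hsubT hs)
    have habs : ‖s - a‖ ≤ b - a := by
      rw [Real.norm_eq_abs, abs_of_nonneg (by linarith [hs.1])]; linarith [hs.2]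
    exact h.trans (mul_le_mul_of_nonneg_left habs hM.le)
  have bound1 : ‖∫ s in a..b, (F' s - F' a) (w s)‖
      ≤ M * (b - a) * (2 * (M * a ^ (α - 1) * (b - a))) * (b - a) := by
    have hpoint : ∀ x ∈ Set.uIoc a b, ‖(F' x - F' a) (w x)‖
        ≤ M * (b - a) * (2 * (M * a ^ (α - 1) * (b - a))) := by
      intro x hx
      rw [uIoc_of_le hab'] at hx
      have hxI : x ∈ Icc a b := Ioc_subset_Icc_self hx
      calc ‖(F' x - F' a) (w x)‖ ≤ ‖F' x - F' a‖ * ‖w x‖ := (F' x - F' a).le_opNorm _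
        _ ≤ M * (b - a) * (2 * (M * a ^ (α - 1) * (b - a))) := by
            apply mul_le_mul (hF'sub x hxI) (hwbd x hxI) (norm_nonneg _)
            exact mul_nonneg hM.le (by linarith)
    have h := intervalIntegral.norm_integral_le_of_norm_le_const hpoint
    rwa [abs_of_nonneg (by linarith)] at h
  have hv'x : ∀ x ∈ Ioc a b, ‖v' x‖ ≤ M * a ^ (α - 2) := by
    intro x hx
    refine (hv'bd x (hrne hx)).trans ?_
    exact mul_le_mul_of_nonneg_left
      (Real.rpow_le_rpow_of_nonpos ha hx.1.le (by linarith)) hM.le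
  have bound2 : ‖∫ s in a..b, ((s-a)*(s-b)/2) • v' s‖
      ≤ (b - a)^2/8 * (M * a ^ (α - 2)) * (b - a) := by
    have hpoint : ∀ x ∈ Set.uIoc a b, ‖((x-a)*(x-b)/2) • v' x‖
        ≤ (b - a)^2/8 * (M * a ^ (α - 2)) := by
      intro x hx
      rw [uIoc_of_le hab'] at hx
      have hp : |(x-a)*(x-b)/2| ≤ (b - a)^2/8 := by
        have h0 : (x-a)*(x-b) ≤ 0 :=
          mul_nonpos_iff.mpr (Or.inl ⟨by linarith [hx.1], by linarith [hx.2]⟩)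
        rw [abs_of_nonpos (by linarith only [h0])]
        nlinarith [hx.1.le, hx.2, sq_nonneg (a + b - 2*x)]
      calc ‖((x-a)*(x-b)/2) • v' x‖ = |(x-a)*(x-b)/2| * ‖v' x‖ := by
            rw [norm_smul, Real.norm_eq_abs]
        _ ≤ (b - a)^2/8 * (M * a ^ (α - 2)) := by
            apply mul_le_mul hp (hv'x x hx) (norm_nonneg _)
            positivity
    have h := intervalIntegral.norm_integral_le_of_norm_le_const hpoint
    rwa [abs_of_nonneg (by linarith)] at h
  have hF'a : ‖F' a‖ ≤ M := hF'bd a haT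
  have final : ‖∫ s in a..b, (F s - C) (v s)‖
      ≤ M * (b - a) * (2 * (M * a ^ (α - 1) * (b - a))) * (b - a)
        + M * ((b - a)^2/8 * (M * a ^ (α - 2)) * (b - a)) := by
    rw [eqI, eqsplit2]
    refine (norm_add_le _ _).trans ?_
    have hterm2 : ‖F' a (∫ s in a..b, w s)‖
        ≤ M * ((b - a)^2/8 * (M * a ^ (α - 2)) * (b - a)) := by
      calc ‖F' a (∫ s in a..b, w s)‖ ≤ ‖F' a‖ * ‖∫ s in a..b, w s‖ := (F' a).le_opNorm _
        _ ≤ M * ((b - a)^2/8 * (M * a ^ (α - 2)) * (b - a)) := by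
            have hJn : ‖∫ s in a..b, w s‖ ≤ (b - a)^2/8 * (M * a ^ (α - 2)) * (b - a) := by
              rw [eqJ, norm_neg]; exact bound2
            exact mul_le_mul hF'a hJn (norm_nonneg _) hM.le
    linarith [bound1, hterm2]
  have hX2 : (0:ℝ) < a ^ (α - 2) := Real.rpow_pos_of_pos ha _
  have hX12 : a ^ (α - 1) = a ^ (α - 2) * a := by
    rw [← Real.rpow_add_one ha.ne' (α - 2)]; ring_nf
  have haT' : a ≤ T := hab'.trans hbT
  refine final.trans ?_
  rw [hX12]
  have hba : (0:ℝ) ≤ b - a := by linarith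
  have hfac : (0:ℝ) ≤ M^2 * a ^ (α-2) * (b-a)^3 :=
    mul_nonneg (mul_nonneg (by positivity) hX2.le) (pow_nonneg hba 3)
  have hkey : M^2 * a ^ (α-2) * (b-a)^3 * a ≤ M^2 * a ^ (α-2) * (b-a)^3 * T :=
    mul_le_mul_of_nonneg_left haT' hfac
  calc M * (b - a) * (2 * (M * (a ^ (α - 2) * a) * (b - a))) * (b - a)
        + M * ((b - a) ^ 2 / 8 * (M * a ^ (α - 2)) * (b - a))
      = 2 * (M^2 * a ^ (α-2) * (b-a)^3 * a) + (1/8) * (M^2 * a ^ (α-2) * (b-a)^3) := by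
        ring
    _ ≤ 2 * (M^2 * a ^ (α-2) * (b-a)^3 * T) + 2 * (M^2 * a ^ (α-2) * (b-a)^3) := by
        linarith only [hkey, hfac]
    _ = 2 * M ^ 2 * (T + 1) * (b - a) ^ 3 * a ^ (α - 2) := by ring

lemma sum_shift_aux (f : ℕ → ℝ) (n : ℕ) :
    ∑ j ∈ Finset.Icc 2 n, f j = ∑ k ∈ Finset.Ico 1 n, f (k+1) := by
  rw [← Finset.Ico_add_one_right_eq_Icc, Finset.sum_Ico_eq_sum_range, Finset.sum_Ico_eq_sum_range]
  have h : n + 1 - 2 = n - 1 := by omega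
  rw [h]
  exact Finset.sum_congr rfl fun i _ => by congr 1; omega


set_option maxHeartbeats 1000000 in
/-- Lemma 5.2, quadrature error for the driving force on a graded mesh.
On the graded mesh `tᵢ = (iτ)^γ`, `τ = T^(1/γ)/N`, for `F : [0,T] → L(H)` twice continuously
differentiable with `‖F'‖, ‖F''‖ ≤ M`, `F̄` the piecewise-constant midpoint average of `F`,
and `v : (0,T] → H` continuously differentiable with `‖v(s)‖ ≤ M s^{α-1}`,
`‖v'(s)‖ ≤ M s^{α-2}`, there is `C = C(α,γ,M,T)` s.t. for `1 ≤ n ≤ N`: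
`∑_{j=1}^n (1/τ_j) ‖∫_{t_{j-1}}^{t_j} (F(s) - F̄(s))(v(s)) ds‖²
   ≤ C τ^{(1+2α)γ} + C τ⁴ ∫_{t₁}^{t_n} s^{2α-4/γ} ds`. -/
theorem stmt_15 {H : Type*} [NormedAddCommGroup H] [InnerProductSpace ℝ H] [CompleteSpace H]
    (α γ M T : ℝ) (hα0 : 0 < α) (hα1 : α < 1) (hγ : 1 ≤ γ) (hM : 0 < M) (hT : 0 < T) :
    ∃ C : ℝ, 0 < C ∧ ∀ N : ℕ, 1 ≤ N →
      ∀ t : ℕ → ℝ, (∀ i, t i = ((i : ℝ) * (T ^ (1/γ) / N)) ^ γ) →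
      ∀ F F' F'' Fbar : ℝ → H →L[ℝ] H, ∀ v v' : ℝ → H,
      (∀ s ∈ Icc 0 T, HasDerivWithinAt F (F' s) (Icc 0 T) s) →
      (∀ s ∈ Icc 0 T, HasDerivWithinAt F' (F'' s) (Icc 0 T) s) →
      ContinuousOn F'' (Icc 0 T) →
      (∀ s ∈ Icc 0 T, ‖F' s‖ ≤ M) →
      (∀ s ∈ Icc 0 T, ‖F'' s‖ ≤ M) →
      (∀ j ∈ Finset.Icc 1 N, ∀ s ∈ Ioc (t (j-1)) (t j),
        Fbar s = (1/2 : ℝ) • (F (t (j-1)) + F (t j))) →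
      (∀ s ∈ Ioc 0 T, HasDerivWithinAt v (v' s) (Ioc 0 T) s) →
      ContinuousOn v' (Ioc 0 T) →
      (∀ s ∈ Ioc 0 T, ‖v s‖ ≤ M * s ^ (α - 1)) →
      (∀ s ∈ Ioc 0 T, ‖v' s‖ ≤ M * s ^ (α - 2)) →
      ∀ n ∈ Finset.Icc 1 N,
        ∑ j ∈ Finset.Icc 1 n, (1 / (t j - t (j-1))) *
            ‖∫ s in (t (j-1))..(t j), (F s - Fbar s) (v s)‖ ^ 2
          ≤ C * (T ^ (1/γ) / N) ^ ((1 + 2*α) * γ)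
            + C * (T ^ (1/γ) / N) ^ 4 * ∫ s in (t 1)..(t n), s ^ (2*α - 4/γ) := by
  have hγ0 : 0 < γ := lt_of_lt_of_le one_pos hγ
  set K : ℝ := 2 * M ^ 2 * (T + 1) with hK
  set D : ℝ := γ * 2 ^ (γ - 1) with hD
  set β : ℝ := 2 * α - 4 / γ with hβ
  set c₀ : ℝ := min 1 ((2:ℝ) ^ (γ * β)) with hc₀
  have hc₀pos : 0 < c₀ := lt_min one_pos (Real.rpow_pos_of_pos two_pos _)
  have hKpos : 0 < K := by positivity
  have hDpos : 0 < D := mul_pos hγ0 (Real.rpow_pos_of_pos two_pos _)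
  set C₁ : ℝ := M ^ 4 / (4 * α ^ 2) with hC₁
  set C₂ : ℝ := K ^ 2 * D ^ 4 / c₀ with hC₂
  have hC₁pos : 0 < C₁ := div_pos (pow_pos hM 4) (by have := pow_pos hα0 2; linarith only [this])
  have hC₂pos : 0 < C₂ := div_pos (mul_pos (pow_pos hKpos 2) (pow_pos hDpos 4)) hc₀pos
  set Cc : ℝ := max C₁ C₂ + 1 with hCc
  have hC1le : C₁ ≤ Cc := by
    have := le_max_left C₁ C₂; rw [hCc]; linarith
  have hC2le : C₂ ≤ Cc := by
    have := le_max_right C₁ C₂; rw [hCc]; linarith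
  refine ⟨Cc, by rw [hCc]; have := le_max_left C₁ C₂; linarith, ?_⟩
  intro N hN t ht F F' F'' Fbar v v' hF hF' hF''c hF'bd hF''bd hFbar hv hv'c hvbd hv'bd n hn
  obtain ⟨hn1, hnN⟩ := Finset.mem_Icc.mp hn
  set τ : ℝ := T ^ (1/γ) / N with hτdef
  have hNpos : (0:ℝ) < N := by exact_mod_cast Nat.pos_of_ne_zero (by omega)
  have hτ : 0 < τ := div_pos (Real.rpow_pos_of_pos hT _) hNpos
  have htmono : ∀ {i j : ℕ}, i < j → t i < t j := by
    intro i j hij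
    rw [ht i, ht j]
    apply Real.rpow_lt_rpow (by positivity) _ hγ0
    have hcast : (i:ℝ) < j := by exact_mod_cast hij
    exact mul_lt_mul_of_pos_right hcast hτ
  have htle : ∀ {i j : ℕ}, i ≤ j → t i ≤ t j := by
    intro i j hij
    rcases Nat.lt_or_ge i j with h | h
    · exact (htmono h).le
    · have : i = j := by omega
      rw [this]
  have ht0 : t 0 = 0 := by
    rw [ht 0]
    norm_num
    exact Real.zero_rpow (ne_of_gt hγ0)
  have htpos : ∀ i : ℕ, 1 ≤ i → 0 < t i := by
    intro i hi
    have := htmono (show 0 < i by omega)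
    rw [ht0] at this; exact this
  have htN : t N = T := by
    rw [ht N, hτdef, mul_comm, div_mul_cancel₀ _ (ne_of_gt hNpos),
      ← Real.rpow_mul hT.le, one_div, inv_mul_cancel₀ (ne_of_gt hγ0), Real.rpow_one]
  have htT : ∀ i : ℕ, i ≤ N → t i ≤ T := fun i hi => htN ▸ htle hi
  have ht1 : t 1 = τ ^ γ := by rw [ht 1]; norm_num
  -- rewrite the integrals using the explicit form of Fbar
  have hIrw : ∀ j ∈ Finset.Icc 1 n,
      (∫ s in (t (j-1))..(t j), (F s - Fbar s) (v s))
        = ∫ s in (t (j-1))..(t j), (F s - (1/2:ℝ) • (F (t (j-1)) + F (t j))) (v s) := by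
    intro j hj
    obtain ⟨hj1, hjn⟩ := Finset.mem_Icc.mp hj
    have hjN : j ∈ Finset.Icc 1 N := Finset.mem_Icc.mpr ⟨hj1, hjn.trans hnN⟩
    have hab : t (j-1) < t j := htmono (by omega)
    rw [intervalIntegral.integral_of_le hab.le, intervalIntegral.integral_of_le hab.le]
    apply setIntegral_congr_fun measurableSet_Ioc
    intro s hs
    simp only [hFbar j hjN s hs]
  -- first term
  have hterm1 : (1 / (t 1 - t 0)) *
      ‖∫ s in (t 0)..(t 1), (F s - (1/2:ℝ) • (F (t 0) + F (t 1))) (v s)‖ ^ 2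
      ≤ C₁ * τ ^ ((1 + 2*α) * γ) := by
    have ht1pos : 0 < t 1 := htpos 1 le_rfl
    have ht1T : t 1 ≤ T := htT 1 (by omega)
    have hb := first_interval hα0 hα1 hM hT hF hF'bd hvbd ht1pos ht1T
    rw [ht0] at *
    have hsq : ‖∫ s in (0:ℝ)..(t 1), (F s - (1/2:ℝ) • (F 0 + F (t 1))) (v s)‖ ^ 2
        ≤ (M ^ 2 / (2 * α) * (t 1) ^ (1 + α)) ^ 2 :=
      pow_le_pow_left₀ (norm_nonneg _) hb 2
    have step := mul_le_mul_of_nonneg_left hsq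
      (by rw [sub_zero]; exact (one_div_pos.mpr ht1pos).le : (0:ℝ) ≤ 1 / (t 1 - 0))
    refine step.trans ?_
    have e1 : ((t 1) ^ (1+α))^2 = (t 1)^(1+2*α) * (t 1) := by
      rw [← Real.rpow_natCast ((t 1) ^ (1+α)) 2, ← Real.rpow_mul ht1pos.le]
      rw [show ((1+α)*((2:ℕ):ℝ)) = (1+2*α) + 1 by push_cast; ring]
      rw [Real.rpow_add ht1pos, Real.rpow_one]
    have e3 : (t 1)^(1+2*α) = τ^((1+2*α)*γ) := by
      rw [ht1, ← Real.rpow_mul hτ.le]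
      congr 1; ring
    apply le_of_eq
    rw [sub_zero, mul_pow, e1, e3, hC₁]
    field_simp [ht1pos.ne', hα0.ne']
    ring
  -- terms j >= 2
  have hterm2 : ∀ j ∈ Finset.Icc 2 n,
      (1 / (t j - t (j-1))) *
        ‖∫ s in (t (j-1))..(t j), (F s - (1/2:ℝ) • (F (t (j-1)) + F (t j))) (v s)‖ ^ 2
        ≤ C₂ * τ ^ 4 * ∫ s in (t (j-1))..(t j), s ^ β := by
    intro j hj
    obtain ⟨hj2, hjn⟩ := Finset.mem_Icc.mp hj
    have hja : 1 ≤ j - 1 := by omega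
    have hapos : 0 < t (j-1) := htpos _ hja
    have hab : t (j-1) < t j := htmono (by omega)
    have hbT : t j ≤ T := htT j (by omega)
    have hkey := key_interval hα1 hM hT hF hF' hF'bd hF''bd hv hv'c hvbd hv'bd hapos hab hbT
    set a := t (j-1) with hadef
    set b := t j with hbdef
    set y : ℝ := ((j:ℝ) - 1) * τ with hydef
    have h2j : (2:ℝ) ≤ (j:ℝ) := by exact_mod_cast hj2
    have hy : 0 < y := mul_pos (by linarith only [h2j]) hτ
    have hcast : ((j-1 : ℕ) : ℝ) = (j:ℝ) - 1 := by
      have h1j : (1:ℕ) ≤ j := by omega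
      push_cast [h1j]
      ring
    have ha_eq : a = y ^ γ := by rw [hadef, ht (j-1), hydef, hcast]
    have hb_eq : b = ((j:ℝ) * τ) ^ γ := ht j
    have hxy : y ≤ (j:ℝ) * τ := mul_le_mul_of_nonneg_right (by linarith only [h2j]) hτ.le
    have hdiff : (j:ℝ) * τ - y = τ := by rw [hydef]; ring
    have hx2y : (j:ℝ) * τ ≤ 2 * y := by
      calc (j:ℝ) * τ ≤ (2*((j:ℝ)-1)) * τ :=
            mul_le_mul_of_nonneg_right (by linarith only [h2j]) hτ.le
        _ = 2 * y := by rw [hydef]; ring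
    have hup : b - a ≤ D * y ^ (γ-1) * τ := by
      have h1 := rpow_mvt_upper hγ hy hxy
      rw [hdiff] at h1
      have h2 : ((j:ℝ)*τ) ^ (γ-1) ≤ 2 ^ (γ-1) * y ^ (γ-1) := by
        have h3 := Real.rpow_le_rpow (by positivity) hx2y (by linarith : (0:ℝ) ≤ γ - 1)
        rwa [Real.mul_rpow (by norm_num) hy.le] at h3
      rw [ha_eq, hb_eq]
      calc ((j:ℝ)*τ)^γ - y^γ ≤ γ * ((j:ℝ)*τ)^(γ-1) * τ := h1
        _ ≤ γ * (2^(γ-1) * y^(γ-1)) * τ := by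
            apply mul_le_mul_of_nonneg_right (mul_le_mul_of_nonneg_left h2 hγ0.le) hτ.le
        _ = D * y^(γ-1) * τ := by rw [hD]; ring
    have hbpos : 0 < b := hapos.trans hab
    have hb2a : b ≤ 2 ^ γ * a := by
      rw [ha_eq, hb_eq]
      calc ((j:ℝ)*τ)^γ ≤ (2*y)^γ := Real.rpow_le_rpow (by positivity) hx2y hγ0.le
        _ = 2^γ * y^γ := Real.mul_rpow (by norm_num) hy.le
    have hslb : ∀ s ∈ Icc a b, c₀ * a ^ β ≤ s ^ β := by
      intro s hs
      have hspos : 0 < s := lt_of_lt_of_le hapos hs.1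
      have haβ : (0:ℝ) < a ^ β := Real.rpow_pos_of_pos hapos β
      rcases le_or_gt 0 β with hβ0 | hβ0
      · have h1 : a ^ β ≤ s ^ β := Real.rpow_le_rpow hapos.le hs.1 hβ0
        have h2 : c₀ ≤ 1 := min_le_left _ _
        have h5 := mul_le_mul_of_nonneg_right h2 haβ.le
        rw [one_mul] at h5
        linarith only [h1, h5]
      · have h1 : b ^ β ≤ s ^ β := Real.rpow_le_rpow_of_nonpos hspos hs.2 hβ0.le
        have h2 : (2^γ * a) ^ β ≤ b ^ β :=
          Real.rpow_le_rpow_of_nonpos hbpos hb2a hβ0.le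
        have h3 : ((2:ℝ)^γ * a) ^ β = 2 ^ (γ*β) * a ^ β := by
          rw [Real.mul_rpow (by positivity) hapos.le,
            ← Real.rpow_mul (by norm_num : (0:ℝ) ≤ 2)]
        have h4 : c₀ ≤ 2 ^ (γ*β) := min_le_right _ _
        have h5 := mul_le_mul_of_nonneg_right h4 haβ.le
        rw [h3] at h2
        linarith only [h1, h2, h5]
    have hsint : IntervalIntegrable (fun s : ℝ => s ^ β) volume a b := by
      apply ContinuousOn.intervalIntegrable_of_Icc hab.le
      intro s hs
      exact (Real.continuousAt_rpow_const s β
        (Or.inl (ne_of_gt (lt_of_lt_of_le hapos hs.1)))).continuousWithinAt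
    have hIlb : c₀ * a ^ β * (b - a) ≤ ∫ s in a..b, s ^ β := by
      have h1 : (∫ _s in a..b, c₀ * a ^ β) ≤ ∫ s in a..b, s ^ β :=
        intervalIntegral.integral_mono_on hab.le intervalIntegrable_const hsint hslb
      rwa [intervalIntegral.integral_const, smul_eq_mul, mul_comm (b-a)] at h1
    have hbapos : 0 < b - a := by linarith
    have hsq : ‖∫ s in a..b, (F s - (1/2:ℝ) • (F a + F b)) (v s)‖ ^ 2
        ≤ (K * (b-a)^3 * a^(α-2))^2 := by
      apply pow_le_pow_left₀ (norm_nonneg _) _ 2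
      rw [hK]; exact hkey
    have step1 := mul_le_mul_of_nonneg_left hsq ((one_div_pos.mpr hbapos).le)
    refine step1.trans ?_
    have e2 : (a^(α-2))^2 = a^(2*α-4) := by
      rw [← Real.rpow_natCast (a^(α-2)) 2, ← Real.rpow_mul hapos.le]
      congr 1; push_cast; ring
    have e3 : (y^(γ-1))^4 = y^(4*γ-4) := by
      rw [← Real.rpow_natCast (y^(γ-1)) 4, ← Real.rpow_mul hy.le]
      congr 1; push_cast; ring
    have eya : y ^ (4*γ-4) * a ^ (2*α-4) = a ^ β := by
      rw [ha_eq, ← Real.rpow_mul hy.le, ← Real.rpow_mul hy.le, ← Real.rpow_add hy]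
      congr 1
      rw [hβ]
      field_simp
      ring
    have step2 : (1/(b-a)) * (K*(b-a)^3*a^(α-2))^2
        = (b-a)^4 * (K^2*((b-a)*a^(2*α-4))) := by
      rw [← e2]; field_simp
    have hPnn : (0:ℝ) ≤ K^2*((b-a)*a^(2*α-4)) :=
      mul_nonneg (sq_nonneg K) (mul_nonneg hbapos.le (Real.rpow_nonneg hapos.le _))
    have h4 := pow_le_pow_left₀ hbapos.le hup 4
    have step3 : (b-a)^4 * (K^2*((b-a)*a^(2*α-4)))
        ≤ (D*y^(γ-1)*τ)^4 * (K^2*((b-a)*a^(2*α-4))) :=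
      mul_le_mul_of_nonneg_right h4 hPnn
    have step4 : (D*y^(γ-1)*τ)^4 * (K^2*((b-a)*a^(2*α-4)))
        = (C₂ * τ^4) * (c₀ * a^β * (b-a)) := by
      rw [mul_pow, mul_pow, e3, hC₂, ← eya]
      field_simp
    have step5 : (C₂ * τ^4) * (c₀ * a^β * (b-a)) ≤ (C₂ * τ^4) * ∫ s in a..b, s^β :=
      mul_le_mul_of_nonneg_left hIlb (by positivity)
    calc (1/(b-a)) * (K*(b-a)^3*a^(α-2))^2
        = (b-a)^4 * (K^2*((b-a)*a^(2*α-4))) := step2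
      _ ≤ (D*y^(γ-1)*τ)^4 * (K^2*((b-a)*a^(2*α-4))) := step3
      _ = (C₂ * τ^4) * (c₀ * a^β * (b-a)) := step4
      _ ≤ (C₂ * τ^4) * ∫ s in a..b, s^β := step5
      _ = C₂ * τ^4 * ∫ s in a..b, s^β := by ring
  -- sum manipulation
  have hsum : ∑ j ∈ Finset.Icc 1 n, (1 / (t j - t (j-1))) *
        ‖∫ s in (t (j-1))..(t j), (F s - Fbar s) (v s)‖ ^ 2
      = ∑ j ∈ Finset.Icc 1 n, (1 / (t j - t (j-1))) *
        ‖∫ s in (t (j-1))..(t j), (F s - (1/2:ℝ) • (F (t (j-1)) + F (t j))) (v s)‖ ^ 2 := by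
    apply Finset.sum_congr rfl
    intro j hj
    rw [hIrw j hj]
  rw [hsum]
  have h1mem : (1:ℕ) ∈ Finset.Icc 1 n := Finset.mem_Icc.mpr ⟨le_rfl, hn1⟩
  rw [← Finset.sum_erase_add _ _ h1mem]
  have herase : (Finset.Icc 1 n).erase 1 = Finset.Icc 2 n := by
    rw [Finset.Icc_erase_left]
    exact (Finset.Icc_add_one_left_eq_Ioc 1 n).symm
  rw [herase]
  -- adjacent intervals
  have hadj : ∑ j ∈ Finset.Icc 2 n, (∫ s in (t (j-1))..(t j), s ^ β)
      = ∫ s in (t 1)..(t n), s ^ β := by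
    have hint : ∀ k ∈ Set.Ico 1 n,
        IntervalIntegrable (fun s:ℝ => s^β) volume (t k) (t (k+1)) := by
      intro k hk
      apply ContinuousOn.intervalIntegrable_of_Icc (htle (by omega))
      intro s hs
      have : 0 < s := lt_of_lt_of_le (htpos k hk.1) hs.1
      exact (Real.continuousAt_rpow_const s β (Or.inl (ne_of_gt this))).continuousWithinAt
    have hAI := intervalIntegral.sum_integral_adjacent_intervals_Ico
      (a := t) (μ := volume) (f := fun s => s ^ β) hn1 hint
    rw [sum_shift_aux (fun j => ∫ s in (t (j-1))..(t j), s ^ β) n]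
    simp only [Nat.add_sub_cancel]
    exact hAI
  have hS2 : ∑ j ∈ Finset.Icc 2 n, (1 / (t j - t (j-1))) *
        ‖∫ s in (t (j-1))..(t j), (F s - (1/2:ℝ) • (F (t (j-1)) + F (t j))) (v s)‖ ^ 2
      ≤ C₂ * τ ^ 4 * ∫ s in (t 1)..(t n), s ^ β := by
    calc ∑ j ∈ Finset.Icc 2 n, (1 / (t j - t (j-1))) *
          ‖∫ s in (t (j-1))..(t j), (F s - (1/2:ℝ) • (F (t (j-1)) + F (t j))) (v s)‖ ^ 2
        ≤ ∑ j ∈ Finset.Icc 2 n, C₂ * τ^4 * ∫ s in (t (j-1))..(t j), s ^ β :=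
          Finset.sum_le_sum hterm2
      _ = C₂ * τ^4 * ∑ j ∈ Finset.Icc 2 n, ∫ s in (t (j-1))..(t j), s ^ β := by
          rw [Finset.mul_sum]
      _ = C₂ * τ^4 * ∫ s in (t 1)..(t n), s ^ β := by rw [hadj]
  -- final assembly
  have hintnn : 0 ≤ ∫ s in (t 1)..(t n), s ^ β := by
    apply intervalIntegral.integral_nonneg (htle hn1)
    intro s hs
    have : 0 < s := lt_of_lt_of_le (htpos 1 le_rfl) hs.1
    exact (Real.rpow_pos_of_pos this β).le
  have hτγnn : (0:ℝ) ≤ τ ^ ((1 + 2*α) * γ) := (Real.rpow_pos_of_pos hτ _).le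
  have hτ4nn : (0:ℝ) ≤ τ ^ 4 := by positivity
  have hfin1 : C₁ * τ ^ ((1 + 2*α) * γ) ≤ Cc * τ ^ ((1 + 2*α) * γ) :=
    mul_le_mul_of_nonneg_right hC1le hτγnn
  have hfin2 : C₂ * τ ^ 4 * (∫ s in (t 1)..(t n), s ^ β)
      ≤ Cc * τ ^ 4 * ∫ s in (t 1)..(t n), s ^ β := by
    apply mul_le_mul_of_nonneg_right _ hintnn
    exact mul_le_mul_of_nonneg_right hC2le hτ4nn
  simp only [Nat.sub_self] at *
  have h1 := hS2.trans hfin2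
  have h2 := hterm1.trans hfin1
  exact le_trans (add_le_add h1 h2) (le_of_eq (add_comm _ _))
end
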